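/- arXiv:2211.00499 — 6 statements merged into one kernel-verified Lean document; each statement's English description precedes it below -/
import Mathlib

section
/- For any positive integer N and real L ≥ 0, the integral of e^{-|x|} · (x_1·x_2·...·x_N) over the region {x ∈ (0,∞)^N : |x| ≥ L} is at most e^{-L}·(L+1)^{2N-1}, where |x| = x_1 + ... + x_N. -/
open MeasureTheory Real Finset

lemma ti_hasDeriv (t : ℝ) : HasDerivAt (fun t : ℝ => -((t+1) * Real.exp (-t))) (t * Real.exp (-t)) t := by
  have h1 : HasDerivAt (fun t : ℝ => Real.exp (-t)) (-Real.exp (-t)) t := by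
    simpa [Function.comp_def] using (Real.hasDerivAt_exp (-t)).comp t (hasDerivAt_neg t)
  have h2 : HasDerivAt (fun t : ℝ => (t+1) * Real.exp (-t))
      (1 * Real.exp (-t) + (t+1) * (-Real.exp (-t))) t :=
    ((hasDerivAt_id t).add_const 1).mul h1
  have := h2.neg
  exact this.congr_deriv (by ring)

lemma ti_tendsto : Filter.Tendsto (fun t : ℝ => -((t+1) * Real.exp (-t))) Filter.atTop (nhds 0) := by
  have h := Real.tendsto_pow_mul_exp_neg_atTop_nhds_zero 1
  have h0 := Real.tendsto_pow_mul_exp_neg_atTop_nhds_zero 0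
  have : Filter.Tendsto (fun t : ℝ => (t+1) * Real.exp (-t)) Filter.atTop (nhds 0) := by
    have := h.add h0
    simpa [add_mul, pow_one] using this
  simpa using this.neg

lemma ti_integrableOn (a : ℝ) (ha : 0 ≤ a) :
    IntegrableOn (fun t : ℝ => t * Real.exp (-t)) (Set.Ioi a) := by
  refine integrableOn_Ioi_deriv_of_nonneg' (g := fun t : ℝ => -((t+1) * Real.exp (-t)))
    (fun x _ => ti_hasDeriv x) (fun x hx => ?_) ti_tendsto
  have : (0:ℝ) < x := lt_of_le_of_lt ha hx
  positivity

lemma ti_integral (a : ℝ) (ha : 0 ≤ a) :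
    ∫ t in Set.Ioi a, t * Real.exp (-t) = Real.exp (-a) * (a + 1) := by
  rw [integral_Ioi_of_hasDerivAt_of_tendsto' (fun x _ => ti_hasDeriv x)
    (ti_integrableOn a ha) ti_tendsto]
  ring

noncomputable def tiF (n : ℕ) (L : ℝ) : ℝ :=
  ∫ x in {x : Fin n → ℝ | (∀ i, 0 < x i) ∧ L ≤ ∑ i, x i},
    Real.exp (-(∑ i, x i)) * ∏ i, x i

lemma ti_mS (n : ℕ) (L : ℝ) :
    MeasurableSet {x : Fin n → ℝ | (∀ i, 0 < x i) ∧ L ≤ ∑ i, x i} := by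
  have h1 : MeasurableSet {x : Fin n → ℝ | ∀ i, 0 < x i} := by
    rw [Set.setOf_forall]
    exact MeasurableSet.iInter fun i =>
      measurableSet_lt measurable_const (measurable_pi_apply i)
  have h2 : MeasurableSet {x : Fin n → ℝ | L ≤ ∑ i, x i} :=
    measurableSet_le measurable_const (Finset.measurable_sum _ fun i _ => measurable_pi_apply i)
  exact h1.inter h2

noncomputable def tiphi : ℝ → ℝ := Set.indicator (Set.Ioi 0) (fun t => t * Real.exp (-t))

lemma tiphi_nonneg (t : ℝ) : 0 ≤ tiphi t := by
  unfold tiphi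
  rcases le_or_gt t 0 with h | h
  · rw [Set.indicator_of_notMem (by simpa using h)]
  · rw [Set.indicator_of_mem (by simpa using h)]
    positivity

lemma tiphi_integrable : Integrable tiphi := by
  rw [tiphi, integrable_indicator_iff measurableSet_Ioi]
  exact ti_integrableOn 0 le_rfl

lemma tiphi_integral : ∫ t, tiphi t = 1 := by
  rw [tiphi, integral_indicator measurableSet_Ioi, ti_integral 0 le_rfl]
  simp

lemma ti_ind_le (n : ℕ) (L : ℝ) (x : Fin n → ℝ) :
    Set.indicator {x : Fin n → ℝ | (∀ i, 0 < x i) ∧ L ≤ ∑ i, x i}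
      (fun x => Real.exp (-(∑ i, x i)) * ∏ i, x i) x ≤ ∏ i, tiphi (x i) := by
  rcases Classical.em (x ∈ {x : Fin n → ℝ | (∀ i, 0 < x i) ∧ L ≤ ∑ i, x i}) with h | h
  · rw [Set.indicator_of_mem h]
    have h1 : ∏ i, tiphi (x i) = ∏ i, (x i * Real.exp (-(x i))) :=
      Finset.prod_congr rfl fun i _ => Set.indicator_of_mem (h.1 i) _
    rw [h1, Finset.prod_mul_distrib, ← Real.exp_sum]
    simp [mul_comm]
  · rw [Set.indicator_of_notMem h]
    exact Finset.prod_nonneg fun i _ => tiphi_nonneg _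

lemma ti_ind_nonneg (n : ℕ) (L : ℝ) (x : Fin n → ℝ) :
    0 ≤ Set.indicator {x : Fin n → ℝ | (∀ i, 0 < x i) ∧ L ≤ ∑ i, x i}
      (fun x => Real.exp (-(∑ i, x i)) * ∏ i, x i) x := by
  apply Set.indicator_nonneg
  intro y hy
  have := hy.1
  exact mul_nonneg (Real.exp_nonneg _) (Finset.prod_nonneg fun i _ => (this i).le)

lemma ti_f_cont (n : ℕ) :
    Continuous fun x : Fin n → ℝ => Real.exp (-(∑ i, x i)) * ∏ i, x i := by
  fun_prop

lemma ti_ind_integrable (n : ℕ) (L : ℝ) :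
    Integrable (Set.indicator {x : Fin n → ℝ | (∀ i, 0 < x i) ∧ L ≤ ∑ i, x i}
      (fun x => Real.exp (-(∑ i, x i)) * ∏ i, x i)) := by
  have hprod : Integrable fun x : Fin n → ℝ => ∏ i, tiphi (x i) :=
    Integrable.fintype_prod (fun _ => tiphi_integrable)
  refine hprod.mono' ((ti_f_cont n).aestronglyMeasurable.indicator (ti_mS n L)) ?_
  filter_upwards with x
  rw [Real.norm_eq_abs, abs_of_nonneg (ti_ind_nonneg n L x)]
  exact ti_ind_le n L x

lemma tiF_eq_ind (n : ℕ) (L : ℝ) :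
    tiF n L = ∫ x : Fin n → ℝ,
      Set.indicator {x : Fin n → ℝ | (∀ i, 0 < x i) ∧ L ≤ ∑ i, x i}
        (fun x => Real.exp (-(∑ i, x i)) * ∏ i, x i) x :=
  (integral_indicator (ti_mS n L)).symm

lemma tiF_nonneg (n : ℕ) (L : ℝ) : 0 ≤ tiF n L := by
  rw [tiF_eq_ind]
  exact integral_nonneg (ti_ind_nonneg n L)

lemma ti_set_nonpos (n : ℕ) {L : ℝ} (hL : L ≤ 0) :
    {x : Fin n → ℝ | (∀ i, 0 < x i) ∧ L ≤ ∑ i, x i} = {x : Fin n → ℝ | ∀ i, 0 < x i} := by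
  ext x
  simp only [Set.mem_setOf_eq, and_iff_left_iff_imp]
  intro hx
  exact hL.trans (Finset.sum_nonneg fun i _ => (hx i).le)

lemma tiF_nonpos (n : ℕ) {L : ℝ} (hL : L ≤ 0) : tiF n L = tiF n 0 := by
  unfold tiF
  rw [ti_set_nonpos n hL, ti_set_nonpos n le_rfl]

lemma tiF_zero (n : ℕ) : tiF n 0 = 1 := by
  rw [tiF_eq_ind]
  have : ∀ x : Fin n → ℝ,
      Set.indicator {x : Fin n → ℝ | (∀ i, 0 < x i) ∧ (0:ℝ) ≤ ∑ i, x i}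
        (fun x => Real.exp (-(∑ i, x i)) * ∏ i, x i) x = ∏ i, tiphi (x i) := by
    intro x
    rw [ti_set_nonpos n le_rfl]
    rcases Classical.em (∀ i, 0 < x i) with h | h
    · rw [Set.indicator_of_mem (show x ∈ {x : Fin n → ℝ | ∀ i, 0 < x i} from h)]
      have h1 : ∏ i, tiphi (x i) = ∏ i, (x i * Real.exp (-(x i))) :=
        Finset.prod_congr rfl fun i _ => Set.indicator_of_mem (h i) _
      rw [h1, Finset.prod_mul_distrib, ← Real.exp_sum]
      simp [mul_comm]
    · rw [Set.indicator_of_notMem (show x ∉ {x : Fin n → ℝ | ∀ i, 0 < x i} from h)]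
      push_neg at h
      obtain ⟨i, hi⟩ := h
      have h0 : tiphi (x i) = 0 := Set.indicator_of_notMem (by simpa using hi) _
      exact (Finset.prod_eq_zero (Finset.mem_univ i) h0).symm
  simp_rw [this]
  rw [volume_pi, MeasureTheory.integral_fintype_prod_eq_pow tiphi, tiphi_integral, one_pow]
lemma ti_cons_eq (n : ℕ) (p : ℝ × (Fin n → ℝ)) :
    (MeasurableEquiv.piFinSuccAbove (fun _ : Fin (n+1) => ℝ) 0).symm p = Fin.cons p.1 p.2 := by
  ext i
  induction i using Fin.cases with
  | zero => simp [MeasurableEquiv.piFinSuccAbove_symm_apply, Fin.insertNthEquiv]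
  | succ j => simp [MeasurableEquiv.piFinSuccAbove_symm_apply, Fin.insertNthEquiv,
      Fin.insertNth_zero]

lemma ti_inner (n : ℕ) (L : ℝ) (y : ℝ) :
    (∫ z : Fin n → ℝ,
      Set.indicator {x : Fin (n+1) → ℝ | (∀ i, 0 < x i) ∧ L ≤ ∑ i, x i}
        (fun x => Real.exp (-(∑ i, x i)) * ∏ i, x i) (Fin.cons y z))
    = Set.indicator (Set.Ioi (0:ℝ)) (fun y => y * Real.exp (-y) * tiF n (L - y)) y := by
  classical
  rcases le_or_gt y 0 with hy | hy
  · rw [Set.indicator_of_notMem (by simpa using hy)]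
    have : ∀ z : Fin n → ℝ,
        Set.indicator {x : Fin (n+1) → ℝ | (∀ i, 0 < x i) ∧ L ≤ ∑ i, x i}
          (fun x => Real.exp (-(∑ i, x i)) * ∏ i, x i) (Fin.cons y z) = 0 := by
      intro z
      apply Set.indicator_of_notMem
      intro hmem
      exact absurd (hmem.1 0) (by simpa using hy.not_gt)
    simp [this]
  · rw [Set.indicator_of_mem (by simpa using hy)]
    have key : ∀ z : Fin n → ℝ,
        Set.indicator {x : Fin (n+1) → ℝ | (∀ i, 0 < x i) ∧ L ≤ ∑ i, x i}
          (fun x => Real.exp (-(∑ i, x i)) * ∏ i, x i) (Fin.cons y z) =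
        y * Real.exp (-y) * Set.indicator
          {z : Fin n → ℝ | (∀ i, 0 < z i) ∧ L - y ≤ ∑ i, z i}
          (fun z => Real.exp (-(∑ i, z i)) * ∏ i, z i) z := by
      intro z
      rcases Classical.em (z ∈ {z : Fin n → ℝ | (∀ i, 0 < z i) ∧ L - y ≤ ∑ i, z i})
        with hz | hz
      · have hmem : Fin.cons y z ∈
            {x : Fin (n+1) → ℝ | (∀ i, 0 < x i) ∧ L ≤ ∑ i, x i} := by
          constructor
          · intro i
            induction i using Fin.cases with
            | zero => simpa using hy
            | succ j => simpa using hz.1 j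
          · rw [Fin.sum_cons]
            linarith [hz.2]
        rw [Set.indicator_of_mem hmem, Set.indicator_of_mem hz]
        simp only [Fin.sum_cons, Fin.prod_cons]
        rw [neg_add, Real.exp_add]
        ring
      · have hmem : Fin.cons y z ∉
            {x : Fin (n+1) → ℝ | (∀ i, 0 < x i) ∧ L ≤ ∑ i, x i} := by
          intro hmem
          apply hz
          constructor
          · intro i
            have := hmem.1 i.succ
            simpa using this
          · have := hmem.2
            rw [Fin.sum_cons] at this
            linarith
        rw [Set.indicator_of_notMem hmem, Set.indicator_of_notMem hz]
        ring
    simp_rw [key]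
    rw [integral_const_mul, integral_indicator (ti_mS n (L - y))]
    rfl

lemma ti_prod_integrable (n : ℕ) (L : ℝ) :
    Integrable (fun p : ℝ × (Fin n → ℝ) =>
      Set.indicator {x : Fin (n+1) → ℝ | (∀ i, 0 < x i) ∧ L ≤ ∑ i, x i}
        (fun x => Real.exp (-(∑ i, x i)) * ∏ i, x i)
        ((MeasurableEquiv.piFinSuccAbove (fun _ : Fin (n+1) => ℝ) 0).symm p))
      (volume.prod volume) := by
  have hmp := (volume_preserving_piFinSuccAbove (fun _ : Fin (n+1) => ℝ) 0).symm
  have := (hmp.integrable_comp_emb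
    (MeasurableEquiv.measurableEmbedding _)).2 (ti_ind_integrable (n+1) L)
  rw [Measure.volume_eq_prod] at this
  exact this

lemma tiF_rec (n : ℕ) (L : ℝ) :
    tiF (n+1) L = ∫ y in Set.Ioi (0:ℝ), y * Real.exp (-y) * tiF n (L - y) := by
  have hmp := (volume_preserving_piFinSuccAbove (fun _ : Fin (n+1) => ℝ) 0).symm
  have step1 : tiF (n+1) L = ∫ p : ℝ × (Fin n → ℝ),
      Set.indicator {x : Fin (n+1) → ℝ | (∀ i, 0 < x i) ∧ L ≤ ∑ i, x i}
        (fun x => Real.exp (-(∑ i, x i)) * ∏ i, x i)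
        ((MeasurableEquiv.piFinSuccAbove (fun _ : Fin (n+1) => ℝ) 0).symm p) := by
    rw [tiF_eq_ind, ← hmp.integral_comp']
  rw [step1, Measure.volume_eq_prod,
    MeasureTheory.integral_prod _ (ti_prod_integrable n L)]
  have inner : ∀ y : ℝ, (∫ z : Fin n → ℝ,
      Set.indicator {x : Fin (n+1) → ℝ | (∀ i, 0 < x i) ∧ L ≤ ∑ i, x i}
        (fun x => Real.exp (-(∑ i, x i)) * ∏ i, x i)
        ((MeasurableEquiv.piFinSuccAbove (fun _ : Fin (n+1) => ℝ) 0).symm (y, z)))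
      = Set.indicator (Set.Ioi (0:ℝ)) (fun y => y * Real.exp (-y) * tiF n (L - y)) y := by
    intro y
    simp only [ti_cons_eq]
    exact ti_inner n L y
  simp_rw [inner]
  rw [MeasureTheory.integral_indicator measurableSet_Ioi]

lemma tiF_w_integrableOn (n : ℕ) (L : ℝ) :
    IntegrableOn (fun y : ℝ => y * Real.exp (-y) * tiF n (L - y)) (Set.Ioi 0) := by
  have h := (ti_prod_integrable n L).integral_prod_left
  have h2 : Integrable
      (Set.indicator (Set.Ioi 0) (fun y : ℝ => y * Real.exp (-y) * tiF n (L - y))) := by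
    refine h.congr ?_
    filter_upwards with y
    simp only [ti_cons_eq]
    exact ti_inner n L y
  exact (integrable_indicator_iff measurableSet_Ioi).1 h2
lemma tiF_zero_arg (M : ℝ) : tiF 0 M = if M ≤ 0 then 1 else 0 := by
  unfold tiF
  rcases le_or_gt M 0 with h | h
  · rw [if_pos h]
    have hset : {x : Fin 0 → ℝ | (∀ i, 0 < x i) ∧ M ≤ ∑ i, x i} = Set.univ := by
      ext x
      simp [h]
    rw [hset]
    simp [MeasureTheory.volume_pi, MeasureTheory.Measure.pi_univ, Measure.real]
  · rw [if_neg h.not_ge]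
    have hset : {x : Fin 0 → ℝ | (∀ i, 0 < x i) ∧ M ≤ ∑ i, x i} = ∅ := by
      ext x
      simp [h.not_ge]
    rw [hset]
    simp

lemma tiF_one (L : ℝ) (hL : 0 ≤ L) : tiF 1 L = Real.exp (-L) * (L + 1) := by
  rw [tiF_rec 0 L]
  have hcongr : ∫ y in Set.Ioi (0:ℝ), y * Real.exp (-y) * tiF 0 (L - y)
      = ∫ y in Set.Ioi (0:ℝ),
          Set.indicator (Set.Ici L) (fun y => y * Real.exp (-y)) y := by
    apply setIntegral_congr_fun measurableSet_Ioi
    intro y _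
    show y * Real.exp (-y) * tiF 0 (L - y)
      = Set.indicator (Set.Ici L) (fun y => y * Real.exp (-y)) y
    rw [tiF_zero_arg]
    rcases le_or_gt L y with h | h
    · rw [if_pos (by linarith), Set.indicator_of_mem (by simpa using h)]
      ring
    · rw [if_neg (by intro hc; simp at hc; linarith),
        Set.indicator_of_notMem (by simpa using h.not_ge)]
      ring
  rw [hcongr, setIntegral_indicator measurableSet_Ici]
  have hae : ((Set.Ioi (0:ℝ) ∩ Set.Ici L : Set ℝ) : Set ℝ) =ᵐ[volume] (Set.Ioi L : Set ℝ) := by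
    rw [MeasureTheory.ae_eq_set]
    constructor
    · have hsub : (Set.Ioi (0:ℝ) ∩ Set.Ici L) \ Set.Ioi L ⊆ {L} := by
        rintro x ⟨⟨hx1, hx2⟩, hx3⟩
        simp only [Set.mem_Ioi, not_lt] at hx3
        simp only [Set.mem_Ici] at hx2
        simp [le_antisymm hx3 hx2]
      exact measure_mono_null hsub Real.volume_singleton
    · have : Set.Ioi L \ (Set.Ioi 0 ∩ Set.Ici L) = ∅ := by
        ext x
        simp only [Set.mem_diff, Set.mem_Ioi, Set.mem_inter_iff, Set.mem_Ici,
          Set.mem_empty_iff_false, iff_false]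
        intro h
        exact absurd ⟨lt_of_le_of_lt hL h.1, h.1.le⟩ h.2
      simp [this]
  rw [setIntegral_congr_set hae, ti_integral L hL]
lemma tiF_step (n k : ℕ)
    (IH : ∀ M : ℝ, 0 ≤ M → tiF n M ≤ Real.exp (-M) * (M + 1) ^ k)
    (L : ℝ) (hL : 0 ≤ L) :
    tiF (n+1) L ≤ Real.exp (-L) * (L + 1) ^ (k + 2) := by
  rw [tiF_rec]
  set H : ℝ → ℝ := fun y =>
    if y ≤ L then Real.exp (-L) * (y * (L - y + 1) ^ k) else y * Real.exp (-y) with hH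
  have hcont : Continuous fun y : ℝ => Real.exp (-L) * (y * (L - y + 1) ^ k) := by fun_prop
  have hH1 : IntegrableOn H (Set.Ioc 0 L) := by
    refine IntegrableOn.congr_fun (f := fun y : ℝ => Real.exp (-L) * (y * (L - y + 1) ^ k))
      ?_ ?_ measurableSet_Ioc
    · exact hcont.integrableOn_Ioc
    · intro y hy
      rw [hH]
      simp [hy.2]
  have hH2 : IntegrableOn H (Set.Ioi L) := by
    refine IntegrableOn.congr_fun (f := fun y : ℝ => y * Real.exp (-y))
      (ti_integrableOn L hL) ?_ measurableSet_Ioi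
    intro y hy
    rw [hH]
    simp [(Set.mem_Ioi.1 hy).not_ge]
  have hunion : Set.Ioc (0:ℝ) L ∪ Set.Ioi L = Set.Ioi 0 := Set.Ioc_union_Ioi_eq_Ioi hL
  have hHIoi : IntegrableOn H (Set.Ioi 0) := by
    rw [← hunion]
    exact hH1.union hH2
  have hmono : ∫ y in Set.Ioi (0:ℝ), y * Real.exp (-y) * tiF n (L - y)
      ≤ ∫ y in Set.Ioi (0:ℝ), H y := by
    apply setIntegral_mono_on (tiF_w_integrableOn n L) hHIoi measurableSet_Ioi
    intro y hy
    have hy0 : 0 < y := hy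
    rcases le_or_gt y L with h | h
    · rw [hH]
      simp only [if_pos h]
      have h1 : tiF n (L - y) ≤ Real.exp (-(L - y)) * (L - y + 1) ^ k :=
        IH _ (by linarith)
      have hexp : Real.exp (-y) * Real.exp (-(L - y)) = Real.exp (-L) := by
        rw [← Real.exp_add]
        ring_nf
      calc y * Real.exp (-y) * tiF n (L - y)
          ≤ y * Real.exp (-y) * (Real.exp (-(L - y)) * (L - y + 1) ^ k) := by
            apply mul_le_mul_of_nonneg_left h1 (by positivity)
        _ = Real.exp (-L) * (y * (L - y + 1) ^ k) := by rw [← hexp]; ring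
    · rw [hH]
      simp only [if_neg h.not_ge]
      have h1 : tiF n (L - y) = tiF n 0 := tiF_nonpos n (by linarith)
      rw [h1, tiF_zero]
      nlinarith [Real.exp_pos (-y)]
  have hsplit : ∫ y in Set.Ioi (0:ℝ), H y
      = (∫ y in Set.Ioc (0:ℝ) L, H y) + ∫ y in Set.Ioi L, H y := by
    rw [← hunion]
    exact setIntegral_union (Set.Ioc_disjoint_Ioi le_rfl) measurableSet_Ioi hH1 hH2
  have hA : ∫ y in Set.Ioc (0:ℝ) L, H y ≤ Real.exp (-L) * ((L + 1) ^ k * (L ^ 2 / 2)) := by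
    have e1 : ∫ y in Set.Ioc (0:ℝ) L, H y
        = ∫ y in Set.Ioc (0:ℝ) L, Real.exp (-L) * (y * (L - y + 1) ^ k) := by
      apply setIntegral_congr_fun measurableSet_Ioc
      intro y hy
      rw [hH]
      simp [hy.2]
    have hcont2 : Continuous fun y : ℝ => Real.exp (-L) * ((L + 1) ^ k * y) := by fun_prop
    have e2 : ∫ y in Set.Ioc (0:ℝ) L, Real.exp (-L) * (y * (L - y + 1) ^ k)
        ≤ ∫ y in Set.Ioc (0:ℝ) L, Real.exp (-L) * ((L + 1) ^ k * y) := by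
      apply setIntegral_mono_on hcont.integrableOn_Ioc hcont2.integrableOn_Ioc
        measurableSet_Ioc
      intro y hy
      have h1 : (L - y + 1) ^ k ≤ (L + 1) ^ k := by
        apply pow_le_pow_left₀ (by linarith [hy.2]) (by linarith [hy.1])
      have h2 : 0 ≤ y := hy.1.le
      have := Real.exp_pos (-L)
      nlinarith [mul_le_mul_of_nonneg_left h1 h2]
    have e3 : ∫ y in Set.Ioc (0:ℝ) L, Real.exp (-L) * ((L + 1) ^ k * y)
        = Real.exp (-L) * ((L + 1) ^ k * (L ^ 2 / 2)) := by
      rw [integral_const_mul, integral_const_mul]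
      have : ∫ y in Set.Ioc (0:ℝ) L, y = L ^ 2 / 2 := by
        rw [← intervalIntegral.integral_of_le hL, _root_.integral_id]
        ring
      rw [this]
    rw [e1]
    rw [e3] at e2
    exact e2
  have hB : ∫ y in Set.Ioi L, H y = Real.exp (-L) * (L + 1) := by
    have e1 : ∫ y in Set.Ioi L, H y = ∫ y in Set.Ioi L, y * Real.exp (-y) := by
      apply setIntegral_congr_fun measurableSet_Ioi
      intro y hy
      rw [hH]
      simp [(Set.mem_Ioi.1 hy).not_ge]
    rw [e1, ti_integral L hL]
  have harith : Real.exp (-L) * ((L + 1) ^ k * (L ^ 2 / 2)) + Real.exp (-L) * (L + 1)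
      ≤ Real.exp (-L) * (L + 1) ^ (k + 2) := by
    have hP : (1:ℝ) ≤ (L + 1) ^ k := one_le_pow₀ (by linarith)
    have hpow : (L + 1) ^ (k + 2) = (L + 1) ^ k * (L + 1) ^ 2 := pow_add _ _ _
    have hE := (Real.exp_pos (-L)).le
    rw [hpow]
    have key : (L + 1) ^ k * (L ^ 2 / 2) + (L + 1) ≤ (L + 1) ^ k * (L + 1) ^ 2 := by
      nlinarith [mul_le_mul_of_nonneg_right hP
        (show (0:ℝ) ≤ L ^ 2 / 2 + 2 * L + 1 by nlinarith)]
    nlinarith [Real.exp_pos (-L)]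
  calc ∫ y in Set.Ioi (0:ℝ), y * Real.exp (-y) * tiF n (L - y)
      ≤ ∫ y in Set.Ioi (0:ℝ), H y := hmono
    _ = (∫ y in Set.Ioc (0:ℝ) L, H y) + ∫ y in Set.Ioi L, H y := hsplit
    _ ≤ Real.exp (-L) * ((L + 1) ^ k * (L ^ 2 / 2)) + Real.exp (-L) * (L + 1) := by
        rw [hB] at *; linarith
    _ ≤ Real.exp (-L) * (L + 1) ^ (k + 2) := harith

lemma tiF_bound (N : ℕ) (hN : 0 < N) (L : ℝ) (hL : 0 ≤ L) :
    tiF N L ≤ Real.exp (-L) * (L + 1) ^ (2 * N - 1) := by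
  induction N generalizing L with
  | zero => omega
  | succ n ih =>
    rcases Nat.eq_zero_or_pos n with rfl | hn
    · rw [tiF_one L hL]
      norm_num
    · have h := tiF_step n (2 * n - 1) (fun M hM => ih hn M hM) L hL
      have : 2 * n - 1 + 2 = 2 * (n + 1) - 1 := by omega
      rwa [this] at h

/-- Tail bound: `∫_{x > 0, |x| ≥ L} e^{-|x|} ∏ xᵢ dx ≤ e^{-L} (L+1)^{2N-1}`. -/
theorem tail_integral_bound (N : ℕ) (hN : 0 < N) (L : ℝ) (hL : 0 ≤ L) :
    ∫ x in {x : Fin N → ℝ | (∀ i, 0 < x i) ∧ L ≤ ∑ i, x i},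
      (Real.exp (-(∑ i, x i)) * ∏ i, x i)
      ≤ Real.exp (-L) * (L + 1) ^ (2 * N - 1) := by
  exact tiF_bound N hN L hL
end

section
/- Let a ∈ (0,∞)^D, k ∈ ℕ, and L > |a| where |a| = a_1 + ... + a_D. Then there exists a constant U (depending only on a, k, D, not on L) such that the integral of e^{a·x}·(L − |x|)^k over {x ∈ (0,∞)^D : |x| ≤ L} is at most U · e^{max(a)·L} · L^{η−1}, where max(a) is the largest component of a and η is the number of indices i with a_i = max(a). -/
open MeasureTheory Real Finset

section HajiAliAux
lemma lb0 {c : ℝ} (hc : 0 < c) (n : ℕ) :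
    IntegrableOn (fun t : ℝ => Real.exp (-(c * t)) * t ^ n) (Set.Ioi 0) := by
  have h := integrableOn_rpow_mul_exp_neg_mul_rpow (p := 1) (s := n) (b := c)
    (lt_of_lt_of_le neg_one_lt_zero (Nat.cast_nonneg n)) one_pos hc
  refine (h.congr_fun (fun t ht => ?_) measurableSet_Ioi)
  simp [Real.rpow_one, Real.rpow_natCast, mul_comm]

lemma lb1 {c : ℝ} (hc : 0 < c) (n : ℕ) :
    ∃ C : ℝ, 0 < C ∧ ∀ L : ℝ,
      (∫ t in Set.Ioc (0:ℝ) L, Real.exp (-(c * t)) * t ^ n) ≤ C := by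
  refine ⟨∫ t in Set.Ioi (0:ℝ), Real.exp (-(c * t)) * t ^ n, ?_, fun L => ?_⟩
  · rw [show (fun t : ℝ => Real.exp (-(c * t)) * t ^ n)
        = (fun t : ℝ => t ^ ((n:ℝ) + 1 - 1) * Real.exp (-(c * t))) from ?_]
    · rw [Real.integral_rpow_mul_exp_neg_mul_Ioi (a := (n:ℝ)+1) (by positivity) hc]
      positivity
    · funext t
      rw [mul_comm]
      norm_num [Real.rpow_natCast]
  · exact setIntegral_mono_set (lb0 hc n)
      ((ae_restrict_mem measurableSet_Ioi).mono fun t ht => mul_nonneg (Real.exp_pos _).le (pow_nonneg (le_of_lt ht) n))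
      (HasSubset.Subset.eventuallyLE Set.Ioc_subset_Ioi_self)

/-- substitution `t ↦ L - t` on `Ioc 0 L`. -/
lemma sub_flip (f : ℝ → ℝ) {L : ℝ} (hL : 0 ≤ L) :
    (∫ t in Set.Ioc (0:ℝ) L, f (L - t)) = ∫ t in Set.Ioc (0:ℝ) L, f t := by
  rw [← intervalIntegral.integral_of_le hL, ← intervalIntegral.integral_of_le hL,
    intervalIntegral.integral_comp_sub_left f L]
  simp

lemma key1d {b m : ℝ} (hb : 0 < b) (hmb : m < b) (n : ℕ) :
    ∃ C : ℝ, 0 < C ∧ ∀ L : ℝ, 0 ≤ L →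
      (∫ t in Set.Ioc (0:ℝ) L, Real.exp (b * t) * (Real.exp (m * (L - t)) * (L - t) ^ n))
        ≤ C * Real.exp (b * L) := by
  obtain ⟨C, hC, hCle⟩ := lb1 (sub_pos.2 hmb) n
  refine ⟨C, hC, fun L hL => ?_⟩
  have hid : (fun t : ℝ => Real.exp (b * t) * (Real.exp (m * (L - t)) * (L - t) ^ n))
      = fun t : ℝ => Real.exp (b * L) * ((fun s => Real.exp (-((b - m) * s)) * s ^ n) (L - t)) := by
    funext t
    simp only
    rw [← mul_assoc, ← Real.exp_add, ← mul_assoc, ← Real.exp_add]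
    congr 2
    ring
  calc (∫ t in Set.Ioc (0:ℝ) L, Real.exp (b * t) * (Real.exp (m * (L - t)) * (L - t) ^ n))
      = Real.exp (b * L) * ∫ t in Set.Ioc (0:ℝ) L,
          (fun s => Real.exp (-((b - m) * s)) * s ^ n) (L - t) := by
        rw [hid, MeasureTheory.integral_const_mul]
    _ = Real.exp (b * L) * ∫ t in Set.Ioc (0:ℝ) L, Real.exp (-((b - m) * t)) * t ^ n := by
        exact congrArg _ (sub_flip (fun s => Real.exp (-((b - m) * s)) * s ^ n) hL)
    _ ≤ Real.exp (b * L) * C :=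
        mul_le_mul_of_nonneg_left (hCle L) (Real.exp_pos _).le
    _ = C * Real.exp (b * L) := mul_comm _ _

lemma keyEq {b : ℝ} (n : ℕ) :
    ∀ L : ℝ, 0 ≤ L →
      (∫ t in Set.Ioc (0:ℝ) L, Real.exp (b * t) * (Real.exp (b * (L - t)) * (L - t) ^ n))
        ≤ Real.exp (b * L) * L ^ (n + 1) := by
  intro L hL
  have hid : ∀ t : ℝ, Real.exp (b * t) * (Real.exp (b * (L - t)) * (L - t) ^ n)
      = Real.exp (b * L) * (L - t) ^ n := by
    intro t
    rw [← mul_assoc, ← Real.exp_add]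
    congr 2
    ring
  calc (∫ t in Set.Ioc (0:ℝ) L, Real.exp (b * t) * (Real.exp (b * (L - t)) * (L - t) ^ n))
      = ∫ t in Set.Ioc (0:ℝ) L, Real.exp (b * L) * (L - t) ^ n := by
        exact setIntegral_congr_fun measurableSet_Ioc fun t _ => hid t
    _ ≤ ∫ _t in Set.Ioc (0:ℝ) L, Real.exp (b * L) * L ^ n := by
        refine setIntegral_mono_on ?_ ?_ measurableSet_Ioc fun t ht => ?_
        · exact (continuous_const.mul ((continuous_const.sub continuous_id).pow n)).integrableOn_Ioc
        · exact integrableOn_const measure_Ioc_lt_top.ne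
        · exact mul_le_mul_of_nonneg_left
            (pow_le_pow_left₀ (by linarith [ht.2]) (by linarith [ht.1]) n) (Real.exp_pos _).le
    _ = Real.exp (b * L) * L ^ (n + 1) := by
        rw [setIntegral_const, Real.volume_real_Ioc_of_le hL, smul_eq_mul]
        ring

lemma keyLt {b m : ℝ} (hb : 0 < b) (hbm : b < m) (n : ℕ) :
    ∃ C : ℝ, 0 < C ∧ ∀ L : ℝ, 0 ≤ L →
      (∫ t in Set.Ioc (0:ℝ) L, Real.exp (b * t) * (Real.exp (m * (L - t)) * (L - t) ^ n))
        ≤ C * Real.exp (m * L) * L ^ n := by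
  obtain ⟨C, hC, hCle⟩ := lb1 (sub_pos.2 hbm) 0
  refine ⟨C, hC, fun L hL => ?_⟩
  calc (∫ t in Set.Ioc (0:ℝ) L, Real.exp (b * t) * (Real.exp (m * (L - t)) * (L - t) ^ n))
      ≤ ∫ t in Set.Ioc (0:ℝ) L,
          (Real.exp (m * L) * L ^ n) * (Real.exp (-((m - b) * t)) * t ^ 0) := by
        refine setIntegral_mono_on ?_ ?_ measurableSet_Ioc fun t ht => ?_
        · exact ((Real.continuous_exp.comp (continuous_const.mul continuous_id)).mul
            ((Real.continuous_exp.comp (continuous_const.mul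
              (continuous_const.sub continuous_id))).mul
              ((continuous_const.sub continuous_id).pow n))).integrableOn_Ioc
        · exact (continuous_const.mul ((Real.continuous_exp.comp
            (continuous_const.mul continuous_id).neg).mul (continuous_pow 0))).integrableOn_Ioc
        · have h1 : Real.exp (b * t) * Real.exp (m * (L - t))
              = Real.exp (m * L) * Real.exp (-((m - b) * t)) := by
            rw [← Real.exp_add, ← Real.exp_add]; congr 1; ring
          have h2 : (L - t) ^ n ≤ L ^ n :=
            pow_le_pow_left₀ (by linarith [ht.2]) (by linarith [ht.1]) n
          calc Real.exp (b * t) * (Real.exp (m * (L - t)) * (L - t) ^ n)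
              = (Real.exp (m * L) * Real.exp (-((m - b) * t))) * (L - t) ^ n := by
                rw [← mul_assoc, h1]
            _ ≤ (Real.exp (m * L) * Real.exp (-((m - b) * t))) * L ^ n := by
                exact mul_le_mul_of_nonneg_left h2 (by positivity)
            _ = (Real.exp (m * L) * L ^ n) * (Real.exp (-((m - b) * t)) * t ^ 0) := by
                rw [pow_zero]; ring
    _ = (Real.exp (m * L) * L ^ n) * ∫ t in Set.Ioc (0:ℝ) L,
          Real.exp (-((m - b) * t)) * t ^ 0 := MeasureTheory.integral_const_mul _ _
    _ ≤ (Real.exp (m * L) * L ^ n) * C :=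
        mul_le_mul_of_nonneg_left (hCle L) (by positivity)
    _ = C * Real.exp (m * L) * L ^ n := by ring

lemma measS (D : ℕ) (L : ℝ) :
    MeasurableSet {x : Fin D → ℝ | (∀ i, 0 < x i) ∧ ∑ i, x i ≤ L} := by
  have h1 : MeasurableSet {x : Fin D → ℝ | ∀ i, 0 < x i} := by
    rw [Set.setOf_forall]
    exact MeasurableSet.iInter fun i => measurableSet_lt measurable_const (measurable_pi_apply i)
  have h2 : MeasurableSet {x : Fin D → ℝ | ∑ i, x i ≤ L} :=
    measurableSet_le (Finset.measurable_sum _ fun i _ => measurable_pi_apply i) measurable_const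
  exact h1.inter h2

lemma contF (D : ℕ) (a : Fin D → ℝ) (k : ℕ) (L : ℝ) :
    Continuous fun x : Fin D → ℝ => Real.exp (∑ i, a i * x i) * (L - ∑ i, x i) ^ k :=
  (Real.continuous_exp.comp (continuous_finset_sum _ fun i _ =>
      continuous_const.mul (continuous_apply i))).mul
    ((continuous_const.sub (continuous_finset_sum _ fun i _ => continuous_apply i)).pow k)

lemma intS (D : ℕ) (a : Fin D → ℝ) (k : ℕ) (L : ℝ) :
    IntegrableOn (fun x : Fin D → ℝ => Real.exp (∑ i, a i * x i) * (L - ∑ i, x i) ^ k)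
      {x : Fin D → ℝ | (∀ i, 0 < x i) ∧ ∑ i, x i ≤ L} := by
  have hsub : {x : Fin D → ℝ | (∀ i, 0 < x i) ∧ ∑ i, x i ≤ L}
      ⊆ Set.Icc (0 : Fin D → ℝ) (fun _ => max L 0) := by
    rintro x ⟨hx, hsum⟩
    refine ⟨fun i => (hx i).le, fun i => ?_⟩
    calc x i ≤ ∑ j, x j :=
          Finset.single_le_sum (fun j _ => (hx j).le) (mem_univ i)
      _ ≤ max L 0 := le_trans hsum (le_max_left _ _)
  exact (((contF D a k L).continuousOn).integrableOn_compact isCompact_Icc).mono_set hsub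

lemma Gzero (n : ℕ) (b : Fin (n+1) → ℝ) (k : ℕ) {M : ℝ} (hM : M ≤ 0) :
    (∫ y in {y : Fin (n+1) → ℝ | (∀ j, 0 < y j) ∧ ∑ j, y j ≤ M},
      Real.exp (∑ j, b j * y j) * (M - ∑ j, y j) ^ k) = 0 := by
  have h : {y : Fin (n+1) → ℝ | (∀ j, 0 < y j) ∧ ∑ j, y j ≤ M} = ∅ := by
    rw [Set.eq_empty_iff_forall_notMem]
    rintro y ⟨hy, hsum⟩
    have : 0 < ∑ j, y j := Finset.sum_pos (fun j _ => hy j) univ_nonempty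
    linarith
  rw [h]
  simp

lemma Gnonneg (D : ℕ) (b : Fin D → ℝ) (k : ℕ) (M : ℝ) :
    0 ≤ ∫ y in {y : Fin D → ℝ | (∀ j, 0 < y j) ∧ ∑ j, y j ≤ M},
      Real.exp (∑ j, b j * y j) * (M - ∑ j, y j) ^ k := by
  refine setIntegral_nonneg (measS D M) fun y hy => ?_
  have : ∑ j, y j ≤ M := hy.2
  have h2 : 0 ≤ M - ∑ j, y j := by linarith
  positivity

lemma step_eq (n : ℕ) (a : Fin (n+2) → ℝ) (k : ℕ) (L : ℝ) :
    ((∫ x in {x : Fin (n+2) → ℝ | (∀ i, 0 < x i) ∧ ∑ i, x i ≤ L},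
        Real.exp (∑ i, a i * x i) * (L - ∑ i, x i) ^ k)
      = ∫ t in Set.Ioi (0:ℝ), Real.exp (a 0 * t) *
          (∫ y in {y : Fin (n+1) → ℝ | (∀ j, 0 < y j) ∧ ∑ j, y j ≤ L - t},
            Real.exp (∑ j, a j.succ * y j) * ((L - t) - ∑ j, y j) ^ k))
    ∧ IntegrableOn (fun t => Real.exp (a 0 * t) *
          (∫ y in {y : Fin (n+1) → ℝ | (∀ j, 0 < y j) ∧ ∑ j, y j ≤ L - t},
            Real.exp (∑ j, a j.succ * y j) * ((L - t) - ∑ j, y j) ^ k)) (Set.Ioi 0) := by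
  set f : (Fin (n+2) → ℝ) → ℝ :=
    fun x => Real.exp (∑ i, a i * x i) * (L - ∑ i, x i) ^ k with hf
  set S : Set (Fin (n+2) → ℝ) := {x | (∀ i, 0 < x i) ∧ ∑ i, x i ≤ L} with hSdef
  set G : ℝ → ℝ := fun M => ∫ y in {y : Fin (n+1) → ℝ | (∀ j, 0 < y j) ∧ ∑ j, y j ≤ M},
      Real.exp (∑ j, a j.succ * y j) * (M - ∑ j, y j) ^ k with hG
  set φ : ℝ → ℝ := fun t => Real.exp (a 0 * t) * G (L - t) with hφ
  set e := MeasurableEquiv.piFinSuccAbove (fun _ : Fin (n+2) => ℝ) 0 with he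
  have hvp : MeasurePreserving e.symm :=
    (volume_preserving_piFinSuccAbove (fun _ : Fin (n+2) => ℝ) 0).symm
  have hme := e.symm.measurableEmbedding
  have hcons : ∀ p : ℝ × (Fin (n+1) → ℝ), e.symm p = Fin.cons p.1 p.2 := by
    intro p
    simp [he, MeasurableEquiv.piFinSuccAbove_symm_apply, Fin.insertNth_zero', Fin.consEquiv]
  have hmem : ∀ (t : ℝ) (y : Fin (n+1) → ℝ),
      (t, y) ∈ e.symm ⁻¹' S ↔ (0 < t ∧ ((∀ j, 0 < y j) ∧ ∑ j, y j ≤ L - t)) := by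
    intro t y
    simp only [Set.mem_preimage, hcons, hSdef, Set.mem_setOf_eq, Fin.forall_fin_succ,
      Fin.sum_univ_succ, Fin.cons_zero, Fin.cons_succ]
    constructor
    · rintro ⟨⟨h1, h2⟩, h3⟩; exact ⟨h1, h2, by linarith⟩
    · rintro ⟨h1, h2, h3⟩; exact ⟨⟨h1, h2⟩, by linarith⟩
  have hval : ∀ (t : ℝ) (y : Fin (n+1) → ℝ),
      f (e.symm (t, y)) = Real.exp (a 0 * t) *
        (Real.exp (∑ j, a j.succ * y j) * ((L - t) - ∑ j, y j) ^ k) := by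
    intro t y
    simp only [hf, hcons, Fin.sum_univ_succ, Fin.cons_zero, Fin.cons_succ, Real.exp_add]
    ring
  have hSm : MeasurableSet S := measS (n+2) L
  have hTm : MeasurableSet (e.symm ⁻¹' S) := hSm.preimage e.symm.measurable
  have hint : IntegrableOn f S := intS (n+2) a k L
  have hint2 : IntegrableOn (f ∘ e.symm) (e.symm ⁻¹' S) :=
    (hvp.integrableOn_comp_preimage hme).2 hint
  have hindint : Integrable ((e.symm ⁻¹' S).indicator (f ∘ e.symm)) volume :=
    (integrable_indicator_iff hTm).2 hint2
  have hindint' : Integrable ((e.symm ⁻¹' S).indicator (f ∘ e.symm))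
      ((volume : Measure ℝ).prod (volume : Measure (Fin (n+1) → ℝ))) := by
    rwa [← Measure.volume_eq_prod]
  -- the inner integral identity
  have hinner : ∀ t : ℝ,
      (∫ y, ((e.symm ⁻¹' S).indicator (f ∘ e.symm)) (t, y)) = (Set.Ioi 0).indicator φ t := by
    intro t
    by_cases ht : 0 < t
    · have hcong : (fun y => ((e.symm ⁻¹' S).indicator (f ∘ e.symm)) (t, y))
          = fun y => ({y : Fin (n+1) → ℝ | (∀ j, 0 < y j) ∧ ∑ j, y j ≤ L - t}).indicator
              (fun y => Real.exp (a 0 * t) *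
                (Real.exp (∑ j, a j.succ * y j) * ((L - t) - ∑ j, y j) ^ k)) y := by
        funext y
        by_cases hy : (∀ j, 0 < y j) ∧ ∑ j, y j ≤ L - t
        · rw [Set.indicator_of_mem ((hmem t y).2 ⟨ht, hy⟩), Set.indicator_of_mem
            (show y ∈ {y : Fin (n+1) → ℝ | (∀ j, 0 < y j) ∧ ∑ j, y j ≤ L - t} from hy)]
          exact hval t y
        · rw [Set.indicator_of_notMem (fun hc => hy ((hmem t y).1 hc).2),
            Set.indicator_of_notMem
              (show y ∉ {y : Fin (n+1) → ℝ | (∀ j, 0 < y j) ∧ ∑ j, y j ≤ L - t} from hy)]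
      rw [hcong, integral_indicator (measS (n+1) (L - t)),
        MeasureTheory.integral_const_mul,
        Set.indicator_of_mem (show t ∈ Set.Ioi (0:ℝ) from ht)]
    · have hcong : (fun y => ((e.symm ⁻¹' S).indicator (f ∘ e.symm)) (t, y))
          = fun _ => (0:ℝ) :=
        funext fun y => Set.indicator_of_notMem (fun hc => ht ((hmem t y).1 hc).1) _
      rw [hcong, integral_zero, Set.indicator_of_notMem (by simpa using ht)]
  have hmain : (∫ x in S, f x) = ∫ t in Set.Ioi (0:ℝ), φ t := by
    calc (∫ x in S, f x) = ∫ p in e.symm ⁻¹' S, f (e.symm p) :=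
          (hvp.setIntegral_preimage_emb hme f S).symm
      _ = ∫ p : ℝ × (Fin (n+1) → ℝ), ((e.symm ⁻¹' S).indicator (f ∘ e.symm)) p :=
          (integral_indicator hTm).symm
      _ = ∫ p : ℝ × (Fin (n+1) → ℝ), ((e.symm ⁻¹' S).indicator (f ∘ e.symm)) p
            ∂((volume : Measure ℝ).prod (volume : Measure (Fin (n+1) → ℝ))) := by
          rw [← Measure.volume_eq_prod]
      _ = ∫ t : ℝ, ∫ y, ((e.symm ⁻¹' S).indicator (f ∘ e.symm)) (t, y) :=
          integral_prod _ hindint'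
      _ = ∫ t : ℝ, (Set.Ioi (0:ℝ)).indicator φ t := by
          exact integral_congr_ae (Filter.Eventually.of_forall hinner)
      _ = ∫ t in Set.Ioi (0:ℝ), φ t := integral_indicator measurableSet_Ioi
  have hintφ : IntegrableOn φ (Set.Ioi 0) := by
    have h1 : Integrable (fun t : ℝ => ∫ y, ((e.symm ⁻¹' S).indicator (f ∘ e.symm)) (t, y))
        volume := by
      have := hindint'.integral_prod_left
      simpa using this
    have h2 : Integrable ((Set.Ioi (0:ℝ)).indicator φ) volume := by
      rwa [show (fun t : ℝ => ∫ y, ((e.symm ⁻¹' S).indicator (f ∘ e.symm)) (t, y))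
        = (Set.Ioi (0:ℝ)).indicator φ from funext hinner] at h1
    exact (integrable_indicator_iff measurableSet_Ioi).1 h2
  exact ⟨hmain, hintφ⟩

-- base case test
lemma base_case (a : Fin 1 → ℝ) (ha : ∀ i, 0 < a i) (k : ℕ) :
    ∃ U : ℝ, 0 < U ∧ ∀ L : ℝ, 0 ≤ L →
      (∫ x in {x : Fin 1 → ℝ | (∀ i, 0 < x i) ∧ ∑ i, x i ≤ L},
          Real.exp (∑ i, a i * x i) * (L - ∑ i, x i) ^ k)
        ≤ U * Real.exp ((Finset.univ.sup' univ_nonempty a) * L) *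
            L ^ ((Finset.univ.filter
              (fun i => a i = Finset.univ.sup' univ_nonempty a)).card - 1) := by
  have hm : Finset.univ.sup' univ_nonempty a = a 0 :=
    le_antisymm (sup'_le _ _ fun i _ => by rw [Subsingleton.elim i 0])
      (le_sup' a (mem_univ 0))
  obtain ⟨C, hC, hCle⟩ := key1d (b := a 0) (m := 0) (ha 0) (ha 0) k
  refine ⟨C, hC, fun L hL => ?_⟩
  have hexp : ((Finset.univ.filter
      (fun i => a i = Finset.univ.sup' univ_nonempty a)).card - 1) = 0 :=
    Nat.sub_eq_zero_of_le (le_trans (card_filter_le _ _) (by simp))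
  rw [hexp, pow_zero, mul_one, hm]
  set e := MeasurableEquiv.funUnique (Fin 1) ℝ with he
  have hvp : MeasurePreserving e.symm :=
    (volume_preserving_funUnique (Fin 1) ℝ).symm
  have hme := e.symm.measurableEmbedding
  set f : (Fin 1 → ℝ) → ℝ :=
    fun x => Real.exp (∑ i, a i * x i) * (L - ∑ i, x i) ^ k with hf
  set S : Set (Fin 1 → ℝ) := {x | (∀ i, 0 < x i) ∧ ∑ i, x i ≤ L} with hS
  have hsymm : ∀ t : ℝ, e.symm t = fun _ : Fin 1 => t := fun t => rfl
  have hset : e.symm ⁻¹' S = Set.Ioc 0 L := by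
    ext t
    simp [hS, hsymm, Fin.forall_fin_one, Set.mem_Ioc]
  have h1 : (∫ x in S, f x) = ∫ t in Set.Ioc (0:ℝ) L, Real.exp (a 0 * t) * (L - t) ^ k := by
    rw [← hvp.setIntegral_preimage_emb hme f S, hset]
    refine setIntegral_congr_fun measurableSet_Ioc fun t _ => ?_
    simp [hf, hsymm, Fin.sum_univ_one]
  calc (∫ x in S, f x)
      = ∫ t in Set.Ioc (0:ℝ) L, Real.exp (a 0 * t) * (L - t) ^ k := h1
    _ = ∫ t in Set.Ioc (0:ℝ) L, Real.exp (a 0 * t) *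
          (Real.exp (0 * (L - t)) * (L - t) ^ k) := by
        refine setIntegral_congr_fun measurableSet_Ioc fun t _ => ?_
        simp
    _ ≤ C * Real.exp (a 0 * L) := hCle L hL

set_option maxHeartbeats 1000000 in
lemma keylem : ∀ (n : ℕ) (a : Fin (n+1) → ℝ), (∀ i, 0 < a i) → ∀ k : ℕ,
    ∃ U : ℝ, 0 < U ∧ ∀ L : ℝ, 0 ≤ L →
      (∫ x in {x : Fin (n+1) → ℝ | (∀ i, 0 < x i) ∧ ∑ i, x i ≤ L},
          Real.exp (∑ i, a i * x i) * (L - ∑ i, x i) ^ k)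
        ≤ U * Real.exp ((Finset.univ.sup' univ_nonempty a) * L) *
            L ^ ((Finset.univ.filter
              (fun i => a i = Finset.univ.sup' univ_nonempty a)).card - 1) := by
  intro n
  induction n with
  | zero => exact base_case
  | succ n IH =>
    intro a ha k
    set b : Fin (n+1) → ℝ := fun j => a j.succ with hbdef
    have hb : ∀ j, 0 < b j := fun j => ha _
    obtain ⟨U', hU', hIH⟩ := IH b hb k
    set m' : ℝ := Finset.univ.sup' univ_nonempty b with hm'def
    set m : ℝ := Finset.univ.sup' univ_nonempty a with hmdef
    set η' : ℕ := (Finset.univ.filter (fun j => b j = m')).card with hη'def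
    have hmm : m = max (a 0) m' := by
      refine le_antisymm (sup'_le _ _ fun i _ => ?_)
        (max_le (le_sup' a (mem_univ 0)) (sup'_le _ _ fun j _ => le_sup' a (mem_univ j.succ)))
      refine Fin.cases ?_ (fun j => ?_) i
      · exact le_max_left _ _
      · exact le_trans (le_sup' b (mem_univ j)) (le_max_right _ _)
    have hcard : (Finset.univ.filter (fun i => a i = m)).card
        = (if a 0 = m then 1 else 0)
          + (Finset.univ.filter (fun j => b j = m)).card := by
      rw [card_filter, card_filter, Fin.sum_univ_succ]
    have hη'pos : 0 < η' := by
      obtain ⟨j, hj, hjeq⟩ := exists_mem_eq_sup' (univ_nonempty (α := Fin (n+1))) b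
      exact card_pos.2 ⟨j, mem_filter.2 ⟨hj, hjeq.symm⟩⟩
    -- main bound on F via step_eq and IH
    have hmain : ∀ L : ℝ, 0 ≤ L →
        (∫ x in {x : Fin (n+2) → ℝ | (∀ i, 0 < x i) ∧ ∑ i, x i ≤ L},
            Real.exp (∑ i, a i * x i) * (L - ∑ i, x i) ^ k)
          ≤ U' * ∫ t in Set.Ioc (0:ℝ) L,
              Real.exp (a 0 * t) * (Real.exp (m' * (L - t)) * (L - t) ^ (η' - 1)) := by
      intro L hL
      obtain ⟨heq, hint⟩ := step_eq n a k L
      set G : ℝ → ℝ := fun M =>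
        ∫ y in {y : Fin (n+1) → ℝ | (∀ j, 0 < y j) ∧ ∑ j, y j ≤ M},
          Real.exp (∑ j, a j.succ * y j) * (M - ∑ j, y j) ^ k with hGdef
      have hrestrict : (∫ t in Set.Ioi (0:ℝ), Real.exp (a 0 * t) * G (L - t))
          = ∫ t in Set.Ioc (0:ℝ) L, Real.exp (a 0 * t) * G (L - t) := by
        have hvan : Set.EqOn (fun t => Real.exp (a 0 * t) * G (L - t))
            ((Set.Ioc (0:ℝ) L).indicator (fun t => Real.exp (a 0 * t) * G (L - t)))
            (Set.Ioi 0) := by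
          intro t ht
          by_cases h : t ≤ L
          · rw [Set.indicator_of_mem (Set.mem_Ioc.2 ⟨ht, h⟩)]
          · rw [Set.indicator_of_notMem (fun hc => h hc.2)]
            have : G (L - t) = 0 := Gzero n b k (by push_neg at h; linarith)
            simp [this]
        rw [setIntegral_congr_fun measurableSet_Ioi hvan,
          setIntegral_indicator measurableSet_Ioc,
          Set.inter_eq_self_of_subset_right Set.Ioc_subset_Ioi_self]
      have hmono : (∫ t in Set.Ioc (0:ℝ) L, Real.exp (a 0 * t) * G (L - t))
          ≤ ∫ t in Set.Ioc (0:ℝ) L,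
              Real.exp (a 0 * t) * (U' * Real.exp (m' * (L - t)) * (L - t) ^ (η' - 1)) := by
        refine setIntegral_mono_on (hint.mono_set Set.Ioc_subset_Ioi_self) ?_
          measurableSet_Ioc fun t ht => ?_
        · exact ((Real.continuous_exp.comp (continuous_const.mul continuous_id)).mul
            ((continuous_const.mul (Real.continuous_exp.comp (continuous_const.mul
              (continuous_const.sub continuous_id)))).mul
              ((continuous_const.sub continuous_id).pow (η' - 1)))).integrableOn_Ioc
        · exact mul_le_mul_of_nonneg_left (hIH (L - t) (by linarith [ht.2]))
            (Real.exp_pos _).le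
      calc (∫ x in {x : Fin (n+2) → ℝ | (∀ i, 0 < x i) ∧ ∑ i, x i ≤ L},
            Real.exp (∑ i, a i * x i) * (L - ∑ i, x i) ^ k)
          = ∫ t in Set.Ioc (0:ℝ) L, Real.exp (a 0 * t) * G (L - t) := by
            rw [heq]; exact hrestrict
        _ ≤ ∫ t in Set.Ioc (0:ℝ) L,
              Real.exp (a 0 * t) * (U' * Real.exp (m' * (L - t)) * (L - t) ^ (η' - 1)) := hmono
        _ = ∫ t in Set.Ioc (0:ℝ) L,
              U' * (Real.exp (a 0 * t) * (Real.exp (m' * (L - t)) * (L - t) ^ (η' - 1))) := by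
            refine setIntegral_congr_fun measurableSet_Ioc fun t _ => by ring
        _ = U' * ∫ t in Set.Ioc (0:ℝ) L,
              Real.exp (a 0 * t) * (Real.exp (m' * (L - t)) * (L - t) ^ (η' - 1)) :=
            MeasureTheory.integral_const_mul _ _
    -- case analysis
    rcases lt_trichotomy (a 0) m' with hlt | heqc | hgt
    · -- a 0 < m'
      have hm : m = m' := by rw [hmm, max_eq_right hlt.le]
      have h0 : ¬ a 0 = m := by rw [hm]; exact ne_of_lt hlt
      have hcard' : (Finset.univ.filter (fun i => a i = m)).card = η' := by
        rw [hcard, if_neg h0, zero_add, hη'def, hm]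
      obtain ⟨C, hC, hCle⟩ := keyLt (ha 0) hlt (η' - 1)
      refine ⟨U' * C, by positivity, fun L hL => ?_⟩
      rw [hcard', hm]
      calc _ ≤ U' * ∫ t in Set.Ioc (0:ℝ) L,
              Real.exp (a 0 * t) * (Real.exp (m' * (L - t)) * (L - t) ^ (η' - 1)) :=
            hmain L hL
        _ ≤ U' * (C * Real.exp (m' * L) * L ^ (η' - 1)) :=
            mul_le_mul_of_nonneg_left (hCle L hL) hU'.le
        _ = U' * C * Real.exp (m' * L) * L ^ (η' - 1) := by ring
    · -- a 0 = m'
      have hm : m = m' := by rw [hmm, heqc, max_self]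
      have h0 : a 0 = m := by rw [hm]; exact heqc
      have hcard' : (Finset.univ.filter (fun i => a i = m)).card = 1 + η' := by
        rw [hcard, if_pos h0, hη'def, hm]
      refine ⟨U', hU', fun L hL => ?_⟩
      rw [hcard', hm]
      have hee : (1 + η') - 1 = η' := by omega
      rw [hee]
      have hstep := keyEq (b := a 0) (η' - 1) L hL
      calc _ ≤ U' * ∫ t in Set.Ioc (0:ℝ) L,
              Real.exp (a 0 * t) * (Real.exp (m' * (L - t)) * (L - t) ^ (η' - 1)) :=
            hmain L hL
        _ ≤ U' * (Real.exp (a 0 * L) * L ^ ((η' - 1) + 1)) := by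
            refine mul_le_mul_of_nonneg_left ?_ hU'.le
            rw [← heqc]
            exact hstep
        _ = U' * Real.exp (m' * L) * L ^ η' := by
            rw [Nat.sub_add_cancel hη'pos, heqc]; ring
    · -- m' < a 0
      have hm : m = a 0 := by rw [hmm, max_eq_left hgt.le]
      have h0 : a 0 = m := hm.symm
      have hbne : (Finset.univ.filter (fun j => b j = m)).card = 0 := by
        rw [card_eq_zero, filter_eq_empty_iff]
        intro j _
        exact ne_of_lt (lt_of_le_of_lt (le_sup' b (mem_univ j)) (by rw [hm]; exact hgt))
      have hcard' : (Finset.univ.filter (fun i => a i = m)).card = 1 := by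
        rw [hcard, if_pos h0, hbne]
      obtain ⟨C, hC, hCle⟩ := key1d (ha 0) hgt (η' - 1)
      refine ⟨U' * C, by positivity, fun L hL => ?_⟩
      rw [hcard', hm]
      norm_num
      calc _ ≤ U' * ∫ t in Set.Ioc (0:ℝ) L,
              Real.exp (a 0 * t) * (Real.exp (m' * (L - t)) * (L - t) ^ (η' - 1)) :=
            hmain L hL
        _ ≤ U' * (C * Real.exp (a 0 * L)) :=
            mul_le_mul_of_nonneg_left (hCle L hL) hU'.le
        _ = U' * C * Real.exp (a 0 * L) := by ring

end HajiAliAux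

/-- Lemma 4 (Haji-Ali et al.): for `a ∈ (0,∞)^D`, `k ∈ ℕ`, there is a constant
`U` (independent of `L`) such that for all `L > |a|`,
`∫_{x>0, |x| ≤ L} e^{a·x}(L-|x|)^k dx ≤ U e^{max(a) L} L^{η-1}`,
where `η` is the number of indices attaining `max(a)`. -/
theorem integral_exp_dot_bound (D : ℕ) (hD : 0 < D) (a : Fin D → ℝ)
    (ha : ∀ i, 0 < a i) (k : ℕ) :
    ∃ U : ℝ, 0 < U ∧ ∀ L : ℝ, (∑ i, a i) < L →
      (∫ x in {x : Fin D → ℝ | (∀ i, 0 < x i) ∧ ∑ i, x i ≤ L},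
          Real.exp (∑ i, a i * x i) * (L - ∑ i, x i) ^ k)
        ≤ U * Real.exp ((Finset.univ.sup' ⟨⟨0, hD⟩, mem_univ _⟩ a) * L) *
            L ^ ((Finset.univ.filter
              (fun i => a i = Finset.univ.sup' ⟨⟨0, hD⟩, mem_univ _⟩ a)).card - 1) := by
  obtain ⟨n, rfl⟩ : ∃ n, D = n + 1 := ⟨D - 1, (Nat.succ_pred_eq_of_pos hD).symm⟩
  obtain ⟨U, hU, h⟩ := keylem n a ha k
  refine ⟨U, hU, fun L hL => ?_⟩
  have h0 : (0:ℝ) ≤ L :=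
    le_of_lt (lt_of_le_of_lt (le_of_lt (Finset.sum_pos (fun i _ => ha i) univ_nonempty)) hL)
  exact h L h0
end

section
/- Let I ⊂ ℕ_+^n be a finite downward-closed multi-index set and (u^v)_{v∈I} elements of a vector space, extended by u^v = 0 if any component of v is zero. Then the combination-technique identity holds: Σ_{v∈I} Δ[u^v] = Σ_{v∈I} c_v u^v, where Δ[u^v] = Σ_{j∈{0,1}^n} (−1)^{|j|} u^{v−j} and c_v = Σ_{j∈{0,1}^n : v+j ∈ I} (−1)^{|j|}. -/
/-!
After exchanging the sums over `v` and `j`, the identity splits into one identity per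
`j ∈ {0,1}^n`, namely `∑_{v ∈ I} u^{v-j} = ∑_{w ∈ I, w+j ∈ I} u^w`. The substitution
`v = w + j` matches the right side with part of the left; every other `v ∈ I` has a zero
component in `v - j`, since otherwise `w = v - j ≤ v` lies in `I` by downward closedness,
so its term `u^{v-j}` vanishes.
-/

open Finset

section

variable {ι E : Type*} [AddCommMonoid E]

def addBool (v : ι → ℕ+) (j : ι → Bool) : ι → ℕ+ := fun i => if j i then v i + 1 else v i

theorem addBool_injective (j : ι → Bool) : Function.Injective (addBool · j) := by
  intro v w h
  funext i
  have := congrFun h i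
  simp only [addBool] at this
  split_ifs at this <;> simpa using this

theorem coe_addBool_sub (v : ι → ℕ+) (j : ι → Bool) (i : ι) :
    ((addBool v j i : ℕ) - if j i then 1 else 0) = v i := by
  unfold addBool; split_ifs <;> simp

theorem exists_addBool_eq {v : ι → ℕ+} {j : ι → Bool}
    (hv : ∀ i, (v i : ℕ) - (if j i then 1 else 0) ≠ 0) :
    ∃ w : ι → ℕ+, (∀ i, w i ≤ v i) ∧ addBool w j = v := by
  refine ⟨fun i => Nat.toPNat' ((v i : ℕ) - if j i then 1 else 0), fun i => ?_, funext fun i => ?_⟩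
  · rw [← PNat.coe_le_coe, Nat.toPNat'_coe, if_pos (Nat.pos_of_ne_zero (hv i))]
    omega
  · apply PNat.coe_injective
    have hvi := Nat.pos_of_ne_zero (hv i)
    simp only [addBool]
    split_ifs at hvi ⊢ <;> simp [Nat.toPNat'_coe, hvi]; omega

theorem sum_comp_sub_eq_sum_filter_addBool_mem [DecidableEq (ι → ℕ+)] {I : Finset (ι → ℕ+)}
    (hdc : ∀ v ∈ I, ∀ w : ι → ℕ+, (∀ i, w i ≤ v i) → w ∈ I)
    (u : (ι → ℕ) → E) (hzero : ∀ v : ι → ℕ, (∃ i, v i = 0) → u v = 0) (j : ι → Bool) :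
    ∑ v ∈ I, u (fun i => (v i : ℕ) - if j i then 1 else 0) =
      ∑ w ∈ I with addBool w j ∈ I, u (fun i => (w i : ℕ)) := by
  have hshift : ∑ w ∈ I with addBool w j ∈ I, u (fun i => (w i : ℕ)) =
      ∑ v ∈ (I.filter (addBool · j ∈ I)).image (addBool · j),
        u (fun i => (v i : ℕ) - if j i then 1 else 0) := by
    rw [sum_image fun v _ w _ h => addBool_injective j h]
    simp only [coe_addBool_sub]
  rw [hshift]
  symm
  refine sum_subset (fun v hv => ?_) fun v hvI hv => hzero _ ?_
  · obtain ⟨w, hw, rfl⟩ := mem_image.mp hv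
    exact (mem_filter.mp hw).2
  · by_contra! hpos
    obtain ⟨w, hwv, rfl⟩ := exists_addBool_eq hpos
    exact hv (mem_image_of_mem _ (mem_filter.mpr ⟨hdc _ hvI w hwv, hvI⟩))

end

/-- Combination technique identity: for a finite downward-closed index set `I`,
`∑_{v ∈ I} Δ[u^v] = ∑_{v ∈ I} c_v u^v` with
`c_v = ∑_{j ∈ {0,1}^n, v+j ∈ I} (-1)^{|j|}`. -/
theorem combination_technique_identity (n : ℕ)
    (E : Type*) [AddCommGroup E] [Module ℝ E]
    (I : Finset (Fin n → ℕ+))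
    (hdc : ∀ v ∈ I, ∀ w : Fin n → ℕ+, (∀ i, w i ≤ v i) → w ∈ I)
    (u : (Fin n → ℕ) → E)
    (hzero : ∀ v : Fin n → ℕ, (∃ i, v i = 0) → u v = 0) :
    (∑ v ∈ I, ∑ j : Fin n → Bool,
        ((-1 : ℝ) ^ (Finset.univ.filter (fun i => j i = true)).card) •
          u (fun i => (v i : ℕ) - (if j i then 1 else 0)))
    = ∑ v ∈ I,
        (∑ j : Fin n → Bool,
          if (fun i => if j i then v i + 1 else v i) ∈ I then
            ((-1 : ℝ) ^ (Finset.univ.filter (fun i => j i = true)).card) else 0) •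
        u (fun i => (v i : ℕ)) := by
  simp only [sum_smul, ite_smul, zero_smul]
  rw [sum_comm, sum_comm (s := I)]
  refine sum_congr rfl fun j _ => ?_
  rw [← smul_sum, ← sum_filter, ← smul_sum, sum_comp_sub_eq_sum_filter_addBool_mem hdc u hzero j]
  rfl
end

section
/- Let g = (g_1,...,g_N) with all g_n > 0, and for L > 0 define I(L) = {β ∈ ℕ_+^N : Σ_n g_n(β_n+1) + Σ_n log(β_n+1) ≤ L}. Then Σ_{β∈I(L)} Π_n (β_n+1) ≤ C_1 · (L + |g|)^{2N} / (2N)!, where |g| = Σ_n g_n and C_1 = Π_n (1/g_n²). -/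
open Finset Real


private lemma hasDerivF (g c : ℝ) (K : ℕ) (x : ℝ) :
    HasDerivAt (fun x : ℝ => -((c + ((K:ℝ)+1)*g*x) * (c - g*x)^(K+1)))
      ((g^2*((K:ℝ)+1)*((K:ℝ)+2)) * (x * (c - g*x)^K)) x := by
  have h1 : HasDerivAt (fun x : ℝ => c + ((K:ℝ)+1)*g*x) (((K:ℝ)+1)*g) x := by
    simpa using ((hasDerivAt_id x).const_mul (((K:ℝ)+1)*g)).const_add c
  have h2 : HasDerivAt (fun x : ℝ => c - g*x) (-g) x := by
    simpa using ((hasDerivAt_id x).const_mul g).const_sub c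
  have h3 : HasDerivAt (fun x : ℝ => (c - g*x)^(K+1))
      ((((K:ℝ)+1)) * (c - g*x)^K * (-g)) x := by
    have := h2.pow (K+1)
    exact this.congr_deriv (by rw [Nat.add_sub_cancel]; push_cast; ring)
  have h4 := (h1.mul h3).neg
  refine h4.congr_deriv ?_
  rw [pow_succ]
  push_cast
  ring

private lemma onedim (g c : ℝ) (hg : 0 < g) (hc : 0 ≤ c) (K : ℕ) (V : Finset ℕ+)
    (hV : ∀ v ∈ V, g * ((v:ℝ) + 2) ≤ c) :
    ∑ v ∈ V, ((v:ℝ) + 1) * (c - g * ((v:ℝ) + 2)) ^ K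
      ≤ c ^ (K+2) / (g^2 * ((K:ℝ)+1) * ((K:ℝ)+2)) := by
  set D : ℝ := g^2 * ((K:ℝ)+1) * ((K:ℝ)+2) with hDdef
  have hD : 0 < D := by positivity
  rcases V.eq_empty_or_nonempty with rfl | ⟨v₀, hv₀⟩
  · simp only [Finset.sum_empty]
    exact div_nonneg (pow_nonneg hc _) hD.le
  set F : ℝ → ℝ := fun x => -((c + ((K:ℝ)+1)*g*x) * (c - g*x)^(K+1)) with hFdef
  have hder : ∀ x, HasDerivAt F (D * (x * (c - g*x)^K)) x := fun x => hasDerivF g c K x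
  have hdiff : Differentiable ℝ F := fun x => (hder x).differentiableAt
  have hcg0 : 0 ≤ c / g := div_nonneg hc hg.le
  have hmono : MonotoneOn F (Set.Icc 0 (c/g)) := by
    apply monotoneOn_of_deriv_nonneg (convex_Icc _ _) hdiff.continuous.continuousOn
      hdiff.differentiableOn
    intro x hx
    rw [interior_Icc] at hx
    rw [(hder x).deriv]
    have hx0 : 0 ≤ x := hx.1.le
    have hcgx : 0 ≤ c - g*x := by
      have := hx.2.le
      rw [le_div_iff₀ hg] at this
      nlinarith
    positivity
  have hstep : ∀ v ∈ V, D * (((v:ℝ)+1) * (c - g*((v:ℝ)+2))^K)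
      ≤ F ((v:ℝ)+2) - F ((v:ℝ)+1) := by
    intro v hv
    have hb : (1:ℝ) ≤ (v:ℝ) := by exact_mod_cast v.one_le
    have hVv := hV v hv
    have := (convex_Icc ((v:ℝ)+1) ((v:ℝ)+2)).mul_sub_le_image_sub_of_le_deriv
      hdiff.continuous.continuousOn hdiff.differentiableOn
      (C := D * (((v:ℝ)+1) * (c - g*((v:ℝ)+2))^K)) ?_
      ((v:ℝ)+1) (by constructor <;> linarith) ((v:ℝ)+2) (by constructor <;> linarith)
      (by linarith)
    · linarith [this]
    · intro x hx
      rw [interior_Icc] at hx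
      rw [(hder x).deriv]
      have h1 : 0 ≤ c - g*((v:ℝ)+2) := by linarith
      have h2 : c - g*((v:ℝ)+2) ≤ c - g*x := by nlinarith [hx.2.le]
      have h3 : (c - g*((v:ℝ)+2))^K ≤ (c - g*x)^K := pow_le_pow_left₀ h1 h2 K
      have h4 : ((v:ℝ)+1) ≤ x := hx.1.le
      have := mul_le_mul h4 h3 (pow_nonneg h1 K) (by linarith)
      nlinarith
  have hsum1 : D * (∑ v ∈ V, ((v:ℝ)+1)*(c - g*((v:ℝ)+2))^K)
      ≤ ∑ v ∈ V, (F ((v:ℝ)+2) - F ((v:ℝ)+1)) := by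
    rw [mul_sum]; exact sum_le_sum hstep
  set Gn : ℕ → ℝ := fun n => F n with hGdef
  set B : Finset ℕ := V.image (fun v : ℕ+ => (v:ℕ)+1) with hBdef
  have hBne : B.Nonempty := ⟨(v₀:ℕ)+1, mem_image_of_mem _ hv₀⟩
  set M : ℕ := B.max' hBne with hMdef
  have himg : ∑ v ∈ V, (F ((v:ℝ)+2) - F ((v:ℝ)+1)) = ∑ n ∈ B, (Gn (n+1) - Gn n) := by
    rw [hBdef, Finset.sum_image (by intro x hx y hy h; exact PNat.coe_injective (Nat.add_right_cancel h))]
    apply sum_congr rfl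
    intro v hv
    have e1 : (((v:ℕ)+1+1 : ℕ) : ℝ) = (v:ℝ)+2 := by push_cast; ring
    have e2 : (((v:ℕ)+1 : ℕ) : ℝ) = (v:ℝ)+1 := by push_cast; ring
    simp only [hGdef, e1, e2]
  -- facts about B
  have hBfact : ∀ n ∈ B, 2 ≤ n ∧ g * ((n:ℝ)+1) ≤ c := by
    intro n hn
    rw [hBdef, mem_image] at hn
    obtain ⟨v, hv, rfl⟩ := hn
    refine ⟨by have := v.pos; omega, ?_⟩
    have := hV v hv
    push_cast
    linarith
  have hM2 : 2 ≤ M := (hBfact M (B.max'_mem hBne)).1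
  have hMle : ((M:ℝ)+1) ≤ c/g := by
    rw [le_div_iff₀ hg]
    have := (hBfact M (B.max'_mem hBne)).2
    linarith [mul_comm g ((M:ℝ)+1)]
  have hmem : ∀ n : ℕ, n ≤ M+1 → (n:ℝ) ∈ Set.Icc 0 (c/g) := by
    intro n hn
    refine ⟨Nat.cast_nonneg n, le_trans ?_ hMle⟩
    push_cast
    exact_mod_cast (by exact_mod_cast hn : (n:ℝ) ≤ (M:ℝ)+1)
  have hsub : ∑ n ∈ B, (Gn (n+1) - Gn n) ≤ ∑ n ∈ Finset.Icc 2 M, (Gn (n+1) - Gn n) := by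
    apply sum_le_sum_of_subset_of_nonneg
    · intro n hn
      rw [mem_Icc]
      exact ⟨(hBfact n hn).1, B.le_max' n hn⟩
    · intro n hn _
      rw [mem_Icc] at hn
      have h1 := hmem n (by omega)
      have h2 := hmem (n+1) (by omega)
      rw [sub_nonneg]
      exact hmono h1 (by exact_mod_cast h2) (by push_cast; linarith)
  have htel : ∑ n ∈ Finset.Icc 2 M, (Gn (n+1) - Gn n) = Gn (M+1) - Gn 2 := by
    rw [← Finset.Ico_add_one_right_eq_Icc, Finset.sum_Ico_eq_sum_range]
    rw [show M+1-2 = M-1 from by omega]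
    have h := Finset.sum_range_sub (fun i => Gn (2+i)) (M-1)
    calc ∑ k ∈ Finset.range (M-1), (Gn (2+k+1) - Gn (2+k))
        = Gn (2+(M-1)) - Gn (2+0) := h
      _ = Gn (M+1) - Gn 2 := by rw [show 2+(M-1) = M+1 from by omega]
  have hend : Gn (M+1) - Gn 2 ≤ F (c/g) - F 0 := by
    have h3cg : (3:ℝ) ≤ c/g := by
      rw [le_div_iff₀ hg]
      have := hV v₀ hv₀
      have : (1:ℝ) ≤ (v₀:ℝ) := by exact_mod_cast v₀.one_le
      nlinarith [hV v₀ hv₀]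
    have hm1 : F (((M+1:ℕ)):ℝ) ≤ F (c/g) :=
      hmono (hmem (M+1) le_rfl) ⟨hcg0, le_rfl⟩ (hmem (M+1) le_rfl).2
    have hm2 : F 0 ≤ F (((2:ℕ)):ℝ) :=
      hmono ⟨le_rfl, hcg0⟩ ⟨by norm_num, by push_cast; linarith⟩ (by norm_num)
    have e1 : Gn (M+1) = F (((M+1:ℕ)):ℝ) := rfl
    have e2 : Gn 2 = F (((2:ℕ)):ℝ) := rfl
    rw [e1, e2]
    exact sub_le_sub hm1 hm2
  have hF0 : F 0 = -(c^(K+2)) := by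
    simp only [hFdef, mul_zero, sub_zero, add_zero]
    rw [pow_succ]
    ring
  have hFcg : F (c/g) = 0 := by
    have hz : c - g*(c/g) = 0 := by field_simp; ring
    simp only [hFdef, hz, zero_pow (Nat.succ_ne_zero K), mul_zero, neg_zero]
  have final : D * (∑ v ∈ V, ((v:ℝ)+1)*(c - g*((v:ℝ)+2))^K) ≤ c^(K+2) := by
    calc D * _ ≤ ∑ v ∈ V, (F ((v:ℝ)+2) - F ((v:ℝ)+1)) := hsum1
    _ = ∑ n ∈ B, (Gn (n+1) - Gn n) := himg
    _ ≤ ∑ n ∈ Finset.Icc 2 M, (Gn (n+1) - Gn n) := hsub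
    _ = Gn (M+1) - Gn 2 := htel
    _ ≤ F (c/g) - F 0 := hend
    _ = c^(K+2) := by rw [hFcg, hF0]; ring
  rw [le_div_iff₀ hD, mul_comm]
  exact final

private lemma arith (a x p f k1 k2 : ℝ) (hp : p ≠ 0) (hf : f ≠ 0) (h1 : k1 ≠ 0) (h2 : k2 ≠ 0) :
    a / f * (x / (p * k1 * k2)) = (1/p * a) * x / (k2 * (k1 * f)) := by
  rw [div_mul_div_comm]
  rw [eq_comm, div_eq_div_iff (by positivity) (by positivity)]
  field_simp

private lemma key : ∀ (N : ℕ) (g : Fin N → ℝ), (∀ n, 0 < g n) → ∀ (H : ℝ)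
    (F : Finset (Fin N → ℕ+)), (∀ b ∈ F, ∑ n, g n * ((b n : ℝ) + 1) ≤ H) →
    ∑ b ∈ F, ∏ n, ((b n : ℝ) + 1)
      ≤ (∏ n, 1 / (g n)^2) * (H + ∑ n, g n) ^ (2*N) / (Nat.factorial (2*N)) := by
  intro N
  induction N with
  | zero =>
    intro g hg H F hF
    have hcard : F.card ≤ 1 := Finset.card_le_one.2 fun a _ b _ => Subsingleton.elim a b
    simp only [Finset.univ_eq_empty, Finset.prod_empty, Finset.sum_const, nsmul_eq_mul,
      mul_one, Nat.mul_zero, pow_zero, Nat.factorial_zero, Nat.cast_one, div_one]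
    exact_mod_cast hcard
  | succ N ih =>
    intro g hg H F hF
    rcases F.eq_empty_or_nonempty with rfl | ⟨b₀, hb₀⟩
    · simp only [Finset.sum_empty]
      apply div_nonneg _ (Nat.cast_nonneg _)
      apply mul_nonneg
      · exact Finset.prod_nonneg fun n _ => by positivity
      · exact (even_two_mul (N+1)).pow_nonneg _
    have hterm_nonneg : ∀ (b : Fin (N+1) → ℕ+) (n : Fin (N+1)), (0:ℝ) ≤ g n * ((b n : ℝ)+1) := by
      intro b n
      have : (0:ℝ) ≤ (b n : ℝ) := by positivity
      nlinarith [hg n]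
    have hH0 : 0 ≤ H := by
      have := hF b₀ hb₀
      have h0 : (0:ℝ) ≤ ∑ n, g n * ((b₀ n : ℝ)+1) :=
        Finset.sum_nonneg fun n _ => hterm_nonneg b₀ n
      linarith
    set s : ℝ := ∑ n, g n with hsdef
    have hs0 : 0 ≤ s := Finset.sum_nonneg fun n _ => (hg n).le
    set c : ℝ := H + s with hcdef
    have hc : 0 ≤ c := by linarith
    set C' : ℝ := ∏ i : Fin N, 1 / (g i.succ)^2 with hC'def
    have hC'0 : 0 ≤ C' := Finset.prod_nonneg fun n _ => by positivity
    -- group by first coordinate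
    set V : Finset ℕ+ := F.image (fun b => b 0) with hVdef
    have hgroup : ∑ v ∈ V, ∑ b ∈ F.filter (fun b => b 0 = v), (∏ n, ((b n : ℝ) + 1))
        = ∑ b ∈ F, ∏ n, ((b n : ℝ) + 1) :=
      Finset.sum_fiberwise_of_maps_to (fun b hb => Finset.mem_image_of_mem (fun b => b 0) hb) _
    rw [← hgroup]
    have hsucc : s = g 0 + ∑ i : Fin N, g i.succ := Fin.sum_univ_succ g
    -- each v in V satisfies the onedim constraint
    have hVc : ∀ v ∈ V, g 0 * ((v:ℝ) + 2) ≤ c := by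
      intro v hv
      rw [hVdef, mem_image] at hv
      obtain ⟨b, hb, hb0⟩ := hv
      have h1 := hF b hb
      rw [Fin.sum_univ_succ, hb0] at h1
      have h2 : (0:ℝ) ≤ ∑ i : Fin N, g i.succ * ((b i.succ : ℝ)+1) :=
        Finset.sum_nonneg fun i _ => hterm_nonneg b i.succ
      have h3 : (0:ℝ) ≤ ∑ i : Fin N, g i.succ :=
        Finset.sum_nonneg fun i _ => (hg i.succ).le
      have hg0 := hg 0
      rw [hcdef, hsucc]
      nlinarith
    -- fiber bound
    have hfiber : ∀ v ∈ V,
        ∑ b ∈ F.filter (fun b => b 0 = v), ∏ n, ((b n : ℝ) + 1)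
          ≤ (C' / (Nat.factorial (2*N))) * (((v:ℝ)+1) * (c - g 0 * ((v:ℝ)+2))^(2*N)) := by
      intro v hv
      have hrw : ∀ b ∈ F.filter (fun b => b 0 = v),
          ∏ n, ((b n : ℝ) + 1) = ((v:ℝ)+1) * ∏ i : Fin N, ((b i.succ : ℝ) + 1) := by
        intro b hb
        rw [mem_filter] at hb
        rw [Fin.prod_univ_succ, hb.2]
      rw [Finset.sum_congr rfl hrw, ← Finset.mul_sum]
      -- inner sum as sum over tails
      have hinj : ∀ x ∈ F.filter (fun b => b 0 = v), ∀ y ∈ F.filter (fun b => b 0 = v),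
          Fin.tail x = Fin.tail y → x = y := by
        intro x hx y hy h
        rw [mem_filter] at hx hy
        funext n
        refine Fin.cases ?_ ?_ n
        · rw [hx.2, hy.2]
        · intro i
          exact congrFun h i
      have himg : ∑ b ∈ F.filter (fun b => b 0 = v), ∏ i : Fin N, ((b i.succ : ℝ) + 1)
          = ∑ w ∈ (F.filter (fun b => b 0 = v)).image Fin.tail,
              ∏ i : Fin N, ((w i : ℝ) + 1) := by
        rw [Finset.sum_image hinj]
        rfl
      rw [himg]
      have hIH := ih (fun i => g i.succ) (fun i => hg i.succ)
        (H - g 0 * ((v:ℝ)+1)) ((F.filter (fun b => b 0 = v)).image Fin.tail) ?_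
      · have heq : H - g 0 * ((v:ℝ)+1) + ∑ i : Fin N, g i.succ = c - g 0 * ((v:ℝ)+2) := by
          rw [hcdef, hsucc]; ring
        rw [heq] at hIH
        calc ((v:ℝ)+1) * ∑ w ∈ (F.filter (fun b => b 0 = v)).image Fin.tail,
              ∏ i : Fin N, ((w i : ℝ) + 1)
            ≤ ((v:ℝ)+1) * (C' * (c - g 0 * ((v:ℝ)+2))^(2*N) / (Nat.factorial (2*N))) := by
              apply mul_le_mul_of_nonneg_left hIH
              positivity
          _ = (C' / (Nat.factorial (2*N))) * (((v:ℝ)+1) * (c - g 0 * ((v:ℝ)+2))^(2*N)) := by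
              ring
      · intro w hw
        rw [mem_image] at hw
        obtain ⟨b, hb, rfl⟩ := hw
        rw [mem_filter] at hb
        have h1 := hF b hb.1
        rw [Fin.sum_univ_succ, hb.2] at h1
        have : ∀ i : Fin N, Fin.tail b i = b i.succ := fun i => rfl
        simp only [this]
        linarith
    -- sum the fiber bounds and apply onedim
    have hft : (0:ℝ) < (Nat.factorial (2*N) : ℝ) := by
      exact_mod_cast Nat.factorial_pos _
    calc ∑ v ∈ V, ∑ b ∈ F.filter (fun b => b 0 = v), ∏ n, ((b n : ℝ) + 1)
        ≤ ∑ v ∈ V, (C' / (Nat.factorial (2*N))) * (((v:ℝ)+1) * (c - g 0 * ((v:ℝ)+2))^(2*N)) :=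
          Finset.sum_le_sum hfiber
      _ = (C' / (Nat.factorial (2*N))) *
            ∑ v ∈ V, ((v:ℝ)+1) * (c - g 0 * ((v:ℝ)+2))^(2*N) := by rw [Finset.mul_sum]
      _ ≤ (C' / (Nat.factorial (2*N))) *
            (c ^ (2*N+2) / ((g 0)^2 * (((2*N:ℕ):ℝ)+1) * (((2*N:ℕ):ℝ)+2))) := by
          apply mul_le_mul_of_nonneg_left (onedim (g 0) c (hg 0) hc (2*N) V hVc)
          positivity
      _ ≤ (∏ n, 1 / (g n)^2) * (H + ∑ n, g n) ^ (2*(N+1)) / (Nat.factorial (2*(N+1))) := by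
          rw [Fin.prod_univ_succ]
          have hfact : (Nat.factorial (2*N+2) : ℝ)
              = (((2*N:ℕ):ℝ)+2) * ((((2*N:ℕ):ℝ)+1) * (Nat.factorial (2*N) : ℝ)) := by
            rw [show 2*N+2 = (2*N+1)+1 from by ring, Nat.factorial_succ, Nat.factorial_succ]
            push_cast
            ring
          rw [show 2*(N+1) = 2*N+2 from by ring]
          rw [hfact, ← hC'def]
          have hg0 : (g 0)^2 ≠ 0 := pow_ne_zero _ (hg 0).ne'
          have h1 : ((2*N:ℕ):ℝ)+1 ≠ 0 := by positivity
          have h2 : ((2*N:ℕ):ℝ)+2 ≠ 0 := by positivity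
          have h3 : (Nat.factorial (2*N) : ℝ) ≠ 0 := hft.ne'
          exact le_of_eq (arith C' (c^(2*N+2)) ((g 0)^2) _ _ _ hg0 h3 h1 h2)

/-- Work bound of Theorem 1: for the quasi-optimal index set
`I(L) = {β : ∑ gₙ(βₙ+1) + ∑ log(βₙ+1) ≤ L}`,
`∑_{β ∈ I(L)} ∏ (βₙ+1) ≤ C₁ (L+|g|)^{2N}/(2N)!` with `C₁ = ∏ gₙ⁻²`. -/
theorem ct_work_bound (N : ℕ) (hN : 0 < N) (g : Fin N → ℝ) (hg : ∀ n, 0 < g n)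
    (L : ℝ) (hL : 0 < L) :
    ∑' β : {β : Fin N → ℕ+ //
        (∑ n, g n * ((β n : ℝ) + 1)) + (∑ n, Real.log ((β n : ℝ) + 1)) ≤ L},
        (∏ n, (((β : Fin N → ℕ+) n : ℝ) + 1))
      ≤ (∏ n, (1 / (g n) ^ 2)) * (L + ∑ n, g n) ^ (2 * N) /
          (Nat.factorial (2 * N)) := by
  set T := {β : Fin N → ℕ+ //
      (∑ n, g n * ((β n : ℝ) + 1)) + (∑ n, Real.log ((β n : ℝ) + 1)) ≤ L} with hTdef
  have hnn : ∀ β : T, 0 ≤ ∏ n, (((β : Fin N → ℕ+) n : ℝ) + 1) :=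
    fun β => Finset.prod_nonneg fun n _ => by positivity
  have hsum : ∀ u : Finset T, ∑ β ∈ u, ∏ n, (((β : Fin N → ℕ+) n : ℝ) + 1)
      ≤ (∏ n, (1 / (g n) ^ 2)) * (L + ∑ n, g n) ^ (2 * N) / (Nat.factorial (2 * N)) := by
    intro u
    have hinj : ∀ x ∈ u, ∀ y ∈ u,
        (x : Fin N → ℕ+) = (y : Fin N → ℕ+) → x = y := fun x _ y _ h => Subtype.ext h
    have himg := Finset.sum_image (s := u)
      (g := fun β : T => (β : Fin N → ℕ+))
      (f := fun b : Fin N → ℕ+ => ∏ n, ((b n : ℝ) + 1)) hinj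
    rw [← himg]
    exact key N g hg L _ (by
      intro b hb
      rw [Finset.mem_image] at hb
      obtain ⟨β, hβ, rfl⟩ := hb
      have hlog : 0 ≤ ∑ n, Real.log (((β : Fin N → ℕ+) n : ℝ) + 1) := by
        apply Finset.sum_nonneg
        intro n _
        apply Real.log_nonneg
        have : (0:ℝ) ≤ ((β : Fin N → ℕ+) n : ℝ) := by positivity
        linarith
      have := β.2
      linarith)
  exact Summable.tsum_le_of_sum_le (summable_of_sum_le hnn hsum) hsum
end

section
/- Let g = (g_1,...,g_N) with all g_n > 0, and for L > 0 define I(L) = {β ∈ ℕ_+^N : Σ_n g_n(β_n+1) + Σ_n log(β_n+1) ≤ L}. Then Σ_{β∉I(L)} Π_n e^{−g_n(β_n+1)} ≤ C_2 · e^{−L−|g|} · (L+1+|g|)^{2N−1}, where C_2 = Π_n (e^{2g_n}/g_n²). -/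
open Finset Real

lemma expdec {B B' : ℝ} (h0 : 0 ≤ B) (h : B ≤ B') :
    Real.exp (-B') * (B' + 1) ≤ Real.exp (-B) * (B + 1) := by
  have h1 : (B' - B) + 1 ≤ Real.exp (B' - B) := Real.add_one_le_exp _
  have h2 : B' + 1 ≤ (B + 1) * Real.exp (B' - B) := by nlinarith
  have h3 : Real.exp (-B') * Real.exp (B' - B) = Real.exp (-B) := by
    rw [← Real.exp_add]; ring_nf
  nlinarith [mul_le_mul_of_nonneg_left h2 (Real.exp_nonneg (-B')), Real.exp_pos (-B')]

lemma summable_exp_geom {g : ℝ} (hg : 0 < g) (c : ℝ) :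
    Summable (fun m : ℕ => Real.exp (-(g * (m + c)))) := by
  have hlt : Real.exp (-g) < 1 := Real.exp_lt_one_iff.2 (by linarith)
  have h : ∀ m : ℕ, Real.exp (-(g * (m + c))) = Real.exp (-(g * c)) * Real.exp (-g) ^ m := by
    intro m
    rw [← Real.exp_nat_mul, ← Real.exp_add]
    ring_nf
  exact Summable.congr ((summable_geometric_of_lt_one (Real.exp_nonneg _) hlt).mul_left _)
    (fun m => (h m).symm)

lemma tsum_exp_le {g : ℝ} (hg : 0 < g) (c : ℝ) :
    ∑' m : ℕ, Real.exp (-(g * (m + c))) ≤ Real.exp (-(g * c)) * (Real.exp g / g) := by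
  have hlt : Real.exp (-g) < 1 := Real.exp_lt_one_iff.2 (by linarith)
  have h : ∀ m : ℕ, Real.exp (-(g * (m + c))) = Real.exp (-(g * c)) * Real.exp (-g) ^ m := by
    intro m
    rw [← Real.exp_nat_mul, ← Real.exp_add]
    ring_nf
  have heq : ∑' m : ℕ, Real.exp (-(g * (m + c)))
      = Real.exp (-(g * c)) * (1 - Real.exp (-g))⁻¹ := by
    rw [tsum_congr h, tsum_mul_left, tsum_geometric_of_lt_one (Real.exp_nonneg _) hlt]
  rw [heq]
  have hpos : 0 < 1 - Real.exp (-g) := by linarith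
  have hkey : g * Real.exp (-g) ≤ 1 - Real.exp (-g) := by
    have h1 := Real.add_one_le_exp g
    have h2 : Real.exp (-g) * Real.exp g = 1 := by rw [← Real.exp_add]; simp
    nlinarith [Real.exp_pos (-g)]
  have hinv : (1 - Real.exp (-g))⁻¹ ≤ (g * Real.exp (-g))⁻¹ := by
    apply inv_anti₀ (by positivity) hkey
  have heq2 : (g * Real.exp (-g))⁻¹ = Real.exp g / g := by
    rw [Real.exp_neg]
    field_simp
  calc Real.exp (-(g * c)) * (1 - Real.exp (-g))⁻¹
      ≤ Real.exp (-(g * c)) * (g * Real.exp (-g))⁻¹ :=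
        mul_le_mul_of_nonneg_left hinv (Real.exp_nonneg _)
    _ = Real.exp (-(g * c)) * (Real.exp g / g) := by rw [heq2]

lemma aux_div (x y g : ℝ) (hg : g ≠ 0) : x * (y / g) = y / g ^ 2 * (g * x) := by
  field_simp

lemma tau_mono {g : ℝ} (hg : 0 < g) {a b : ℕ} (h : a ≤ b) :
    g * (a + 2) + Real.log (a + 2) ≤ g * (b + 2) + Real.log (b + 2) := by
  have hab : (a : ℝ) ≤ b := Nat.cast_le.2 h
  gcongr <;> linarith

lemma summable_ite_exp {g : ℝ} (hg : 0 < g) (P : ℕ → Prop) [DecidablePred P] :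
    Summable (fun m : ℕ => if P m then Real.exp (-(g * (m + 2))) else 0) := by
  apply Summable.of_nonneg_of_le (fun m => by positivity)
    (fun m => by split <;> [exact le_refl _; positivity])
    (summable_exp_geom hg 2)

lemma lemA {g : ℝ} (A : ℝ) (hg : 0 < g) :
    ∑' m : ℕ, (if A < g * (m + 2) + Real.log (m + 2) then Real.exp (-(g * (m + 2))) else 0)
      ≤ Real.exp g / g ^ 2 * (Real.exp (-(max A 0)) * (max A 0 + 1)) := by
  classical
  have hB0 : 0 ≤ max A 0 := le_max_right _ _
  have hlog2 : 0 < Real.log 2 := Real.log_pos (by norm_num)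
  have hgne : g ≠ 0 := ne_of_gt hg
  by_cases hA : A < g * ((0 : ℕ) + 2) + Real.log ((0 : ℕ) + 2)
  · -- easy case : bound by the full geometric sum
    have h1 : ∑' m : ℕ, (if A < g * (m + 2) + Real.log (m + 2)
          then Real.exp (-(g * (m + 2))) else 0)
        ≤ ∑' m : ℕ, Real.exp (-(g * (m + 2))) := by
      apply Summable.tsum_le_tsum _ (summable_ite_exp hg _) (summable_exp_geom hg 2)
      intro m
      split <;> [exact le_refl _; positivity]
    have h2 := tsum_exp_le hg (g := g) 2
    norm_num at hA
    have hBlt : max A 0 ≤ 2 * g + Real.log 2 := by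
      apply max_le (by linarith) (by positivity)
    have h3 : Real.exp (-(2 * g + Real.log 2)) * ((2 * g + Real.log 2) + 1)
        ≤ Real.exp (-(max A 0)) * (max A 0 + 1) := expdec hB0 hBlt
    have e1 : Real.exp (-(Real.log 2)) = 1/2 := by
      rw [Real.exp_neg, Real.exp_log (by norm_num : (0:ℝ) < 2)]; norm_num
    have hexp2 : Real.exp (-(2 * g + Real.log 2)) = Real.exp (-(2 * g)) / 2 := by
      rw [neg_add, Real.exp_add, e1]; ring
    have hD := Real.exp_pos (-(2 * g))
    have e5 : Real.exp (-(2*g)) * g ≤ Real.exp (-(2*g)) / 2 * ((2 * g + Real.log 2) + 1) := by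
      nlinarith
    have e6 : Real.exp (-(g * 2)) = Real.exp (-(2 * g)) := by ring_nf
    calc ∑' m : ℕ, (if A < g * (m + 2) + Real.log (m + 2) then Real.exp (-(g * (m + 2))) else 0)
        ≤ Real.exp (-(g * 2)) * (Real.exp g / g) := le_trans h1 h2
      _ = Real.exp g / g ^ 2 * (g * Real.exp (-(2 * g))) := by rw [e6, aux_div _ _ _ hgne]
      _ ≤ Real.exp g / g ^ 2 * (Real.exp (-(2 * g + Real.log 2)) * ((2 * g + Real.log 2) + 1)) := by
          rw [hexp2]
          exact mul_le_mul_of_nonneg_left (by linarith) (by positivity)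
      _ ≤ _ := mul_le_mul_of_nonneg_left h3 (by positivity)
  · -- hard case : A ≥ 2g + log 2
    push_neg at hA
    norm_num at hA
    have hA0 : 0 < A := by linarith
    have hBA : max A 0 = A := max_eq_left hA0.le
    set P : ℕ → Prop := fun m => g * (m + 2) + Real.log (m + 2) ≤ A with hP
    set n : ℕ := ⌈A / g⌉₊ with hn
    set K : ℕ := Nat.findGreatest P n with hK
    have hP0 : P 0 := by simp only [hP]; norm_num; linarith
    have hPK : P K := Nat.findGreatest_spec (Nat.zero_le n) hP0
    have hnotPK1 : ¬ P (K + 1) := by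
      by_cases hle : K + 1 ≤ n
      · exact Nat.findGreatest_is_greatest (Nat.lt_succ_self _) hle
      · intro hcon
        have hnK : n ≤ K := by omega
        simp only [hP] at hcon
        push_cast at hcon
        have hcast : (0:ℝ) ≤ (K:ℝ) := Nat.cast_nonneg K
        have hlognn : (0:ℝ) ≤ Real.log ((K:ℝ) + 1 + 2) :=
          Real.log_nonneg (by linarith)
        have hgK : g * ((K:ℝ) + 3) ≤ A := by nlinarith
        have h1 : A / g ≤ (n:ℝ) := Nat.le_ceil _
        have h2 : (n:ℝ) ≤ (K:ℝ) := Nat.cast_le.2 hnK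
        have h3 : A ≤ (n:ℝ) * g := by rwa [div_le_iff₀ hg] at h1
        nlinarith
    have htau : A < g * ((K:ℝ) + 3) + Real.log ((K:ℝ) + 3) := by
      simp only [hP] at hnotPK1
      push_neg at hnotPK1
      push_cast at hnotPK1
      have he : (K:ℝ) + 1 + 2 = (K:ℝ) + 3 := by ring
      rwa [he] at hnotPK1
    have hterm : ∀ m : ℕ, (if A < g * (m + 2) + Real.log (m + 2) then Real.exp (-(g * (m + 2))) else 0)
        ≤ (if K + 1 ≤ m then Real.exp (-(g * (m + 2))) else 0) := by
      intro m
      split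
      · rename_i hm
        rw [if_pos]
        by_contra hcon
        push_neg at hcon
        have hmK : m ≤ K := by omega
        have := le_trans (tau_mono hg hmK) hPK
        exact absurd (lt_of_lt_of_le hm this) (lt_irrefl A)
      · split <;> positivity
    have hsum1 : ∑' m : ℕ, (if A < g * (m + 2) + Real.log (m + 2) then Real.exp (-(g * (m + 2))) else 0)
        ≤ ∑' m : ℕ, (if K + 1 ≤ m then Real.exp (-(g * (m + 2))) else 0) :=
      Summable.tsum_le_tsum hterm (summable_ite_exp hg _) (summable_ite_exp hg _)
    have hsum2 : ∑' m : ℕ, (if K + 1 ≤ m then Real.exp (-(g * (m + 2))) else 0)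
        = ∑' m : ℕ, Real.exp (-(g * (m + ((K:ℝ) + 3)))) := by
      have hs := Summable.sum_add_tsum_nat_add (f := fun m : ℕ => if K + 1 ≤ m then Real.exp (-(g * (m + 2))) else 0)
        (K + 1) (summable_ite_exp hg _)
      have hz : ∑ i ∈ Finset.range (K + 1),
          (if K + 1 ≤ i then Real.exp (-(g * (i + 2))) else 0) = 0 := by
        apply Finset.sum_eq_zero
        intro i hi
        rw [if_neg]
        simp only [Finset.mem_range] at hi
        omega
      rw [hz, zero_add] at hs
      rw [← hs]
      apply tsum_congr
      intro m
      show (if K + 1 ≤ m + (K + 1) then Real.exp (-(g * ((m + (K+1) : ℕ) + 2))) else 0) = _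
      rw [if_pos (by omega)]
      congr 1
      push_cast
      ring
    have hsum3 := tsum_exp_le hg (g := g) ((K:ℝ) + 3)
    set C : ℝ := (K : ℝ) + 3 with hC
    have hC3 : (3:ℝ) ≤ C := by have hcast : (0:ℝ) ≤ (K:ℝ) := Nat.cast_nonneg K; simp only [hC]; linarith
    have hCpos : (0:ℝ) < C := by linarith
    have hPKr : g * ((K:ℝ) + 2) + Real.log ((K:ℝ) + 2) ≤ A := by
      simp only [hP] at hPK; push_cast at hPK; exact hPK
    have hgC : g * C ≤ A + g := by
      have hlogK : 0 ≤ Real.log ((K:ℝ) + 2) := Real.log_nonneg (by have hcast : (0:ℝ) ≤ (K:ℝ) := Nat.cast_nonneg K; linarith)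
      simp only [hC]
      nlinarith
    have hexpC : Real.exp (-(g * C)) = C * Real.exp (-(g * C + Real.log C)) := by
      rw [neg_add, Real.exp_add, Real.exp_neg (Real.log C), Real.exp_log hCpos]
      field_simp
    have h1 : Real.exp (-(g * C + Real.log C)) ≤ Real.exp (-A) :=
      Real.exp_le_exp.2 (by linarith [htau])
    have key : g * Real.exp (-(g * C)) ≤ Real.exp (-A) * (A + 1) := by
      by_cases hc : g * C ≤ A + 1
      · calc g * Real.exp (-(g * C)) = (g * C) * Real.exp (-(g * C + Real.log C)) := by
              rw [hexpC]; ring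
          _ ≤ (A + 1) * Real.exp (-A) :=
              mul_le_mul hc h1 (Real.exp_nonneg _) (by linarith)
          _ = Real.exp (-A) * (A + 1) := by ring
      · push_neg at hc
        have hg2 : g ≤ A / 2 := by nlinarith
        have hee : Real.exp (-(g * C)) ≤ Real.exp (-(A + 1)) := Real.exp_le_exp.2 (by linarith)
        have hsplit : Real.exp (-(A + 1)) = Real.exp (-A) * Real.exp (-1) := by
          rw [← Real.exp_add]; ring_nf
        have hle1 : Real.exp (-1 : ℝ) ≤ 1 := Real.exp_le_one_iff.2 (by norm_num)
        calc g * Real.exp (-(g * C)) ≤ (A / 2) * Real.exp (-(A + 1)) :=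
              mul_le_mul hg2 hee (Real.exp_nonneg _) (by linarith)
          _ = Real.exp (-A) * ((A/2) * Real.exp (-1)) := by rw [hsplit]; ring
          _ ≤ Real.exp (-A) * (A + 1) := by
              apply mul_le_mul_of_nonneg_left _ (Real.exp_nonneg _)
              nlinarith [Real.exp_pos (-1:ℝ)]
    calc ∑' m : ℕ, (if A < g * (m + 2) + Real.log (m + 2) then Real.exp (-(g * (m + 2))) else 0)
        ≤ ∑' m : ℕ, (if K + 1 ≤ m then Real.exp (-(g * (m + 2))) else 0) := hsum1
      _ = ∑' m : ℕ, Real.exp (-(g * (m + C))) := hsum2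
      _ ≤ Real.exp (-(g * C)) * (Real.exp g / g) := hsum3
      _ = Real.exp g / g ^ 2 * (g * Real.exp (-(g * C))) := aux_div _ _ _ hgne
      _ ≤ Real.exp g / g ^ 2 * (Real.exp (-A) * (A + 1)) :=
          mul_le_mul_of_nonneg_left key (by positivity)
      _ = _ := by rw [hBA]

lemma log_k2_nonneg (k : ℕ) : (0:ℝ) ≤ Real.log ((k:ℝ) + 2) :=
  Real.log_nonneg (by have h : (0:ℝ) ≤ (k:ℝ) := Nat.cast_nonneg k; linarith)

noncomputable def phiFn (m : ℕ) (A : ℝ) : ℝ := Real.exp (-(max A 0)) * (max A 0 + 1) ^ m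

lemma phiFn_nonneg (m : ℕ) (A : ℝ) : 0 ≤ phiFn m A := by
  unfold phiFn
  have : (0:ℝ) ≤ max A 0 := le_max_right _ _
  positivity

lemma phiFn_of_nonpos {A : ℝ} (m : ℕ) (h : A ≤ 0) : phiFn m A = 1 := by
  unfold phiFn
  rw [max_eq_right h]
  simp

lemma phiFn_le {m : ℕ} {x A : ℝ} (h : x ≤ A) : phiFn m x ≤ (max A 0 + 1) ^ m := by
  unfold phiFn
  have h1 : Real.exp (-(max x 0)) ≤ 1 :=
    Real.exp_le_one_iff.2 (by simp [le_max_right])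
  have h2 : (max x 0 + 1) ^ m ≤ (max A 0 + 1) ^ m := by
    apply pow_le_pow_left₀ (by positivity)
    have : max x 0 ≤ max A 0 := max_le_max h (le_refl 0)
    linarith
  have h3 : (0:ℝ) ≤ (max x 0 + 1) ^ m := by positivity
  nlinarith

lemma lemB_summable {g : ℝ} (hg : 0 < g) (m : ℕ) (A : ℝ) :
    Summable (fun k : ℕ =>
      Real.exp (-(g * (k + 2))) * phiFn m (A - (g * (k + 2) + Real.log (k + 2)))) := by
  apply Summable.of_nonneg_of_le
    (fun k => mul_nonneg (Real.exp_nonneg _) (phiFn_nonneg _ _))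
    (fun k => ?_) ((summable_exp_geom hg 2).mul_right ((max A 0 + 1) ^ m))
  have hlog : (0:ℝ) ≤ Real.log ((k:ℝ) + 2) := log_k2_nonneg k
  have h1 : A - (g * (k + 2) + Real.log (k + 2)) ≤ A := by nlinarith [Nat.cast_nonneg (α := ℝ) k]
  exact mul_le_mul_of_nonneg_left (phiFn_le h1) (Real.exp_nonneg _)

lemma lemB {g : ℝ} (hg : 0 < g) (m : ℕ) (A : ℝ) :
    ∑' k : ℕ, Real.exp (-(g * (k + 2))) * phiFn m (A - (g * (k + 2) + Real.log (k + 2)))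
      ≤ Real.exp g / g ^ 2 * phiFn (m + 2) A := by
  classical
  have hgne : g ≠ 0 := ne_of_gt hg
  by_cases hA : A < 0
  · -- all phi factors are 1
    have hcongr : ∀ k : ℕ,
        Real.exp (-(g * (k + 2))) * phiFn m (A - (g * (k + 2) + Real.log (k + 2)))
          = Real.exp (-(g * ((k:ℝ) + 2))) := by
      intro k
      have hlog : (0:ℝ) ≤ Real.log ((k:ℝ) + 2) := log_k2_nonneg k
      have : A - (g * (k + 2) + Real.log (k + 2)) ≤ 0 := by
        nlinarith [Nat.cast_nonneg (α := ℝ) k]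
      rw [phiFn_of_nonpos m this, mul_one]
    rw [tsum_congr hcongr]
    have h2 := tsum_exp_le hg (g := g) 2
    have hphi : phiFn (m + 2) A = 1 := phiFn_of_nonpos _ hA.le
    rw [hphi, mul_one]
    have hkey : g * Real.exp (-(g * 2)) ≤ 1 := by
      have h1 := Real.add_one_le_exp (g * 2)
      have hid : Real.exp (-(g * 2)) * Real.exp (g * 2) = 1 := by
        rw [← Real.exp_add]; simp
      nlinarith [Real.exp_pos (-(g * 2))]
    calc ∑' k : ℕ, Real.exp (-(g * ((k:ℝ) + 2))) ≤ Real.exp (-(g * 2)) * (Real.exp g / g) := h2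
      _ = Real.exp g / g ^ 2 * (g * Real.exp (-(g * 2))) := aux_div _ _ _ hgne
      _ ≤ Real.exp g / g ^ 2 * 1 := mul_le_mul_of_nonneg_left hkey (by positivity)
      _ = Real.exp g / g ^ 2 := mul_one _
  · push_neg at hA
    have hmaxA : max A 0 = A := max_eq_left hA
    set f1 : ℕ → ℝ := fun k =>
      if A < g * (k + 2) + Real.log (k + 2) then Real.exp (-(g * (k + 2))) else 0 with hf1
    set f2 : ℕ → ℝ := fun k =>
      if g * (k + 2) + Real.log (k + 2) ≤ A then ((k:ℝ) + 2) * (Real.exp (-A) * (A + 1) ^ m)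
      else 0 with hf2
    have hterm : ∀ k : ℕ,
        Real.exp (-(g * (k + 2))) * phiFn m (A - (g * (k + 2) + Real.log (k + 2)))
          ≤ f1 k + f2 k := by
      intro k
      have hlog : (0:ℝ) ≤ Real.log ((k:ℝ) + 2) := log_k2_nonneg k
      have hkc : (0:ℝ) ≤ (k:ℝ) := Nat.cast_nonneg k
      by_cases hk : g * ((k:ℝ) + 2) + Real.log ((k:ℝ) + 2) ≤ A
      · have hx : (0:ℝ) ≤ A - (g * (k + 2) + Real.log (k + 2)) := by linarith
        have hphi : phiFn m (A - (g * (k + 2) + Real.log (k + 2)))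
            = Real.exp (-(A - (g * (k + 2) + Real.log (k + 2))))
              * (A - (g * (k + 2) + Real.log (k + 2)) + 1) ^ m := by
          unfold phiFn
          rw [max_eq_left hx]
        have hexpand : Real.exp (-(g * ((k:ℝ) + 2)))
              * Real.exp (-(A - (g * (k + 2) + Real.log (k + 2))))
            = ((k:ℝ) + 2) * Real.exp (-A) := by
          rw [← Real.exp_add]
          have : -(g * ((k:ℝ) + 2)) + -(A - (g * (k + 2) + Real.log (k + 2)))
              = Real.log ((k:ℝ) + 2) + (-A) := by ring
          rw [this, Real.exp_add, Real.exp_log (by positivity)]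
        have hpow : (A - (g * (k + 2) + Real.log (k + 2)) + 1) ^ m ≤ (A + 1) ^ m := by
          apply pow_le_pow_left₀ (by linarith) (by nlinarith)
        have hf1z : f1 k = 0 := by simp only [hf1]; rw [if_neg (not_lt.2 hk)]
        have hf2v : f2 k = ((k:ℝ) + 2) * (Real.exp (-A) * (A + 1) ^ m) := by
          simp only [hf2]; rw [if_pos hk]
        rw [hphi, hf1z, hf2v, zero_add]
        calc Real.exp (-(g * ((k:ℝ) + 2)))
              * (Real.exp (-(A - (g * (k + 2) + Real.log (k + 2))))
                * (A - (g * (k + 2) + Real.log (k + 2)) + 1) ^ m)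
            ≤ Real.exp (-(g * ((k:ℝ) + 2)))
              * (Real.exp (-(A - (g * (k + 2) + Real.log (k + 2)))) * (A + 1) ^ m) := by
              apply mul_le_mul_of_nonneg_left _ (Real.exp_nonneg _)
              exact mul_le_mul_of_nonneg_left hpow (Real.exp_nonneg _)
          _ = ((k:ℝ) + 2) * Real.exp (-A) * (A + 1) ^ m := by
              rw [← mul_assoc, hexpand]
          _ = ((k:ℝ) + 2) * (Real.exp (-A) * (A + 1) ^ m) := by ring
      · push_neg at hk
        have hx : A - (g * (k + 2) + Real.log (k + 2)) ≤ 0 := by linarith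
        rw [phiFn_of_nonpos m hx, mul_one]
        have hf1v : f1 k = Real.exp (-(g * ((k:ℝ) + 2))) := by
          simp only [hf1]; rw [if_pos hk]
        have hf2z : (0:ℝ) ≤ f2 k := by
          simp only [hf2]; split
          · positivity
          · exact le_refl 0
        rw [hf1v]
        linarith
    -- now sum up
    have hsum_f1 : Summable f1 := summable_ite_exp hg _
    set D : ℕ := ⌊A / g⌋₊ with hD
    have hsupp : ∀ k : ℕ, k ∉ Finset.range D → f2 k = 0 := by
      intro k hk
      simp only [Finset.mem_range, not_lt] at hk
      simp only [hf2]
      rw [if_neg]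
      intro hcon
      have hlog : (0:ℝ) ≤ Real.log ((k:ℝ) + 2) := log_k2_nonneg k
      have h1 : g * ((k:ℝ) + 2) ≤ A := by linarith
      have h3 : k + 1 ≤ D := Nat.le_floor (by
        push_cast
        rw [le_div_iff₀ hg]
        nlinarith)
      omega
    have hsum_f2 : Summable f2 := summable_of_ne_finset_zero hsupp
    have hLHS := lemB_summable hg m A
    have hstep : ∑' k : ℕ, Real.exp (-(g * (k + 2))) * phiFn m (A - (g * (k + 2) + Real.log (k + 2)))
        ≤ (∑' k, f1 k) + (∑' k, f2 k) := by
      rw [← Summable.tsum_add hsum_f1 hsum_f2]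
      exact Summable.tsum_le_tsum hterm hLHS (hsum_f1.add hsum_f2)
    have hb1 : (∑' k, f1 k) ≤ Real.exp g / g ^ 2 * (Real.exp (-A) * (A + 1)) := by
      have h := lemA A hg
      rw [hmaxA] at h
      exact h
    have hb2 : (∑' k, f2 k) ≤ A / g * (A / g) * (Real.exp (-A) * (A + 1) ^ m) := by
      rw [tsum_eq_sum hsupp]
      have hAg : (0:ℝ) ≤ A / g := div_nonneg hA hg.le
      calc ∑ k ∈ Finset.range D, f2 k
          ≤ ∑ _k ∈ Finset.range D, A / g * (Real.exp (-A) * (A + 1) ^ m) := by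
            apply Finset.sum_le_sum
            intro k _
            simp only [hf2]
            split
            · rename_i hcond
              apply mul_le_mul_of_nonneg_right _ (by positivity)
              have hlog : (0:ℝ) ≤ Real.log ((k:ℝ) + 2) := log_k2_nonneg k
              have h1 : g * ((k:ℝ) + 2) ≤ A := by linarith
              rw [le_div_iff₀ hg]
              nlinarith
            · positivity
        _ = (D : ℝ) * (A / g * (Real.exp (-A) * (A + 1) ^ m)) := by
            rw [Finset.sum_const, Finset.card_range, nsmul_eq_mul]
        _ ≤ A / g * (A / g * (Real.exp (-A) * (A + 1) ^ m)) := by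
            apply mul_le_mul_of_nonneg_right (Nat.floor_le hAg) (by positivity)
        _ = A / g * (A / g) * (Real.exp (-A) * (A + 1) ^ m) := by ring
    have hphi2 : phiFn (m + 2) A = Real.exp (-A) * (A + 1) ^ (m + 2) := by
      unfold phiFn; rw [hmaxA]
    set Q : ℝ := (A + 1) ^ m with hQ
    have hQ1 : (1:ℝ) ≤ Q := by
      simp only [hQ]
      calc (1:ℝ) = 1 ^ m := (one_pow m).symm
        _ ≤ (A + 1) ^ m := pow_le_pow_left₀ (by norm_num) (by linarith) m
    have hE : (0:ℝ) ≤ Real.exp (-A) := Real.exp_nonneg _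
    have heg : (1:ℝ) ≤ Real.exp g := by
      have := Real.add_one_le_exp g; linarith
    have hpowadd : (A + 1) ^ (m + 2) = Q * (A + 1) ^ 2 := by
      simp only [hQ]; rw [pow_add]
    have inner : Real.exp g * (A + 1) + A ^ 2 * Q ≤ Real.exp g * (Q * (A + 1) ^ 2) := by
      nlinarith [mul_nonneg (sub_nonneg.2 heg) (mul_nonneg (by linarith : (0:ℝ) ≤ Q) (sq_nonneg A)),
        mul_nonneg (sub_nonneg.2 hQ1) (by linarith : (0:ℝ) ≤ Real.exp g),
        mul_nonneg (mul_nonneg (by linarith : (0:ℝ) ≤ Real.exp g) (by linarith : (0:ℝ) ≤ Q)) hA,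
        mul_nonneg (mul_nonneg (by linarith : (0:ℝ) ≤ Real.exp g) (sub_nonneg.2 hQ1)) hA]
    have key : Real.exp g * (Real.exp (-A) * (A + 1)) + A ^ 2 * (Real.exp (-A) * Q)
        ≤ Real.exp g * (Real.exp (-A) * (Q * (A + 1) ^ 2)) := by
      calc Real.exp g * (Real.exp (-A) * (A + 1)) + A ^ 2 * (Real.exp (-A) * Q)
          = Real.exp (-A) * (Real.exp g * (A + 1) + A ^ 2 * Q) := by ring
        _ ≤ Real.exp (-A) * (Real.exp g * (Q * (A + 1) ^ 2)) :=
            mul_le_mul_of_nonneg_left inner hE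
        _ = _ := by ring
    have hg2 : (0:ℝ) < g ^ 2 := by positivity
    calc ∑' k : ℕ, Real.exp (-(g * (k + 2))) * phiFn m (A - (g * (k + 2) + Real.log (k + 2)))
        ≤ (∑' k, f1 k) + (∑' k, f2 k) := hstep
      _ ≤ Real.exp g / g ^ 2 * (Real.exp (-A) * (A + 1))
            + A / g * (A / g) * (Real.exp (-A) * Q) := add_le_add hb1 hb2
      _ = (Real.exp g * (Real.exp (-A) * (A + 1)) + A ^ 2 * (Real.exp (-A) * Q)) / g ^ 2 := by
          field_simp
      _ ≤ (Real.exp g * (Real.exp (-A) * (Q * (A + 1) ^ 2))) / g ^ 2 := by gcongr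
      _ = Real.exp g / g ^ 2 * phiFn (m + 2) A := by
          rw [hphi2, hpowadd]
          ring




lemma pnat_coe_real (m : ℕ) : ((Equiv.pnatEquivNat.symm m : ℕ+) : ℝ) = (m : ℝ) + 1 := by
  have h : ((Equiv.pnatEquivNat.symm m : ℕ+) : ℕ) = m + 1 := rfl
  exact_mod_cast congrArg (Nat.cast : ℕ → ℝ) h

lemma liftA {g : ℝ} (hg : 0 < g) (A : ℝ) :
    ∑' k : ℕ+, (if A < g * ((k : ℝ) + 1) + Real.log ((k : ℝ) + 1)
        then ENNReal.ofReal (Real.exp (-g * ((k : ℝ) + 1))) else 0)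
      ≤ ENNReal.ofReal (Real.exp g / g ^ 2 * phiFn 1 A) := by
  classical
  rw [← Equiv.tsum_eq Equiv.pnatEquivNat.symm]
  have hre : ∀ m : ℕ,
      (if A < g * (((Equiv.pnatEquivNat.symm m : ℕ+) : ℝ) + 1)
            + Real.log (((Equiv.pnatEquivNat.symm m : ℕ+) : ℝ) + 1)
        then ENNReal.ofReal (Real.exp (-g * (((Equiv.pnatEquivNat.symm m : ℕ+) : ℝ) + 1))) else 0)
      = ENNReal.ofReal (if A < g * ((m : ℝ) + 2) + Real.log ((m : ℝ) + 2)
          then Real.exp (-(g * ((m : ℝ) + 2))) else 0) := by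
    intro m
    rw [pnat_coe_real m]
    have h2 : (m : ℝ) + 1 + 1 = (m : ℝ) + 2 := by ring
    rw [h2, neg_mul]
    split
    · rfl
    · simp
  rw [tsum_congr hre, ← ENNReal.ofReal_tsum_of_nonneg
      (fun m => by split <;> positivity) (summable_ite_exp hg _)]
  apply ENNReal.ofReal_le_ofReal
  have h := lemA A hg
  unfold phiFn
  rw [pow_one]
  exact h

lemma liftB {g : ℝ} (hg : 0 < g) (m : ℕ) (A : ℝ) :
    ∑' k : ℕ+, ENNReal.ofReal (Real.exp (-g * ((k : ℝ) + 1))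
        * phiFn m (A - (g * ((k : ℝ) + 1) + Real.log ((k : ℝ) + 1))))
      ≤ ENNReal.ofReal (Real.exp g / g ^ 2 * phiFn (m + 2) A) := by
  rw [← Equiv.tsum_eq Equiv.pnatEquivNat.symm]
  have hre : ∀ j : ℕ,
      ENNReal.ofReal (Real.exp (-g * (((Equiv.pnatEquivNat.symm j : ℕ+) : ℝ) + 1))
          * phiFn m (A - (g * (((Equiv.pnatEquivNat.symm j : ℕ+) : ℝ) + 1)
            + Real.log (((Equiv.pnatEquivNat.symm j : ℕ+) : ℝ) + 1))))
      = ENNReal.ofReal (Real.exp (-(g * ((j : ℝ) + 2)))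
          * phiFn m (A - (g * ((j : ℝ) + 2) + Real.log ((j : ℝ) + 2)))) := by
    intro j
    rw [pnat_coe_real j]
    have h2 : (j : ℝ) + 1 + 1 = (j : ℝ) + 2 := by ring
    rw [h2, neg_mul]
  rw [tsum_congr hre, ← ENNReal.ofReal_tsum_of_nonneg
      (fun j => mul_nonneg (Real.exp_nonneg _) (phiFn_nonneg _ _)) (lemB_summable hg m A)]
  exact ENNReal.ofReal_le_ofReal (lemB hg m A)

lemma mainENN : ∀ (N : ℕ) (g : Fin (N + 1) → ℝ), (∀ n, 0 < g n) → ∀ A : ℝ,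
    (∑' β : Fin (N + 1) → ℕ+,
        if A < ∑ n, (g n * ((β n : ℝ) + 1) + Real.log ((β n : ℝ) + 1))
        then ENNReal.ofReal (∏ n, Real.exp (-(g n) * ((β n : ℝ) + 1))) else 0)
      ≤ ENNReal.ofReal ((∏ n, Real.exp (g n) / (g n) ^ 2) * phiFn (2 * N + 1) A) := by
  intro N
  induction N with
  | zero =>
    intro g hg A
    rw [← Equiv.tsum_eq (Equiv.funUnique (Fin 1) ℕ+).symm]
    have hre : ∀ k : ℕ+,
        (if A < ∑ n : Fin 1, (g n * ((((Equiv.funUnique (Fin 1) ℕ+).symm k) n : ℝ) + 1)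
              + Real.log ((((Equiv.funUnique (Fin 1) ℕ+).symm k) n : ℝ) + 1))
          then ENNReal.ofReal (∏ n : Fin 1,
            Real.exp (-(g n) * ((((Equiv.funUnique (Fin 1) ℕ+).symm k) n : ℝ) + 1))) else 0)
        = (if A < g 0 * ((k : ℝ) + 1) + Real.log ((k : ℝ) + 1)
            then ENNReal.ofReal (Real.exp (-(g 0) * ((k : ℝ) + 1))) else 0) := by
      intro k
      simp [Fin.sum_univ_one, Fin.prod_univ_one]
    rw [tsum_congr hre]
    have h := liftA (hg 0) A
    calc ∑' k : ℕ+, (if A < g 0 * ((k : ℝ) + 1) + Real.log ((k : ℝ) + 1)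
            then ENNReal.ofReal (Real.exp (-(g 0) * ((k : ℝ) + 1))) else 0)
        ≤ ENNReal.ofReal (Real.exp (g 0) / (g 0) ^ 2 * phiFn 1 A) := h
      _ = ENNReal.ofReal ((∏ n : Fin 1, Real.exp (g n) / (g n) ^ 2) * phiFn (2 * 0 + 1) A) := by
          rw [Fin.prod_univ_one]
  | succ N IH =>
    intro g hg A
    set g' : Fin (N + 1) → ℝ := fun i => g i.succ with hg'
    have hg'pos : ∀ i, 0 < g' i := fun i => hg i.succ
    set C' : ℝ := ∏ i : Fin (N + 1), Real.exp (g' i) / (g' i) ^ 2 with hC'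
    have hC'nn : 0 ≤ C' := by
      apply Finset.prod_nonneg
      intro i _
      positivity
    rw [← Equiv.tsum_eq (Fin.consEquiv (fun _ : Fin (N + 2) => ℕ+)), ENNReal.tsum_prod']
    have hinner : ∀ k : ℕ+,
        (∑' β' : Fin (N + 1) → ℕ+,
          (if A < ∑ n, (g n * ((((Fin.consEquiv (fun _ : Fin (N + 2) => ℕ+)) (k, β')) n : ℝ) + 1)
                + Real.log ((((Fin.consEquiv (fun _ : Fin (N + 2) => ℕ+)) (k, β')) n : ℝ) + 1))
            then ENNReal.ofReal (∏ n, Real.exp (-(g n)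
              * ((((Fin.consEquiv (fun _ : Fin (N + 2) => ℕ+)) (k, β')) n : ℝ) + 1))) else 0))
        ≤ ENNReal.ofReal (Real.exp (-(g 0) * ((k : ℝ) + 1))
            * (C' * phiFn (2 * N + 1) (A - (g 0 * ((k : ℝ) + 1) + Real.log ((k : ℝ) + 1))))) := by
      intro k
      have hstep1 : ∀ β' : Fin (N + 1) → ℕ+,
          (if A < ∑ n, (g n * ((((Fin.consEquiv (fun _ : Fin (N + 2) => ℕ+)) (k, β')) n : ℝ) + 1)
                + Real.log ((((Fin.consEquiv (fun _ : Fin (N + 2) => ℕ+)) (k, β')) n : ℝ) + 1))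
            then ENNReal.ofReal (∏ n, Real.exp (-(g n)
              * ((((Fin.consEquiv (fun _ : Fin (N + 2) => ℕ+)) (k, β')) n : ℝ) + 1))) else 0)
          = ENNReal.ofReal (Real.exp (-(g 0) * ((k : ℝ) + 1)))
            * (if A - (g 0 * ((k : ℝ) + 1) + Real.log ((k : ℝ) + 1))
                  < ∑ i, (g' i * ((β' i : ℝ) + 1) + Real.log ((β' i : ℝ) + 1))
              then ENNReal.ofReal (∏ i, Real.exp (-(g' i) * ((β' i : ℝ) + 1))) else 0) := by
        intro β'
        have hc : ((Fin.consEquiv (fun _ : Fin (N + 2) => ℕ+)) (k, β')) = Fin.cons k β' := rfl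
        rw [hc, Fin.sum_univ_succ, Fin.prod_univ_succ]
        simp only [Fin.cons_zero, Fin.cons_succ]
        simp only [hg']
        rw [mul_ite, mul_zero, ← ENNReal.ofReal_mul (Real.exp_nonneg _)]
        have hcond : (A < (g 0 * ((k : ℝ) + 1) + Real.log ((k : ℝ) + 1))
              + ∑ i, (g i.succ * ((β' i : ℝ) + 1) + Real.log ((β' i : ℝ) + 1)))
            ↔ (A - (g 0 * ((k : ℝ) + 1) + Real.log ((k : ℝ) + 1))
              < ∑ i, (g i.succ * ((β' i : ℝ) + 1) + Real.log ((β' i : ℝ) + 1))) := by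
          constructor <;> intro h <;> linarith
        exact if_congr hcond rfl rfl
      rw [tsum_congr hstep1, ENNReal.tsum_mul_left]
      have hIH := IH g' hg'pos (A - (g 0 * ((k : ℝ) + 1) + Real.log ((k : ℝ) + 1)))
      calc ENNReal.ofReal (Real.exp (-(g 0) * ((k : ℝ) + 1)))
            * (∑' β' : Fin (N + 1) → ℕ+,
              if A - (g 0 * ((k : ℝ) + 1) + Real.log ((k : ℝ) + 1))
                  < ∑ i, (g' i * ((β' i : ℝ) + 1) + Real.log ((β' i : ℝ) + 1))
                then ENNReal.ofReal (∏ i, Real.exp (-(g' i) * ((β' i : ℝ) + 1))) else 0)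
          ≤ ENNReal.ofReal (Real.exp (-(g 0) * ((k : ℝ) + 1)))
            * ENNReal.ofReal (C' * phiFn (2 * N + 1)
                (A - (g 0 * ((k : ℝ) + 1) + Real.log ((k : ℝ) + 1)))) :=
            mul_le_mul_right hIH _
        _ = ENNReal.ofReal (Real.exp (-(g 0) * ((k : ℝ) + 1))
              * (C' * phiFn (2 * N + 1) (A - (g 0 * ((k : ℝ) + 1) + Real.log ((k : ℝ) + 1))))) :=
            (ENNReal.ofReal_mul (Real.exp_nonneg _)).symm
    calc (∑' k : ℕ+, ∑' β' : Fin (N + 1) → ℕ+, _)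
        ≤ ∑' k : ℕ+, ENNReal.ofReal (Real.exp (-(g 0) * ((k : ℝ) + 1))
            * (C' * phiFn (2 * N + 1) (A - (g 0 * ((k : ℝ) + 1) + Real.log ((k : ℝ) + 1))))) :=
          ENNReal.tsum_le_tsum hinner
      _ = ∑' k : ℕ+, ENNReal.ofReal C' * ENNReal.ofReal (Real.exp (-(g 0) * ((k : ℝ) + 1))
            * phiFn (2 * N + 1) (A - (g 0 * ((k : ℝ) + 1) + Real.log ((k : ℝ) + 1)))) := by
          apply tsum_congr
          intro k
          rw [← ENNReal.ofReal_mul hC'nn]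
          congr 1
          ring
      _ = ENNReal.ofReal C' * ∑' k : ℕ+, ENNReal.ofReal (Real.exp (-(g 0) * ((k : ℝ) + 1))
            * phiFn (2 * N + 1) (A - (g 0 * ((k : ℝ) + 1) + Real.log ((k : ℝ) + 1)))) :=
          ENNReal.tsum_mul_left
      _ ≤ ENNReal.ofReal C' * ENNReal.ofReal (Real.exp (g 0) / (g 0) ^ 2
            * phiFn (2 * N + 1 + 2) A) :=
          mul_le_mul_right (liftB (hg 0) (2 * N + 1) A) _
      _ = ENNReal.ofReal ((∏ n : Fin (N + 2), Real.exp (g n) / (g n) ^ 2)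
            * phiFn (2 * (N + 1) + 1) A) := by
          rw [← ENNReal.ofReal_mul hC'nn]
          congr 1
          have hprod : ∏ n : Fin (N + 2), Real.exp (g n) / (g n) ^ 2
              = (Real.exp (g 0) / (g 0) ^ 2) * C' := by
            rw [Fin.prod_univ_succ, hC']
          have hexp : 2 * N + 1 + 2 = 2 * (N + 1) + 1 := by ring
          rw [hprod, hexp]
          ring




lemma tsum_real_le {ι : Type*} (f : ι → ℝ) (hf : ∀ i, 0 ≤ f i) {c : ℝ} (hc : 0 ≤ c)
    (h : ∑' i, ENNReal.ofReal (f i) ≤ ENNReal.ofReal c) : ∑' i, f i ≤ c := by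
  by_cases hs : Summable f
  · rw [← ENNReal.ofReal_le_ofReal_iff hc, ENNReal.ofReal_tsum_of_nonneg hf hs]
    exact h
  · rw [tsum_eq_zero_of_not_summable hs]
    exact hc

/-- Error bound of Theorem 1: for the quasi-optimal index set
`I(L) = {β : ∑ gₙ(βₙ+1) + ∑ log(βₙ+1) ≤ L}`,
`∑_{β ∉ I(L)} ∏ e^{-gₙ(βₙ+1)} ≤ C₂ e^{-L-|g|} (L+1+|g|)^{2N-1}`
with `C₂ = ∏ e^{2gₙ}/gₙ²`. -/
theorem ct_error_bound (N : ℕ) (hN : 0 < N) (g : Fin N → ℝ) (hg : ∀ n, 0 < g n)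
    (L : ℝ) (hL : 0 < L) :
    ∑' β : {β : Fin N → ℕ+ //
        ¬ ((∑ n, g n * ((β n : ℝ) + 1)) + (∑ n, Real.log ((β n : ℝ) + 1)) ≤ L)},
        (∏ n, Real.exp (-(g n) * (((β : Fin N → ℕ+) n : ℝ) + 1)))
      ≤ (∏ n, Real.exp (2 * g n) / (g n) ^ 2) *
          Real.exp (-L - ∑ n, g n) * (L + 1 + ∑ n, g n) ^ (2 * N - 1) := by
  obtain ⟨N', rfl⟩ : ∃ N', N = N' + 1 := ⟨N - 1, by omega⟩
  have hprod2nn : (0:ℝ) ≤ ∏ n : Fin (N' + 1), Real.exp (2 * g n) / (g n) ^ 2 :=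
    Finset.prod_nonneg (fun i _ => by positivity)
  have hSg : (0:ℝ) ≤ ∑ n, g n := Finset.sum_nonneg (fun i _ => (hg i).le)
  have hRHSnn : (0:ℝ) ≤ (∏ n : Fin (N' + 1), Real.exp (2 * g n) / (g n) ^ 2) *
      Real.exp (-L - ∑ n, g n) * (L + 1 + ∑ n, g n) ^ (2 * (N' + 1) - 1) := by
    have h1 : (0:ℝ) ≤ L + 1 + ∑ n, g n := by linarith
    positivity
  apply tsum_real_le _ (fun β => Finset.prod_nonneg fun i _ => (Real.exp_nonneg _)) hRHSnn
  -- the key ENNReal bound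
  have hfinal_real : (∏ n : Fin (N' + 1), Real.exp (g n) / (g n) ^ 2) * phiFn (2 * N' + 1) L
      ≤ (∏ n : Fin (N' + 1), Real.exp (2 * g n) / (g n) ^ 2) *
          Real.exp (-L - ∑ n, g n) * (L + 1 + ∑ n, g n) ^ (2 * (N' + 1) - 1) := by
    have hmaxL : max L 0 = L := max_eq_left hL.le
    have hphi : phiFn (2 * N' + 1) L = Real.exp (-L) * (L + 1) ^ (2 * N' + 1) := by
      unfold phiFn; rw [hmaxL]
    have hexpidx : 2 * (N' + 1) - 1 = 2 * N' + 1 := by omega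
    have hprodnn : (0:ℝ) ≤ ∏ n : Fin (N' + 1), Real.exp (g n) / (g n) ^ 2 :=
      Finset.prod_nonneg (fun i _ => by positivity)
    have hsplit : ∏ n : Fin (N' + 1), Real.exp (2 * g n) / (g n) ^ 2
        = Real.exp (∑ n, g n) * ∏ n : Fin (N' + 1), Real.exp (g n) / (g n) ^ 2 := by
      rw [Real.exp_sum, ← Finset.prod_mul_distrib]
      apply Finset.prod_congr rfl
      intro i _
      rw [two_mul, Real.exp_add]
      ring
    have hexpL : Real.exp (∑ n, g n) * Real.exp (-L - ∑ n, g n) = Real.exp (-L) := by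
      rw [← Real.exp_add]; ring_nf
    have hpow : (L + 1) ^ (2 * N' + 1) ≤ (L + 1 + ∑ n, g n) ^ (2 * N' + 1) :=
      pow_le_pow_left₀ (by linarith) (by linarith) _
    rw [hexpidx, hphi, hsplit]
    calc (∏ n : Fin (N' + 1), Real.exp (g n) / (g n) ^ 2) * (Real.exp (-L) * (L + 1) ^ (2 * N' + 1))
        ≤ (∏ n : Fin (N' + 1), Real.exp (g n) / (g n) ^ 2) *
            (Real.exp (-L) * (L + 1 + ∑ n, g n) ^ (2 * N' + 1)) := by
          apply mul_le_mul_of_nonneg_left _ hprodnn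
          exact mul_le_mul_of_nonneg_left hpow (Real.exp_nonneg _)
      _ = Real.exp (∑ n, g n) * (∏ n : Fin (N' + 1), Real.exp (g n) / (g n) ^ 2) *
            Real.exp (-L - ∑ n, g n) * (L + 1 + ∑ n, g n) ^ (2 * N' + 1) := by
          rw [← hexpL]; ring
  calc ∑' β : {β : Fin (N' + 1) → ℕ+ //
        ¬ ((∑ n, g n * ((β n : ℝ) + 1)) + (∑ n, Real.log ((β n : ℝ) + 1)) ≤ L)},
        ENNReal.ofReal (∏ n, Real.exp (-(g n) * (((β : Fin (N' + 1) → ℕ+) n : ℝ) + 1)))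
      = ∑' β : Fin (N' + 1) → ℕ+, Set.indicator
          {β : Fin (N' + 1) → ℕ+ |
            ¬ ((∑ n, g n * ((β n : ℝ) + 1)) + (∑ n, Real.log ((β n : ℝ) + 1)) ≤ L)}
          (fun β => ENNReal.ofReal (∏ n, Real.exp (-(g n) * ((β n : ℝ) + 1)))) β :=
        by
          exact _root_.tsum_subtype
            {β : Fin (N' + 1) → ℕ+ |
              ¬ ((∑ n, g n * ((β n : ℝ) + 1)) + (∑ n, Real.log ((β n : ℝ) + 1)) ≤ L)}
            (fun β => ENNReal.ofReal (∏ n, Real.exp (-(g n) * ((β n : ℝ) + 1))))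
    _ = ∑' β : Fin (N' + 1) → ℕ+,
          if L < ∑ n, (g n * ((β n : ℝ) + 1) + Real.log ((β n : ℝ) + 1))
          then ENNReal.ofReal (∏ n, Real.exp (-(g n) * ((β n : ℝ) + 1))) else 0 := by
        apply tsum_congr
        intro β
        rw [Set.indicator_apply]
        apply if_congr _ rfl rfl
        rw [Set.mem_setOf_eq, not_le, Finset.sum_add_distrib]
    _ ≤ ENNReal.ofReal ((∏ n : Fin (N' + 1), Real.exp (g n) / (g n) ^ 2)
          * phiFn (2 * N' + 1) L) := mainENN N' g hg L
    _ ≤ ENNReal.ofReal ((∏ n : Fin (N' + 1), Real.exp (2 * g n) / (g n) ^ 2) *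
          Real.exp (-L - ∑ n, g n) * (L + 1 + ∑ n, g n) ^ (2 * (N' + 1) - 1)) :=
        ENNReal.ofReal_le_ofReal hfinal_real
end

section
/- (Theorem 1, combined) Assume ΔE_β ≤ C_e Π_n e^{−g_n(β_n+1)} and ΔW_β ≤ C_w Π_n(β_n+1), g_n > 0. Set C_1 = C_w Π_n g_n^{−2} and C_2 = C_e Π_n e^{2g_n}g_n^{−2}. Then for any W_max ≥ |g|^{2N}C_1/(2N)! and L̂ = (W_max(2N)!/C_1)^{1/(2N)} − |g|, the set I(L̂) satisfies: total work Σ_{β∈I(L̂)} ΔW_β ≤ W_max and the error bound Σ_{β∉I(L̂)} ΔE_β ≤ C_2 · e^{−(W_max(2N)!/C_1)^{1/(2N)}} · ((W_max(2N)!/C_1)^{1/(2N)} + 1)^{2N−1}. -/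
open Finset Real intervalIntegral

noncomputable def ctG (m : ℕ) (K : ℝ) : ℝ :=
  Real.exp (-(max K 0)) * ∑ j ∈ Finset.range (m+1), (max K 0)^j / (Nat.factorial j)

lemma ctG_aux_deriv (m : ℕ) (x : ℝ) :
    HasDerivAt (fun x : ℝ => Real.exp (-x) * ∑ j ∈ Finset.range (m+1), x^j / (Nat.factorial j))
      (-(Real.exp (-x) * x^m / (Nat.factorial m))) x := by
  have h1 : HasDerivAt (fun x : ℝ => Real.exp (-x)) (-Real.exp (-x)) x := by
    simpa [Function.comp_def] using (Real.hasDerivAt_exp (-x)).comp x ((hasDerivAt_id x).neg)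
  have h2 : HasDerivAt (fun x : ℝ => ∑ j ∈ Finset.range (m+1), x^j / (Nat.factorial j))
      (∑ j ∈ Finset.range m, x^j / (Nat.factorial j)) x := by
    have := HasDerivAt.sum (u := Finset.range (m+1))
      (A := fun j (x:ℝ) => x^j / (Nat.factorial j))
      (A' := fun j => (j : ℝ) * x^(j-1) / (Nat.factorial j))
      (fun j _ => (hasDerivAt_pow j x).div_const _)
    convert this using 1
    · rfl
    · rfl
    · ext y
      simp [Finset.sum_apply]
    rw [Finset.sum_range_succ']
    simp only [Nat.cast_zero, zero_mul, Nat.factorial_zero, Nat.cast_one, pow_zero, zero_div,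
      add_zero]
    apply Finset.sum_congr rfl
    intro j _
    have h3 : (Nat.factorial (j+1) : ℝ) = (j+1) * Nat.factorial j := by
      rw [Nat.factorial_succ]; push_cast; ring
    rw [h3]
    have hj : ((j:ℝ)+1) ≠ 0 := by positivity
    have hf : (Nat.factorial j : ℝ) ≠ 0 := by exact_mod_cast (Nat.factorial_pos j).ne'
    push_cast
    field_simp
  have := h1.mul h2
  convert this using 1
  · rfl
  · rfl
  · rfl
  rw [Finset.sum_range_succ]
  have hf : (Nat.factorial m : ℝ) ≠ 0 := by exact_mod_cast (Nat.factorial_pos m).ne'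
  field_simp
  ring

lemma ctG_antitone (m : ℕ) : Antitone (ctG m) := by
  have key : AntitoneOn (fun x : ℝ => Real.exp (-x) * ∑ j ∈ Finset.range (m+1), x^j / (Nat.factorial j)) (Set.Ici 0) := by
    apply antitoneOn_of_deriv_nonpos (convex_Ici 0)
    · apply Continuous.continuousOn; continuity
    · intro x hx
      exact (ctG_aux_deriv m x).differentiableAt.differentiableWithinAt
    · intro x hx
      rw [(ctG_aux_deriv m x).deriv]
      rw [interior_Ici] at hx
      have hx' : (0:ℝ) < x := hx
      have hf : (0:ℝ) < Nat.factorial m := by exact_mod_cast Nat.factorial_pos m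
      have : 0 ≤ Real.exp (-x) * x^m / Nat.factorial m := by positivity
      linarith
  intro K1 K2 h
  have h1 : (0:ℝ) ≤ max K1 0 := le_max_right _ _
  exact key h1 (Set.mem_Ici.mpr (le_max_right _ _)) (max_le_max h le_rfl)

lemma ctG_continuous (m : ℕ) : Continuous (ctG m) := by
  unfold ctG
  continuity

lemma ctG_of_nonpos (m : ℕ) (K : ℝ) (hK : K ≤ 0) : ctG m K = 1 := by
  unfold ctG
  rw [max_eq_right hK, Finset.sum_range_succ']
  simp

lemma ctG_of_nonneg (m : ℕ) (K : ℝ) (hK : 0 ≤ K) :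
    ctG m K = Real.exp (-K) * ∑ j ∈ Finset.range (m+1), K^j / (Nat.factorial j) := by
  unfold ctG; rw [max_eq_left hK]

lemma ctG_nonneg (m : ℕ) (K : ℝ) : 0 ≤ ctG m K := by
  unfold ctG
  have h : (0:ℝ) ≤ ∑ j ∈ Finset.range (m+1), (max K 0)^j / (Nat.factorial j) := by
    apply Finset.sum_nonneg
    intro j _
    have : (0:ℝ) ≤ max K 0 := le_max_right _ _
    positivity
  positivity

lemma ct_int_pow (K : ℝ) (j : ℕ) :
    ∫ s in (0:ℝ)..K, s * (K - s)^j = K^(j+2) / ((j+1)*(j+2)) := by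
  have h : ∀ s ∈ Set.uIcc (0:ℝ) K, HasDerivAt
      (fun s : ℝ => -(K * (K - s)^(j+1)) / (j+1) + (K - s)^(j+2) / (j+2))
      (s * (K - s)^j) s := by
    intro s _
    have h1 : HasDerivAt (fun s : ℝ => K - s) (-1) s := by
      simpa using (hasDerivAt_id s).const_sub K
    have h2 := (h1.pow (j+1)).const_mul K |>.neg.div_const ((j:ℝ)+1)
    have h3 := (h1.pow (j+2)).div_const ((j:ℝ)+2)
    convert (h2.add h3) using 1
    · rfl
    · rfl
    · rfl
    have hj1 : ((j:ℝ)+1) ≠ 0 := by positivity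
    have hj2 : ((j:ℝ)+2) ≠ 0 := by positivity
    rw [show j+1-1 = j by omega, show j+2-1 = j+1 by omega]
    push_cast
    field_simp
    ring
  rw [integral_eq_sub_of_hasDerivAt h (by apply Continuous.intervalIntegrable; continuity)]
  have hj1 : ((j:ℝ)+1) ≠ 0 := by positivity
  have hj2 : ((j:ℝ)+2) ≠ 0 := by positivity
  field_simp
  ring

lemma ct_int_sexp (x y : ℝ) :
    ∫ s in x..y, s * Real.exp (-s) = (x+1) * Real.exp (-x) - (y+1) * Real.exp (-y) := by
  have h : ∀ s ∈ Set.uIcc x y, HasDerivAt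
      (fun s : ℝ => -((s+1) * Real.exp (-s))) (s * Real.exp (-s)) s := by
    intro s _
    have h1 : HasDerivAt (fun s : ℝ => Real.exp (-s)) (-Real.exp (-s)) s := by
      simpa [Function.comp_def] using (Real.hasDerivAt_exp (-s)).comp s ((hasDerivAt_id s).neg)
    have h2 : HasDerivAt (fun s : ℝ => s + 1) 1 s := (hasDerivAt_id s).add_const 1
    convert (h2.mul h1).neg using 1
    · rfl
    · rfl
    · rfl
    ring
  rw [integral_eq_sub_of_hasDerivAt h (by apply Continuous.intervalIntegrable; continuity)]
  ring

lemma ct_integrand_cont (m : ℕ) (K : ℝ) :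
    Continuous (fun s : ℝ => s * Real.exp (-s) * ctG m (K - s)) := by
  have := ctG_continuous m
  continuity

lemma ct_int_0K (m : ℕ) (K : ℝ) (hK : 0 ≤ K) :
    ∫ s in (0:ℝ)..K, s * Real.exp (-s) * ctG m (K - s)
      = Real.exp (-K) * ∑ j ∈ Finset.range (m+1), K^(j+2) / (Nat.factorial (j+2)) := by
  have hcongr : ∫ s in (0:ℝ)..K, s * Real.exp (-s) * ctG m (K - s)
      = ∫ s in (0:ℝ)..K, ∑ j ∈ Finset.range (m+1),
          (Real.exp (-K) / (Nat.factorial j)) * (s * (K - s)^j) := by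
    apply intervalIntegral.integral_congr
    intro s hs
    rw [Set.uIcc_of_le hK] at hs
    obtain ⟨hs0, hsK⟩ := hs
    beta_reduce
    rw [ctG_of_nonneg m (K - s) (by linarith)]
    have he : Real.exp (-s) * Real.exp (-(K-s)) = Real.exp (-K) := by
      rw [← Real.exp_add]; congr 1; ring
    calc s * Real.exp (-s) * (Real.exp (-(K-s)) * ∑ j ∈ Finset.range (m+1), (K-s)^j / (Nat.factorial j))
        = (s * (Real.exp (-s) * Real.exp (-(K-s)))) * ∑ j ∈ Finset.range (m+1), (K-s)^j / (Nat.factorial j) := by ring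
      _ = (s * Real.exp (-K)) * ∑ j ∈ Finset.range (m+1), (K-s)^j / (Nat.factorial j) := by rw [he]
      _ = ∑ j ∈ Finset.range (m+1), (Real.exp (-K) / (Nat.factorial j)) * (s * (K - s)^j) := by
          rw [Finset.mul_sum]
          apply Finset.sum_congr rfl
          intro j _
          ring
  rw [hcongr, intervalIntegral.integral_finset_sum]
  · rw [Finset.mul_sum]
    apply Finset.sum_congr rfl
    intro j _
    rw [intervalIntegral.integral_const_mul, ct_int_pow]
    have h1 : (Nat.factorial (j+2) : ℝ) = (Nat.factorial j) * ((j:ℝ)+1) * ((j:ℝ)+2) := by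
      rw [Nat.factorial_succ, Nat.factorial_succ]
      push_cast
      ring
    rw [h1]
    rw [div_mul_div_comm, mul_div_assoc']
    congr 1
    ring
  · intro j _
    apply Continuous.intervalIntegrable
    continuity

lemma ctG_int (m : ℕ) (K R : ℝ) (hR : 0 ≤ R) :
    ∫ s in (0:ℝ)..R, s * Real.exp (-s) * ctG m (K - s) ≤ ctG (m+2) K := by
  by_cases hK : K ≤ 0
  · have hcongr : ∫ s in (0:ℝ)..R, s * Real.exp (-s) * ctG m (K - s)
        = ∫ s in (0:ℝ)..R, s * Real.exp (-s) := by
      apply intervalIntegral.integral_congr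
      intro s hs
      rw [Set.uIcc_of_le hR] at hs
      beta_reduce
      rw [ctG_of_nonpos m (K - s) (by linarith [hs.1])]
      ring
    rw [hcongr, ct_int_sexp, ctG_of_nonpos _ _ hK]
    have h1 : 0 ≤ (R+1) * Real.exp (-R) := by positivity
    simp only [neg_zero, Real.exp_zero]
    linarith
  · push_neg at hK
    have hKK : (0:ℝ) ≤ K := le_of_lt hK
    have hrhs : ctG (m+2) K = Real.exp (-K) *
        ((∑ j ∈ Finset.range (m+1), K^(j+2) / (Nat.factorial (j+2))) + (K + 1)) := by
      rw [ctG_of_nonneg _ _ hKK]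
      congr 1
      rw [Finset.sum_range_succ', Finset.sum_range_succ']
      have hco : ∀ x ∈ Finset.range (m + 1),
          K ^ (x + 1 + 1) / (Nat.factorial (x + 1 + 1) : ℝ) = K ^ (x + 2) / (Nat.factorial (x + 2) : ℝ) :=
        fun x _ => rfl
      rw [Finset.sum_congr rfl hco]
      norm_num [Nat.factorial]
      ring
    by_cases hRK : R ≤ K
    · have hsplit : ∫ s in (0:ℝ)..K, s * Real.exp (-s) * ctG m (K - s)
          = (∫ s in (0:ℝ)..R, s * Real.exp (-s) * ctG m (K - s))
            + ∫ s in R..K, s * Real.exp (-s) * ctG m (K - s) := by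
        rw [intervalIntegral.integral_add_adjacent_intervals] <;>
          exact (ct_integrand_cont m K).intervalIntegrable _ _
      have htail : 0 ≤ ∫ s in R..K, s * Real.exp (-s) * ctG m (K - s) := by
        apply intervalIntegral.integral_nonneg hRK
        intro s hs
        have hs0 : 0 ≤ s := le_trans hR hs.1
        have := ctG_nonneg m (K - s)
        positivity
      have h0K := ct_int_0K m K hKK
      have hsum : 0 ≤ ∑ j ∈ Finset.range (m+1), K^(j+2) / (Nat.factorial (j+2)) := by
        apply Finset.sum_nonneg; intro j _; positivity
      rw [hrhs]
      have hK1 : 0 ≤ Real.exp (-K) * (K+1) := by positivity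
      have expand : Real.exp (-K) * ((∑ j ∈ Finset.range (m+1), K^(j+2) / (Nat.factorial (j+2))) + (K + 1))
          = Real.exp (-K) * (∑ j ∈ Finset.range (m+1), K^(j+2) / (Nat.factorial (j+2))) + Real.exp (-K) * (K+1) := by ring
      linarith
    · push_neg at hRK
      have hsplit : ∫ s in (0:ℝ)..R, s * Real.exp (-s) * ctG m (K - s)
          = (∫ s in (0:ℝ)..K, s * Real.exp (-s) * ctG m (K - s))
            + ∫ s in K..R, s * Real.exp (-s) * ctG m (K - s) := by
        rw [intervalIntegral.integral_add_adjacent_intervals] <;>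
          exact (ct_integrand_cont m K).intervalIntegrable _ _
      have htail : ∫ s in K..R, s * Real.exp (-s) * ctG m (K - s)
          = ∫ s in K..R, s * Real.exp (-s) := by
        apply intervalIntegral.integral_congr
        intro s hs
        rw [Set.uIcc_of_le (le_of_lt hRK)] at hs
        beta_reduce
        rw [ctG_of_nonpos m (K - s) (by linarith [hs.1])]
        ring
      rw [hsplit, htail, ct_int_sexp, ct_int_0K m K hKK, hrhs]
      have h1 : 0 ≤ (R+1) * Real.exp (-R) := by positivity
      have expand : Real.exp (-K) * ((∑ j ∈ Finset.range (m+1), K^(j+2) / (Nat.factorial (j+2))) + (K + 1))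
          = Real.exp (-K) * (∑ j ∈ Finset.range (m+1), K^(j+2) / (Nat.factorial (j+2))) + (K+1) * Real.exp (-K) := by ring
      linarith

lemma ct_strip_sum (h : ℝ → ℝ) (hc : Continuous h) (p : ℕ → ℝ)
    (hp : ∀ k, p k ≤ p (k+1)) (x0 : ℝ)
    (T : Finset ℕ) (Rmax bound : ℝ)
    (hx0p : ∀ a ∈ T, x0 ≤ p a)
    (hpos : ∀ s, x0 ≤ s → 0 ≤ h s)
    (hTa : ∀ a ∈ T, p (a+1) ≤ Rmax)
    (hbd : ∀ R, x0 ≤ R → R ≤ Rmax → (∫ s in x0..R, h s) ≤ bound)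
    (hb0 : 0 ≤ bound) :
    ∑ a ∈ T, ∫ s in (p a)..(p (a+1)), h s ≤ bound := by
  rcases T.eq_empty_or_nonempty with rfl | hne
  · simpa using hb0
  · have hmono : Monotone p := monotone_nat_of_le_succ hp
    set a0 := T.min' hne with ha0
    set a1 := T.max' hne with ha1
    have ha01 : a0 ≤ a1 := T.min'_le _ (T.max'_mem hne)
    have hx0a : x0 ≤ p a0 := hx0p a0 (T.min'_mem hne)
    have hsub : T ⊆ Finset.Ico a0 (a1+1) := fun a ha =>
      Finset.mem_Ico.mpr ⟨T.min'_le a ha, Nat.lt_succ_of_le (T.le_max' a ha)⟩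
    have step1 : ∑ a ∈ T, ∫ s in (p a)..(p (a+1)), h s
        ≤ ∑ a ∈ Finset.Ico a0 (a1+1), ∫ s in (p a)..(p (a+1)), h s := by
      apply Finset.sum_le_sum_of_subset_of_nonneg hsub
      intro a haI _
      apply intervalIntegral.integral_nonneg (hp a)
      intro s hs
      exact hpos s (le_trans (le_trans hx0a (hmono (Finset.mem_Ico.mp haI).1)) hs.1)
    have step2 : ∑ a ∈ Finset.Ico a0 (a1+1), ∫ s in (p a)..(p (a+1)), h s
        = ∫ s in (p a0)..(p (a1+1)), h s := by
      rw [Finset.sum_Ico_eq_sum_range]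
      have := intervalIntegral.sum_integral_adjacent_intervals
        (a := fun k => p (a0 + k)) (n := a1 + 1 - a0) (f := h) (μ := MeasureTheory.volume)
        (fun k _ => hc.intervalIntegrable _ _)
      rw [show (∑ i ∈ Finset.range (a1 + 1 - a0), ∫ s in (p (a0 + i))..(p (a0 + i + 1)), h s)
          = ∑ i ∈ Finset.range (a1 + 1 - a0), ∫ s in (p (a0 + i))..(p (a0 + (i + 1))), h s from rfl,
        this]
      rw [show a0 + 0 = a0 from rfl, show a0 + (a1 + 1 - a0) = a1 + 1 by omega]
    have step3 : ∫ s in (p a0)..(p (a1+1)), h s ≤ ∫ s in x0..(p (a1+1)), h s := by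
      have hadd : (∫ s in x0..(p a0), h s) + ∫ s in (p a0)..(p (a1+1)), h s
          = ∫ s in x0..(p (a1+1)), h s :=
        intervalIntegral.integral_add_adjacent_intervals
          (hc.intervalIntegrable _ _) (hc.intervalIntegrable _ _)
      have hnn : 0 ≤ ∫ s in x0..(p a0), h s := by
        apply intervalIntegral.integral_nonneg hx0a
        intro s hs
        exact hpos s hs.1
      linarith
    have hfin : ∫ s in x0..(p (a1+1)), h s ≤ bound := by
      apply hbd
      · exact le_trans hx0a (hmono (by omega))
      · exact hTa a1 (T.max'_mem hne)
    linarith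

lemma ct_work_1d (Nn : ℕ) (g M : ℝ) (hg : 0 < g) (T : Finset ℕ)
    (hT : ∀ a ∈ T, g * ((a:ℝ) + 2) ≤ M) :
    ∑ a ∈ T, ((a:ℝ) + 1) * (M - g * ((a:ℝ) + 2))^(2*Nn)
      ≤ M^(2*Nn+2) / ((2*(Nn:ℝ)+1) * (2*(Nn:ℝ)+2) * g^2) := by
  have heven : Even (2*Nn) := even_two_mul Nn
  have heven2 : Even (2*Nn+2) := by
    rcases heven with ⟨r, hr⟩; exact ⟨r+1, by omega⟩
  set h : ℝ → ℝ := fun s => s * (M - s)^(2*Nn) with hh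
  have hc : Continuous h := by continuity
  set p : ℕ → ℝ := fun k => g * ((k:ℝ) + 1) with hps
  have hp : ∀ k, p k ≤ p (k+1) := by
    intro k
    simp only [hps]
    push_cast
    nlinarith
  set bound : ℝ := M^(2*Nn+2) / ((2*(Nn:ℝ)+1) * (2*(Nn:ℝ)+2)) with hbdef
  have hb0 : 0 ≤ bound := by
    have h1 : (0:ℝ) ≤ M^(2*Nn+2) := heven2.pow_nonneg M
    have h2 : (0:ℝ) < (2*(Nn:ℝ)+1) * (2*(Nn:ℝ)+2) := by positivity
    positivity
  have hintM : ∫ s in (0:ℝ)..M, h s = bound := by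
    rw [hh, hbdef, ct_int_pow M (2*Nn)]
    push_cast
    ring_nf
  have key : ∀ a ∈ T, ((a:ℝ) + 1) * (M - g * ((a:ℝ) + 2))^(2*Nn)
      ≤ (1/g^2) * ∫ s in (p a)..(p (a+1)), h s := by
    intro a ha
    have hTa := hT a ha
    have hmono : g * ((g * ((a:ℝ)+1)) * (M - g * ((a:ℝ) + 2))^(2*Nn))
        ≤ ∫ s in (p a)..(p (a+1)), h s := by
      have hconst : ∫ s in (p a)..(p (a+1)),
          ((g * ((a:ℝ)+1)) * (M - g * ((a:ℝ) + 2))^(2*Nn)) = g * ((g * ((a:ℝ)+1)) * (M - g * ((a:ℝ) + 2))^(2*Nn)) := by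
        rw [intervalIntegral.integral_const, smul_eq_mul]
        congr 1
        simp only [hps]
        push_cast
        ring
      have hmle : ∫ s in (p a)..(p (a+1)),
          ((g * ((a:ℝ)+1)) * (M - g * ((a:ℝ) + 2))^(2*Nn)) ≤ ∫ s in (p a)..(p (a+1)), h s := by
        apply intervalIntegral.integral_mono_on (hp a) intervalIntegrable_const
          (hc.intervalIntegrable _ _)
        intro s hs
        simp only [hps] at hs
        obtain ⟨hs1, hs2⟩ := hs
        have hb1 : (0:ℝ) ≤ M - g * ((a:ℝ) + 2) := by linarith
        have hb2 : M - g * ((a:ℝ) + 2) ≤ M - s := by push_cast at hs2 ⊢; linarith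
        have hb3 : (0:ℝ) ≤ g * ((a:ℝ)+1) := by positivity
        have hb4 : g * ((a:ℝ)+1) ≤ s := by push_cast at hs1 ⊢; linarith
        simp only [hh]
        apply mul_le_mul hb4 (pow_le_pow_left₀ hb1 hb2 _) (pow_nonneg hb1 _) (by linarith)
      linarith [hmle, hconst.ge]
    -- now divide
    have hg2 : (0:ℝ) < g^2 := by positivity
    have h2 := (div_le_div_iff_of_pos_right hg2).mpr hmono
    calc ((a:ℝ) + 1) * (M - g * ((a:ℝ) + 2))^(2*Nn)
        = (g * ((g * ((a:ℝ)+1)) * (M - g * ((a:ℝ) + 2))^(2*Nn))) / g^2 := by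
          field_simp
      _ ≤ (∫ s in (p a)..(p (a+1)), h s) / g^2 := h2
      _ = (1/g^2) * ∫ s in (p a)..(p (a+1)), h s := by ring
  calc ∑ a ∈ T, ((a:ℝ) + 1) * (M - g * ((a:ℝ) + 2))^(2*Nn)
      ≤ ∑ a ∈ T, (1/g^2) * ∫ s in (p a)..(p (a+1)), h s := Finset.sum_le_sum key
    _ = (1/g^2) * ∑ a ∈ T, ∫ s in (p a)..(p (a+1)), h s := by rw [Finset.mul_sum]
    _ ≤ (1/g^2) * bound := by
        apply mul_le_mul_of_nonneg_left _ (by positivity)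
        apply ct_strip_sum h hc p hp 0 T M bound
        · intro a _
          simp only [hps]
          positivity
        · intro s hs
          simp only [hh]
          exact mul_nonneg hs (heven.pow_nonneg _)
        · intro a ha
          have := hT a ha
          simp only [hps]
          push_cast
          linarith
        · intro R hR0 hRM
          have hsplit : (∫ s in (0:ℝ)..R, h s) + ∫ s in R..M, h s = ∫ s in (0:ℝ)..M, h s :=
            intervalIntegral.integral_add_adjacent_intervals
              (hc.intervalIntegrable _ _) (hc.intervalIntegrable _ _)
          have htail : 0 ≤ ∫ s in R..M, h s := by
            apply intervalIntegral.integral_nonneg hRM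
            intro s hs
            exact mul_nonneg (le_trans hR0 hs.1) (heven.pow_nonneg _)
          linarith [hintM]
        · exact hb0
    _ = M^(2*Nn+2) / ((2*(Nn:ℝ)+1) * (2*(Nn:ℝ)+2) * g^2) := by
        rw [hbdef, div_mul_div_comm, one_mul]
        congr 1
        ring

noncomputable def ctP (g : ℝ) (k : ℕ) : ℝ := g * ((k:ℝ)+2) + Real.log ((k:ℝ)+1)

lemma ctP_mono (g : ℝ) (hg : 0 < g) : ∀ k, ctP g k ≤ ctP g (k+1) := by
  intro k
  unfold ctP
  push_cast
  have h1 : Real.log ((k:ℝ)+1) ≤ Real.log ((k:ℝ)+1+1) := by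
    apply Real.log_le_log (by positivity)
    linarith
  linarith

lemma ctP_nonneg (g : ℝ) (hg : 0 < g) (k : ℕ) : 0 ≤ ctP g k := by
  unfold ctP
  have h1 : (0:ℝ) ≤ Real.log ((k:ℝ)+1) := Real.log_nonneg (by push_cast; linarith)
  positivity

lemma ctP_exp (g : ℝ) (k : ℕ) :
    Real.exp (-(ctP g k)) = Real.exp (-(g * ((k:ℝ)+2))) / ((k:ℝ)+1) := by
  unfold ctP
  rw [neg_add, Real.exp_add, Real.exp_neg (Real.log _), Real.exp_log (by positivity)]
  ring

-- the per-strip estimate, with an arbitrary nonneg "tail factor" c which is a lower bound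
-- for ctG-type factor on the strip
lemma ct_strip_term (g : ℝ) (hg : 0 < g) (a : ℕ) (φ : ℝ → ℝ) (hφc : Continuous φ)
    (hφ0 : ∀ s, 0 ≤ φ s) (hφa : ∀ s ∈ Set.Icc (ctP g a) (ctP g (a+1)), φ (ctP g a) ≤ φ s) :
    Real.exp (-(g*((a:ℝ)+1))) * φ (ctP g a)
      ≤ Real.exp (2*g)/g^2 * ∫ s in (ctP g a)..(ctP g (a+1)), s * Real.exp (-s) * φ s := by
  have hpa := ctP_nonneg g hg a
  have hmono := ctP_mono g hg a
  set c : ℝ := (g * ((a:ℝ)+2)) * Real.exp (-(ctP g (a+1))) * φ (ctP g a) with hc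
  have hint : g * c ≤ ∫ s in (ctP g a)..(ctP g (a+1)), s * Real.exp (-s) * φ s := by
    have hconst : ∫ s in (ctP g a)..(ctP g (a+1)), c = (ctP g (a+1) - ctP g a) * c := by
      rw [intervalIntegral.integral_const, smul_eq_mul]
    have hgap : g ≤ ctP g (a+1) - ctP g a := by
      unfold ctP
      push_cast
      have h1 : Real.log ((a:ℝ)+1) ≤ Real.log ((a:ℝ)+1+1) := by
        apply Real.log_le_log (by positivity)
        linarith
      linarith
    have hc0 : 0 ≤ c := by
      have := hφ0 (ctP g a)
      have : (0:ℝ) ≤ Real.exp (-(ctP g (a+1))) := (Real.exp_pos _).le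
      positivity
    have hmle : ∫ s in (ctP g a)..(ctP g (a+1)), c
        ≤ ∫ s in (ctP g a)..(ctP g (a+1)), s * Real.exp (-s) * φ s := by
      apply intervalIntegral.integral_mono_on hmono intervalIntegrable_const
        (by apply Continuous.intervalIntegrable; continuity)
      intro s hs
      obtain ⟨hs1, hs2⟩ := hs
      have hb1 : g * ((a:ℝ)+2) ≤ s := by
        have : g * ((a:ℝ)+2) ≤ ctP g a := by
          unfold ctP
          have := Real.log_nonneg (show (1:ℝ) ≤ (a:ℝ)+1 by push_cast; linarith)
          linarith
        linarith
      have hb2 : Real.exp (-s) ≤ 1 := by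
        rw [Real.exp_le_one_iff]
        have : (0:ℝ) ≤ g * ((a:ℝ)+2) := by positivity
        linarith
      have hb3 : Real.exp (-(ctP g (a+1))) ≤ Real.exp (-s) := by
        apply Real.exp_le_exp.mpr
        linarith
      have hb4 := hφa s ⟨hs1, hs2⟩
      have hb5 : (0:ℝ) ≤ g * ((a:ℝ)+2) := by positivity
      have hb6 : (0:ℝ) < Real.exp (-(ctP g (a+1))) := Real.exp_pos _
      have hb7 := hφ0 (ctP g a)
      have hb8 : (0:ℝ) ≤ s := le_trans hb5 hb1
      calc (g * ((a:ℝ)+2)) * Real.exp (-(ctP g (a+1))) * φ (ctP g a)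
          ≤ s * Real.exp (-s) * φ (ctP g a) := by
            apply mul_le_mul_of_nonneg_right _ hb7
            exact mul_le_mul hb1 hb3 hb6.le hb8
        _ ≤ s * Real.exp (-s) * φ s := by
            apply mul_le_mul_of_nonneg_left hb4
            positivity
    calc g * c ≤ (ctP g (a+1) - ctP g a) * c := mul_le_mul_of_nonneg_right hgap hc0
      _ = ∫ s in (ctP g a)..(ctP g (a+1)), c := hconst.symm
      _ ≤ _ := hmle
  -- now g * c = g^2 * exp(-(g*(a+3))) * φ(...) and conclude
  have ha2 : ((a:ℝ)+1+1) ≠ 0 := by positivity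
  have hgc : g * c = g^2 * Real.exp (-(g*((a:ℝ)+3))) * φ (ctP g a) := by
    rw [hc, ctP_exp]
    push_cast
    field_simp
    ring
  have hexp : Real.exp (2*g) * Real.exp (-(g*((a:ℝ)+3))) = Real.exp (-(g*((a:ℝ)+1))) := by
    rw [← Real.exp_add]
    congr 1
    ring
  have hkey : Real.exp (-(g*((a:ℝ)+1))) * φ (ctP g a) = (Real.exp (2*g)/g^2) * (g * c) := by
    rw [hgc, ← hexp]
    field_simp
  rw [hkey]
  apply mul_le_mul_of_nonneg_left hint (by positivity)

lemma ctG_one (K : ℝ) : ctG 1 K = Real.exp (-(max K 0)) * (max K 0 + 1) := by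
  unfold ctG
  rw [Finset.sum_range_succ, Finset.sum_range_succ, Finset.sum_range_zero]
  norm_num [Nat.factorial]
  ring

lemma ct_err_step (m : ℕ) (g K : ℝ) (hg : 0 < g) (T : Finset ℕ) :
    ∑ a ∈ T, Real.exp (-(g*((a:ℝ)+1))) * ctG m (K - ctP g a)
      ≤ Real.exp (2*g)/g^2 * ctG (m+2) K := by
  have key : ∀ a ∈ T, Real.exp (-(g*((a:ℝ)+1))) * ctG m (K - ctP g a)
      ≤ Real.exp (2*g)/g^2 * ∫ s in (ctP g a)..(ctP g (a+1)), s * Real.exp (-s) * ctG m (K - s) := by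
    intro a _
    exact ct_strip_term g hg a (fun s => ctG m (K - s))
      (by have := ctG_continuous m; continuity)
      (fun s => ctG_nonneg m _)
      (fun s hs => ctG_antitone m (by linarith [hs.1]))
  calc ∑ a ∈ T, Real.exp (-(g*((a:ℝ)+1))) * ctG m (K - ctP g a)
      ≤ ∑ a ∈ T, Real.exp (2*g)/g^2 * ∫ s in (ctP g a)..(ctP g (a+1)), s * Real.exp (-s) * ctG m (K - s) :=
        Finset.sum_le_sum key
    _ = Real.exp (2*g)/g^2 * ∑ a ∈ T, ∫ s in (ctP g a)..(ctP g (a+1)), s * Real.exp (-s) * ctG m (K - s) := by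
        rw [Finset.mul_sum]
    _ ≤ Real.exp (2*g)/g^2 * ctG (m+2) K := by
        apply mul_le_mul_of_nonneg_left _ (by positivity)
        apply ct_strip_sum _ (by have := ctG_continuous m; continuity) (ctP g) (ctP_mono g hg) 0 T
          (ctP g (T.sup id + 1)) (ctG (m+2) K)
        · exact fun a _ => ctP_nonneg g hg a
        · intro s hs
          have := ctG_nonneg m (K - s)
          positivity
        · intro a ha
          have h1 : a ≤ T.sup id := Finset.le_sup (f := id) ha
          have h2 : Monotone (ctP g) := monotone_nat_of_le_succ (ctP_mono g hg)
          exact h2 (by omega)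
        · exact fun R hR _ => ctG_int m K R hR
        · exact ctG_nonneg _ _

lemma ct_err_base (g K : ℝ) (hg : 0 < g) (T : Finset ℕ)
    (hT : ∀ a ∈ T, K ≤ ctP g a) :
    ∑ a ∈ T, Real.exp (-(g*((a:ℝ)+1))) ≤ Real.exp (2*g)/g^2 * ctG 1 K := by
  have key : ∀ a ∈ T, Real.exp (-(g*((a:ℝ)+1)))
      ≤ Real.exp (2*g)/g^2 * ∫ s in (ctP g a)..(ctP g (a+1)), s * Real.exp (-s) := by
    intro a _
    have := ct_strip_term g hg a (fun _ => 1) continuous_const (fun _ => zero_le_one)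
      (fun s _ => le_refl 1)
    simpa using this
  calc ∑ a ∈ T, Real.exp (-(g*((a:ℝ)+1)))
      ≤ ∑ a ∈ T, Real.exp (2*g)/g^2 * ∫ s in (ctP g a)..(ctP g (a+1)), s * Real.exp (-s) :=
        Finset.sum_le_sum key
    _ = Real.exp (2*g)/g^2 * ∑ a ∈ T, ∫ s in (ctP g a)..(ctP g (a+1)), s * Real.exp (-s) := by
        rw [Finset.mul_sum]
    _ ≤ Real.exp (2*g)/g^2 * ctG 1 K := by
        apply mul_le_mul_of_nonneg_left _ (by positivity)
        apply ct_strip_sum _ (by continuity) (ctP g) (ctP_mono g hg) (max K 0) T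
          (ctP g (T.sup id + 1)) (ctG 1 K)
        · intro a ha
          exact max_le (hT a ha) (ctP_nonneg g hg a)
        · intro s hs
          have h0 : (0:ℝ) ≤ s := le_trans (le_max_right _ _) hs
          positivity
        · intro a ha
          have h1 : a ≤ T.sup id := Finset.le_sup (f := id) ha
          have h2 : Monotone (ctP g) := monotone_nat_of_le_succ (ctP_mono g hg)
          exact h2 (by omega)
        · intro R hR _
          rw [ct_int_sexp, ctG_one]
          have h1 : 0 ≤ (R+1) * Real.exp (-R) := by
            have hR0 : (0:ℝ) ≤ R := le_trans (le_max_right _ _) hR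
            positivity
          nlinarith [h1]
        · exact ctG_nonneg 1 K

set_option maxHeartbeats 1000000 in
lemma ct_work (Nv : ℕ) : ∀ (g : Fin Nv → ℝ), (∀ n, 0 < g n) → ∀ (M : ℝ),
    ∀ (S : Finset (Fin Nv → ℕ+)),
    (∀ β ∈ S, ∑ n, g n * ((β n : ℝ) + 2) ≤ M) →
    ∑ β ∈ S, ∏ n, ((β n : ℝ) + 1)
      ≤ M^(2*Nv) / (Nat.factorial (2*Nv)) * ∏ n, (1 / (g n)^2) := by
  induction Nv with
  | zero =>
    intro g hg M S hS
    have hsub : ∀ β γ : Fin 0 → ℕ+, β = γ := fun β γ => funext (fun i => Fin.elim0 i)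
    have hcard : S.card ≤ 1 := Finset.card_le_one.mpr (fun a _ b _ => hsub a b)
    simp only [Nat.mul_zero, pow_zero, Nat.factorial_zero, Nat.cast_one, Finset.univ_eq_empty,
      Finset.prod_empty, Finset.sum_const, smul_eq_mul, mul_one]
    norm_num
    exact_mod_cast hcard
  | succ Nn ih =>
    intro g hg M S hS
    rcases S.eq_empty_or_nonempty with rfl | hSne
    · simp only [Finset.sum_empty]
      have h0 : 0 ≤ M^(2*(Nn+1)) := (even_two_mul (Nn+1)).pow_nonneg M
      have h1 : (0:ℝ) < Nat.factorial (2*(Nn+1)) := by exact_mod_cast Nat.factorial_pos _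
      have h2 : (0:ℝ) ≤ ∏ n, (1 / (g n)^2) := by
        apply Finset.prod_nonneg; intro n _; positivity
      exact mul_nonneg (div_nonneg h0 h1.le) h2
    · -- M is nonneg since S nonempty
      obtain ⟨β₀, hβ₀⟩ := hSne
      have hM : 0 ≤ M := by
        refine le_trans (Finset.sum_nonneg ?_) (hS β₀ hβ₀)
        intro n _
        have hgn := hg n
        have hb : (1:ℝ) ≤ (β₀ n : ℝ) := by exact_mod_cast (β₀ n).one_le
        nlinarith
      set g' : Fin Nn → ℝ := fun i => g i.succ with hg'
      have hg'pos : ∀ i, 0 < g' i := fun i => hg i.succ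
      set T := S.image (fun β => β 0) with hT
      have hfib := Finset.sum_fiberwise_of_maps_to (s := S) (t := T)
        (g := fun β : Fin (Nn+1) → ℕ+ => β 0)
        (fun β hβ => Finset.mem_image_of_mem (fun β => β 0) hβ)
        (fun β => ∏ n, ((β n : ℝ) + 1))
      rw [← hfib]
      -- inner rewriting
      have hinner : ∀ a ∈ T, ∑ β ∈ S.filter (fun β => β 0 = a), ∏ n, ((β n : ℝ)+1)
          = ((a:ℝ)+1) * ∑ γ ∈ (S.filter (fun β => β 0 = a)).image (Fin.tail),
              ∏ i, ((γ i : ℝ)+1) := by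
        intro a ha
        rw [Finset.sum_image, Finset.mul_sum]
        · apply Finset.sum_congr rfl
          intro β hβ
          have hβ0 : β 0 = a := by
            have := (Finset.mem_filter.mp hβ).2
            exact this
          rw [Fin.prod_univ_succ, hβ0]
          rfl
        · intro β1 h1 β2 h2 htail
          funext i
          induction i using Fin.cases with
          | zero =>
            rw [(Finset.mem_filter.mp h1).2, (Finset.mem_filter.mp h2).2]
          | succ j =>
            exact congrFun htail j
      -- nonnegativity of M - g 0 * (a+2) for a in T
      have hM' : ∀ a ∈ T, g 0 * ((a:ℝ)+2) ≤ M ∧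
          ∀ γ ∈ (S.filter (fun β => β 0 = a)).image (Fin.tail),
            ∑ i, g' i * ((γ i : ℝ) + 2) ≤ M - g 0 * ((a:ℝ)+2) := by
        intro a ha
        constructor
        · obtain ⟨β, hβS, hβ0⟩ := Finset.mem_image.mp ha
          have h1 := hS β hβS
          rw [Fin.sum_univ_succ, hβ0] at h1
          have h2 : (0:ℝ) ≤ ∑ i : Fin Nn, g i.succ * ((β i.succ : ℝ) + 2) := by
            apply Finset.sum_nonneg
            intro i _
            have : (1:ℝ) ≤ (β i.succ : ℝ) := by exact_mod_cast (β i.succ).one_le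
            have := hg i.succ
            positivity
          linarith
        · intro γ hγ
          obtain ⟨β, hβf, hβt⟩ := Finset.mem_image.mp hγ
          obtain ⟨hβS, hβ0⟩ := Finset.mem_filter.mp hβf
          have h1 := hS β hβS
          rw [Fin.sum_univ_succ, hβ0] at h1
          have heq : ∑ i : Fin Nn, g' i * ((γ i : ℝ) + 2)
              = ∑ i : Fin Nn, g i.succ * ((β i.succ : ℝ) + 2) := by
            apply Finset.sum_congr rfl
            intro i _
            rw [← hβt]
            rfl
          rw [heq]
          linarith
      have hstep : ∀ a ∈ T, ∑ β ∈ S.filter (fun β => β 0 = a), ∏ n, ((β n : ℝ)+1)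
          ≤ (((a:ℝ)+1) * (M - g 0 * ((a:ℝ)+2))^(2*Nn))
              * ((1:ℝ) / (Nat.factorial (2*Nn)) * ∏ i, (1 / (g' i)^2)) := by
        intro a ha
        rw [hinner a ha]
        have hih := ih g' hg'pos (M - g 0 * ((a:ℝ)+2)) _ ((hM' a ha).2)
        have ha1 : (0:ℝ) ≤ (a:ℝ)+1 := by positivity
        calc ((a:ℝ)+1) * ∑ γ ∈ (S.filter (fun β => β 0 = a)).image (Fin.tail),
              ∏ i, ((γ i : ℝ)+1)
            ≤ ((a:ℝ)+1) * ((M - g 0 * ((a:ℝ)+2))^(2*Nn) / (Nat.factorial (2*Nn))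
                * ∏ i, (1 / (g' i)^2)) := by
              apply mul_le_mul_of_nonneg_left hih ha1
          _ = (((a:ℝ)+1) * (M - g 0 * ((a:ℝ)+2))^(2*Nn))
              * ((1:ℝ) / (Nat.factorial (2*Nn)) * ∏ i, (1 / (g' i)^2)) := by ring
      -- now sum over T and use ct_work_1d
      set C : ℝ := (1:ℝ) / (Nat.factorial (2*Nn)) * ∏ i, (1 / (g' i)^2) with hC
      have hC0 : 0 ≤ C := by
        have h2 : (0:ℝ) ≤ ∏ i, (1 / (g' i)^2) := by
          apply Finset.prod_nonneg; intro i _; positivity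
        have h3 : (0:ℝ) < Nat.factorial (2*Nn) := by exact_mod_cast Nat.factorial_pos _
        positivity
      have hsumT : ∑ a ∈ T, (((a:ℝ)+1) * (M - g 0 * ((a:ℝ)+2))^(2*Nn))
          ≤ M^(2*Nn+2) / ((2*(Nn:ℝ)+1) * (2*(Nn:ℝ)+2) * (g 0)^2) := by
        have hinj : ∀ a ∈ T, ∀ b ∈ T, (a:ℕ+).val = (b:ℕ+).val → a = b :=
          fun a _ b _ h => PNat.coe_injective h
        have himg : ∑ a' ∈ T.image PNat.val, ((a':ℝ)+1) * (M - g 0 * ((a':ℝ)+2))^(2*Nn)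
            = ∑ a ∈ T, (((a:ℝ)+1) * (M - g 0 * ((a:ℝ)+2))^(2*Nn)) := by
          rw [Finset.sum_image hinj]
        have h1d := ct_work_1d Nn (g 0) M (hg 0) (T.image PNat.val) ?hT'
        · rw [himg] at h1d
          exact h1d
        · intro a' ha'
          obtain ⟨a, haT, rfl⟩ := Finset.mem_image.mp ha'
          exact (hM' a haT).1
      calc ∑ a ∈ T, ∑ β ∈ S.filter (fun β => β 0 = a), ∏ n, ((β n : ℝ)+1)
          ≤ ∑ a ∈ T, (((a:ℝ)+1) * (M - g 0 * ((a:ℝ)+2))^(2*Nn)) * C :=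
            Finset.sum_le_sum hstep
        _ = (∑ a ∈ T, (((a:ℝ)+1) * (M - g 0 * ((a:ℝ)+2))^(2*Nn))) * C := by
            rw [← Finset.sum_mul]
        _ ≤ (M^(2*Nn+2) / ((2*(Nn:ℝ)+1) * (2*(Nn:ℝ)+2) * (g 0)^2)) * C :=
            mul_le_mul_of_nonneg_right hsumT hC0
        _ = M^(2*(Nn+1)) / (Nat.factorial (2*(Nn+1))) * ∏ n, (1 / (g n)^2) := by
            rw [hC]
            rw [Fin.prod_univ_succ (f := fun n => 1 / (g n)^2)]
            have hexp : 2*(Nn+1) = 2*Nn+2 := by ring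
            have hfac : (Nat.factorial (2*Nn+2) : ℝ)
                = (Nat.factorial (2*Nn) : ℝ) * (2*(Nn:ℝ)+1) * (2*(Nn:ℝ)+2) := by
              have h2 : 2*Nn+2 = (2*Nn+1)+1 := by ring
              rw [h2, Nat.factorial_succ, Nat.factorial_succ]
              push_cast
              ring
            rw [hexp, hfac]
            have hf0 : (Nat.factorial (2*Nn) : ℝ) ≠ 0 := by
              exact_mod_cast (Nat.factorial_pos _).ne'
            have hg0 : (g 0) ≠ 0 := (hg 0).ne'
            have h1 : (2*(Nn:ℝ)+1) ≠ 0 := by positivity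
            have h2 : (2*(Nn:ℝ)+2) ≠ 0 := by positivity
            field_simp
            ring

set_option maxHeartbeats 1000000 in
lemma ct_err (Nv : ℕ) : ∀ (g : Fin (Nv+1) → ℝ), (∀ n, 0 < g n) → ∀ (K : ℝ),
    ∀ (S : Finset (Fin (Nv+1) → ℕ+)),
    (∀ β ∈ S, K ≤ ∑ n, (g n * ((β n : ℝ) + 2) + Real.log ((β n : ℝ) + 1))) →
    ∑ β ∈ S, ∏ n, Real.exp (-(g n * ((β n : ℝ) + 1)))
      ≤ (∏ n, Real.exp (2 * g n) / (g n)^2) * ctG (2*Nv+1) K := by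
  induction Nv with
  | zero =>
    intro g hg K S hS
    have hinj : ∀ β1 ∈ S, ∀ β2 ∈ S, ((β1 0 : ℕ+) : ℕ) = ((β2 0 : ℕ+) : ℕ) → β1 = β2 := by
      intro β1 _ β2 _ h
      funext i
      have hi : i = 0 := Fin.ext (by have := i.isLt; omega)
      rw [hi]
      exact PNat.coe_injective h
    have himg : ∑ a ∈ S.image (fun β => ((β 0 : ℕ+) : ℕ)), Real.exp (-(g 0 * ((a:ℝ)+1)))
        = ∑ β ∈ S, Real.exp (-(g 0 * ((β 0 : ℝ)+1))) := by
      rw [Finset.sum_image hinj]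
    have hbase := ct_err_base (g 0) K (hg 0) (S.image (fun β => ((β 0 : ℕ+) : ℕ))) ?hT
    · calc ∑ β ∈ S, ∏ n, Real.exp (-(g n * ((β n : ℝ) + 1)))
          = ∑ β ∈ S, Real.exp (-(g 0 * ((β 0 : ℝ)+1))) := by
            apply Finset.sum_congr rfl
            intro β _
            rw [Fin.prod_univ_one]
        _ ≤ Real.exp (2 * g 0)/(g 0)^2 * ctG 1 K := by rw [← himg]; exact hbase
        _ = (∏ n, Real.exp (2 * g n) / (g n)^2) * ctG (2*0+1) K := by
            rw [Fin.prod_univ_one]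
    case hT =>
      intro a ha
      obtain ⟨β, hβS, rfl⟩ := Finset.mem_image.mp ha
      have := hS β hβS
      rw [Fin.sum_univ_one] at this
      exact this
  | succ Nn ih =>
    intro g hg K S hS
    set g' : Fin (Nn+1) → ℝ := fun i => g i.succ with hg'
    have hg'pos : ∀ i, 0 < g' i := fun i => hg i.succ
    set T := S.image (fun β => β 0) with hT
    have hfib := Finset.sum_fiberwise_of_maps_to (s := S) (t := T)
      (g := fun β : Fin (Nn+2) → ℕ+ => β 0)
      (fun β hβ => Finset.mem_image_of_mem (fun β => β 0) hβ)
      (fun β => ∏ n, Real.exp (-(g n * ((β n : ℝ) + 1))))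
    rw [← hfib]
    set Ct : ℝ := ∏ i, Real.exp (2 * g' i) / (g' i)^2 with hCt
    have hCt0 : 0 ≤ Ct := by
      apply Finset.prod_nonneg
      intro i _
      positivity
    have hinner : ∀ a ∈ T,
        ∑ β ∈ S.filter (fun β => β 0 = a), ∏ n, Real.exp (-(g n * ((β n : ℝ) + 1)))
          ≤ Real.exp (-(g 0 * ((a:ℝ)+1))) * (Ct * ctG (2*Nn+1) (K - ctP (g 0) ((a:ℕ+):ℕ))) := by
      intro a ha
      have heq : ∑ β ∈ S.filter (fun β => β 0 = a), ∏ n, Real.exp (-(g n * ((β n : ℝ) + 1)))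
          = Real.exp (-(g 0 * ((a:ℝ)+1))) *
            ∑ γ ∈ (S.filter (fun β => β 0 = a)).image (Fin.tail),
              ∏ i, Real.exp (-(g' i * ((γ i : ℝ) + 1))) := by
        rw [Finset.sum_image, Finset.mul_sum]
        · apply Finset.sum_congr rfl
          intro β hβ
          have hβ0 : β 0 = a := (Finset.mem_filter.mp hβ).2
          rw [Fin.prod_univ_succ, hβ0]
          rfl
        · intro β1 h1 β2 h2 htail
          funext i
          induction i using Fin.cases with
          | zero => rw [(Finset.mem_filter.mp h1).2, (Finset.mem_filter.mp h2).2]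
          | succ j => exact congrFun htail j
      rw [heq]
      apply mul_le_mul_of_nonneg_left _ (Real.exp_pos _).le
      apply ih g' hg'pos _ _
      intro γ hγ
      obtain ⟨β, hβf, hβt⟩ := Finset.mem_image.mp hγ
      obtain ⟨hβS, hβ0⟩ := Finset.mem_filter.mp hβf
      have h1 := hS β hβS
      rw [Fin.sum_univ_succ, hβ0] at h1
      have heq2 : ∑ i : Fin (Nn+1), (g' i * ((γ i : ℝ) + 2) + Real.log ((γ i : ℝ) + 1))
          = ∑ i : Fin (Nn+1), (g i.succ * ((β i.succ : ℝ) + 2) + Real.log ((β i.succ : ℝ) + 1)) := by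
        apply Finset.sum_congr rfl
        intro i _
        rw [← hβt]
        rfl
      rw [heq2]
      unfold ctP
      linarith
    have hsumT : ∑ a ∈ T, Real.exp (-(g 0 * ((a:ℝ)+1))) * ctG (2*Nn+1) (K - ctP (g 0) ((a:ℕ+):ℕ))
        ≤ Real.exp (2 * g 0)/(g 0)^2 * ctG (2*Nn+3) K := by
      have hinj : ∀ a ∈ T, ∀ b ∈ T, (a:ℕ+).val = (b:ℕ+).val → a = b :=
        fun a _ b _ h => PNat.coe_injective h
      have himg : ∑ a' ∈ T.image PNat.val,
          Real.exp (-(g 0 * ((a':ℝ)+1))) * ctG (2*Nn+1) (K - ctP (g 0) a')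
          = ∑ a ∈ T, Real.exp (-(g 0 * ((a:ℝ)+1))) * ctG (2*Nn+1) (K - ctP (g 0) ((a:ℕ+):ℕ)) := by
        rw [Finset.sum_image hinj]
      rw [← himg]
      have := ct_err_step (2*Nn+1) (g 0) K (hg 0) (T.image PNat.val)
      convert this using 3
    calc ∑ a ∈ T, ∑ β ∈ S.filter (fun β => β 0 = a), ∏ n, Real.exp (-(g n * ((β n : ℝ) + 1)))
        ≤ ∑ a ∈ T, Real.exp (-(g 0 * ((a:ℝ)+1))) * (Ct * ctG (2*Nn+1) (K - ctP (g 0) ((a:ℕ+):ℕ))) :=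
          Finset.sum_le_sum hinner
      _ = Ct * ∑ a ∈ T, Real.exp (-(g 0 * ((a:ℝ)+1))) * ctG (2*Nn+1) (K - ctP (g 0) ((a:ℕ+):ℕ)) := by
          rw [Finset.mul_sum]
          apply Finset.sum_congr rfl
          intro a _
          ring
      _ ≤ Ct * (Real.exp (2 * g 0)/(g 0)^2 * ctG (2*Nn+3) K) :=
          mul_le_mul_of_nonneg_left hsumT hCt0
      _ = (∏ n, Real.exp (2 * g n) / (g n)^2) * ctG (2*(Nn+1)+1) K := by
          rw [Fin.prod_univ_succ (f := fun n => Real.exp (2 * g n) / (g n)^2)]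
          rw [show 2*(Nn+1)+1 = 2*Nn+3 by ring]
          ring

lemma ctG_final (m : ℕ) (M : ℝ) (hM : 0 ≤ M) :
    ctG m M ≤ Real.exp (-M) * (M + 1)^m := by
  unfold ctG
  rw [max_eq_left hM]
  apply mul_le_mul_of_nonneg_left _ (Real.exp_pos _).le
  have hbin : (M + 1)^m = ∑ j ∈ Finset.range (m+1), M^j * (1:ℝ)^(m-j) * (Nat.choose m j) :=
    add_pow M 1 m
  rw [hbin]
  apply Finset.sum_le_sum
  intro j hj
  have hjm : j ≤ m := Nat.lt_succ_iff.mp (Finset.mem_range.mp hj)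
  have h1 : (1:ℕ) ≤ Nat.choose m j * Nat.factorial j :=
    Nat.one_le_iff_ne_zero.mpr (Nat.mul_ne_zero (Nat.choose_pos hjm).ne' (Nat.factorial_pos j).ne')
  have h1' : (1:ℝ) ≤ (Nat.choose m j : ℝ) * (Nat.factorial j : ℝ) := by exact_mod_cast h1
  have hf : (0:ℝ) < (Nat.factorial j : ℝ) := by exact_mod_cast Nat.factorial_pos j
  have hM' : (0:ℝ) ≤ M^j := by positivity
  rw [one_pow, mul_one]
  rw [div_le_iff₀ hf]
  calc M^j = M^j * 1 := by ring
    _ ≤ M^j * ((Nat.choose m j : ℝ) * (Nat.factorial j : ℝ)) := by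
        apply mul_le_mul_of_nonneg_left h1' hM'
    _ = M^j * (Nat.choose m j : ℝ) * (Nat.factorial j : ℝ) := by ring

/-- Theorem 1 (combined work and error estimate for the stochastic CT). -/
theorem ct_theorem1 (N : ℕ) (hN : 0 < N) (g : Fin N → ℝ) (hg : ∀ n, 0 < g n)
    (ΔE ΔW : (Fin N → ℕ+) → ℝ)
    (hE0 : ∀ β, 0 ≤ ΔE β) (hW0 : ∀ β, 0 ≤ ΔW β)
    (Ce Cw : ℝ) (hCe : 0 < Ce) (hCw : 0 < Cw)
    (hE : ∀ β : Fin N → ℕ+, ΔE β ≤ Ce * ∏ n, Real.exp (-(g n) * ((β n : ℝ) + 1)))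
    (hW : ∀ β : Fin N → ℕ+, ΔW β ≤ Cw * ∏ n, ((β n : ℝ) + 1))
    (C₁ C₂ : ℝ)
    (hC₁ : C₁ = Cw * ∏ n, (1 / (g n) ^ 2))
    (hC₂ : C₂ = Ce * ∏ n, Real.exp (2 * g n) / (g n) ^ 2)
    (Wmax : ℝ)
    (hWmax : (∑ n, g n) ^ (2 * N) * C₁ / (Nat.factorial (2 * N)) ≤ Wmax)
    (L : ℝ)
    (hL : L = (Wmax * (Nat.factorial (2 * N)) / C₁) ^ ((1 : ℝ) / (2 * N))
            - ∑ n, g n) :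
    (∑' β : {β : Fin N → ℕ+ //
        (∑ n, g n * ((β n : ℝ) + 1)) + (∑ n, Real.log ((β n : ℝ) + 1)) ≤ L},
        ΔW (β : Fin N → ℕ+)) ≤ Wmax
    ∧
    (∑' β : {β : Fin N → ℕ+ //
        ¬ ((∑ n, g n * ((β n : ℝ) + 1)) + (∑ n, Real.log ((β n : ℝ) + 1)) ≤ L)},
        ΔE (β : Fin N → ℕ+))
      ≤ C₂ * Real.exp (-((Wmax * (Nat.factorial (2 * N)) / C₁) ^ ((1 : ℝ) / (2 * N)))) *
          ((Wmax * (Nat.factorial (2 * N)) / C₁) ^ ((1 : ℝ) / (2 * N)) + 1) ^ (2 * N - 1) := by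
  -- setup
  have hprodpos : (0:ℝ) < ∏ n, (1 / (g n) ^ 2) := by
    apply Finset.prod_pos
    intro n _
    have := hg n
    positivity
  have hC₁pos : 0 < C₁ := by rw [hC₁]; positivity
  have hgsum : 0 ≤ ∑ n, g n := Finset.sum_nonneg (fun n _ => (hg n).le)
  have hfacpos : (0:ℝ) < (Nat.factorial (2*N) : ℝ) := by exact_mod_cast Nat.factorial_pos _
  have hWmax0 : 0 ≤ Wmax := by
    refine le_trans ?_ hWmax
    positivity
  set X : ℝ := Wmax * (Nat.factorial (2 * N)) / C₁ with hX
  have hX0 : 0 ≤ X := by positivity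
  set M : ℝ := X ^ ((1 : ℝ) / (2 * N)) with hM
  have hM0 : 0 ≤ M := Real.rpow_nonneg hX0 _
  have h2N : ((2*N : ℕ) : ℝ) ≠ 0 := by
    have : 0 < 2*N := by omega
    exact_mod_cast this.ne'
  have hMpow : M ^ (2*N) = X := by
    rw [hM, ← Real.rpow_natCast (X ^ ((1 : ℝ) / (2 * N))) (2*N), ← Real.rpow_mul hX0]
    rw [show (1 : ℝ) / (2 * (N:ℝ)) * ((2*N : ℕ) : ℝ) = 1 by push_cast; field_simp]
    exact Real.rpow_one X
  have hLM : L + ∑ n, g n = M := by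
    rw [hL]
    push_cast
    ring
  have hlog : ∀ β : Fin N → ℕ+, (0:ℝ) ≤ ∑ n, Real.log ((β n : ℝ) + 1) := by
    intro β
    apply Finset.sum_nonneg
    intro n _
    apply Real.log_nonneg
    have : (1:ℝ) ≤ (β n : ℝ) := by exact_mod_cast (β n).one_le
    linarith
  have hshift : ∀ β : Fin N → ℕ+,
      ∑ n, g n * ((β n : ℝ) + 2) = (∑ n, g n * ((β n : ℝ) + 1)) + ∑ n, g n := by
    intro β
    rw [← Finset.sum_add_distrib]
    apply Finset.sum_congr rfl
    intro n _
    ring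
  constructor
  · -- work bound
    apply tsum_le_of_sum_le' hWmax0
    intro u
    have hval : ∑ x ∈ u, ΔW (x : Fin N → ℕ+) = ∑ β ∈ u.image Subtype.val, ΔW β := by
      rw [Finset.sum_image (fun x _ y _ h => Subtype.val_injective h)]
    rw [hval]
    set S := u.image Subtype.val with hS
    have hScond : ∀ β ∈ S, ∑ n, g n * ((β n : ℝ) + 2) ≤ M := by
      intro β hβ
      obtain ⟨x, _, rfl⟩ := Finset.mem_image.mp hβ
      have hx := x.property
      rw [hshift]
      have := hlog x.val
      linarith [hLM.ge]
    calc ∑ β ∈ S, ΔW β ≤ ∑ β ∈ S, Cw * ∏ n, ((β n : ℝ) + 1) :=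
          Finset.sum_le_sum (fun β _ => hW β)
      _ = Cw * ∑ β ∈ S, ∏ n, ((β n : ℝ) + 1) := by rw [Finset.mul_sum]
      _ ≤ Cw * (M^(2*N) / (Nat.factorial (2*N)) * ∏ n, (1 / (g n)^2)) := by
          apply mul_le_mul_of_nonneg_left (ct_work N g hg M S hScond) hCw.le
      _ = Wmax := by
          rw [hMpow, hX]
          rw [hC₁]
          have hCw' : Cw ≠ 0 := hCw.ne'
          have hfac' : (Nat.factorial (2*N) : ℝ) ≠ 0 := hfacpos.ne'
          have hQ : (∏ n, (g n)^2) ≠ 0 := by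
            apply Finset.prod_ne_zero_iff.mpr
            intro n _
            exact pow_ne_zero _ (hg n).ne'
          have hPP : (∏ n, (1 / (g n)^2)) = (∏ n, (g n)^2)⁻¹ := by
            rw [← Finset.prod_inv_distrib]
            exact Finset.prod_congr rfl (fun n _ => one_div _)
          rw [hPP]
          field_simp
  · -- error bound
    obtain ⟨Nv, rfl⟩ : ∃ Nv, N = Nv + 1 := ⟨N - 1, by omega⟩
    have hRHS0 : 0 ≤ C₂ * Real.exp (-M) * (M + 1) ^ (2 * (Nv+1) - 1) := by
      have hC₂0 : 0 ≤ C₂ := by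
        rw [hC₂]
        apply mul_nonneg hCe.le
        apply Finset.prod_nonneg
        intro n _
        positivity
      have h1 : (0:ℝ) ≤ M + 1 := by linarith
      positivity
    apply tsum_le_of_sum_le' hRHS0
    intro u
    have hval : ∑ x ∈ u, ΔE (x : Fin (Nv+1) → ℕ+) = ∑ β ∈ u.image Subtype.val, ΔE β := by
      rw [Finset.sum_image (fun x _ y _ h => Subtype.val_injective h)]
    rw [hval]
    set S := u.image Subtype.val with hS
    have hScond : ∀ β ∈ S, M ≤ ∑ n, (g n * ((β n : ℝ) + 2) + Real.log ((β n : ℝ) + 1)) := by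
      intro β hβ
      obtain ⟨x, _, rfl⟩ := Finset.mem_image.mp hβ
      have hx := x.property
      push_neg at hx
      rw [Finset.sum_add_distrib, hshift]
      have := hx
      linarith [hLM.le, this.le]
    calc ∑ β ∈ S, ΔE β ≤ ∑ β ∈ S, Ce * ∏ n, Real.exp (-(g n) * ((β n : ℝ) + 1)) :=
          Finset.sum_le_sum (fun β _ => hE β)
      _ = Ce * ∑ β ∈ S, ∏ n, Real.exp (-(g n * ((β n : ℝ) + 1))) := by
          rw [Finset.mul_sum]
          apply Finset.sum_congr rfl
          intro β _
          congr 1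
          apply Finset.prod_congr rfl
          intro n _
          rw [neg_mul]
      _ ≤ Ce * ((∏ n, Real.exp (2 * g n) / (g n)^2) * ctG (2*Nv+1) M) := by
          apply mul_le_mul_of_nonneg_left (ct_err Nv g hg M S hScond) hCe.le
      _ = C₂ * ctG (2*Nv+1) M := by rw [hC₂]; ring
      _ ≤ C₂ * (Real.exp (-M) * (M + 1)^(2*Nv+1)) := by
          apply mul_le_mul_of_nonneg_left (ctG_final (2*Nv+1) M hM0)
          rw [hC₂]
          apply mul_nonneg hCe.le
          apply Finset.prod_nonneg
          intro n _
          positivity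
      _ = C₂ * Real.exp (-M) * (M + 1) ^ (2 * (Nv+1) - 1) := by
          rw [show 2 * (Nv+1) - 1 = 2*Nv+1 by omega]
          ring
end
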